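/- arXiv:1912.04856 — 13 statements merged into one kernel-verified Lean document; each statement's English description precedes it below -/
import Mathlib

section
/- Let f : ℝ → ℝ be an even, Lebesgue integrable function, and suppose W : ℝ → ℝ is a weak solution of Y'' + (−1 + f)·Y = 0 such that W(t) > 0 for all t ≥ 0 and W(t) → 0 as t → ∞. Then the following are equivalent: (i) every weak solution of Y'' + (−1 + f)·Y = 0 that vanishes at two distinct points of ℝ is identically zero; (ii) W'(0) ≤ 0. -/
open Real MeasureTheory Filter

set_option maxHeartbeats 1000000

/-- `Y` is a weak solution of `Y'' + K·Y = 0` on `ℝ`: `Y` is `C¹` and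
`Y'(t) = Y'(0) − ∫₀ᵗ K(u)·Y(u) du` for all `t`. -/
def IsWeakSol (K Y : ℝ → ℝ) : Prop :=
  ContDiff ℝ 1 Y ∧ ∀ t : ℝ, deriv Y t = deriv Y 0 - ∫ u in (0:ℝ)..t, K u * Y u

open Set

lemma myparts_core (g Y : ℝ → ℝ) (hg : ∀ a b, IntervalIntegrable g volume a b)
    (hY : ContDiff ℝ 1 Y) {a b : ℝ} (hab : a ≤ b) :
    Y b * ∫ u in a..b, g u
      = ∫ u in a..b, (Y u * g u + deriv Y u * ∫ x in a..u, g x) := by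
  have hYc : Continuous Y := hY.continuous
  have hY' : Continuous (deriv Y) := hY.continuous_deriv le_rfl
  have hYd : ∀ x : ℝ, HasDerivAt Y (deriv Y x) x :=
    fun x => (hY.differentiable one_ne_zero x).hasDerivAt
  set dY := deriv Y with hdY
  set G : ℝ → ℝ := fun u => ∫ x in a..u, g x with hG
  have hGc : Continuous G := intervalIntegral.continuous_primitive hg a
  -- the kernel
  set F : ℝ → ℝ → ℝ := fun u s => if u ≤ s then g u * dY s else 0 with hF
  have hgi : IntegrableOn g (Ioc a b) := (hg a b).1
  have hdYi : IntegrableOn dY (Ioc a b) :=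
    (hY'.continuousOn.integrableOn_Icc).mono_set Ioc_subset_Icc_self
  have hFint : Integrable (Function.uncurry F)
      ((volume.restrict (Ioc a b)).prod (volume.restrict (Ioc a b))) := by
    have hbase : Integrable (fun p : ℝ × ℝ => g p.1 * dY p.2)
        ((volume.restrict (Ioc a b)).prod (volume.restrict (Ioc a b))) :=
      hgi.mul_prod hdYi
    have hmeas : MeasurableSet {p : ℝ × ℝ | p.1 ≤ p.2} :=
      measurableSet_le measurable_fst measurable_snd
    have : Function.uncurry F =
        Set.indicator {p : ℝ × ℝ | p.1 ≤ p.2} (fun p => g p.1 * dY p.2) := by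
      ext p
      simp only [Function.uncurry, hF, Set.indicator, Set.mem_setOf_eq]
    rw [this]
    exact hbase.indicator hmeas
  have hswap := MeasureTheory.integral_integral_swap hFint
  -- evaluate left side of swap
  have hL : (∫ u in Ioc a b, ∫ s in Ioc a b, F u s)
      = ∫ u in Ioc a b, g u * (Y b - Y u) := by
    apply setIntegral_congr_fun measurableSet_Ioc
    intro u hu
    dsimp only
    have hu1 : a < u := hu.1
    have hu2 : u ≤ b := hu.2
    have : (fun s => F u s) = fun s => (Ici u).indicator (fun s => g u * dY s) s := by
      ext s
      simp only [hF, Set.indicator, Set.mem_Ici]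
    rw [this, setIntegral_indicator measurableSet_Ici]
    have hset : Ioc a b ∩ Ici u = Icc u b := by
      ext x
      simp only [Set.mem_inter_iff, Set.mem_Ioc, Set.mem_Ici, Set.mem_Icc]
      constructor
      · rintro ⟨⟨_, h2⟩, h3⟩; exact ⟨h3, h2⟩
      · rintro ⟨h1, h2⟩; exact ⟨⟨lt_of_lt_of_le hu1 h1, h2⟩, h1⟩
    rw [hset, MeasureTheory.integral_Icc_eq_integral_Ioc,
      MeasureTheory.integral_const_mul]
    congr 1
    rw [← intervalIntegral.integral_of_le hu2]
    exact intervalIntegral.integral_deriv_eq_sub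
      (fun x _ => hY.differentiable one_ne_zero x) (hY'.intervalIntegrable _ _)
  -- evaluate right side of swap
  have hR : (∫ s in Ioc a b, ∫ u in Ioc a b, F u s)
      = ∫ s in Ioc a b, dY s * G s := by
    apply setIntegral_congr_fun measurableSet_Ioc
    intro s hs
    dsimp only
    have : (fun u => F u s) = fun u => (Iic s).indicator (fun u => g u * dY s) u := by
      ext u
      simp only [hF, Set.indicator, Set.mem_Iic]
    rw [this, setIntegral_indicator measurableSet_Iic]
    have hset : Ioc a b ∩ Iic s = Ioc a s := by
      ext x
      simp only [Set.mem_inter_iff, Set.mem_Ioc, Set.mem_Iic]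
      constructor
      · rintro ⟨⟨h1, _⟩, h3⟩; exact ⟨h1, h3⟩
      · rintro ⟨h1, h2⟩; exact ⟨⟨h1, le_trans h2 hs.2⟩, h2⟩
    rw [hset, MeasureTheory.integral_mul_const, ← intervalIntegral.integral_of_le hs.1.le]
    ring
  rw [hL, hR] at hswap
  -- now unfold everything to interval integrals
  have e1 : ∫ u in Ioc a b, g u * (Y b - Y u) = (∫ u in a..b, g u * (Y b - Y u)) := by
    rw [intervalIntegral.integral_of_le hab]
  have e2 : ∫ s in Ioc a b, dY s * G s = ∫ s in a..b, dY s * G s := by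
    rw [intervalIntegral.integral_of_le hab]
  rw [e1, e2] at hswap
  have hgYint : IntervalIntegrable (fun u => g u * Y u) volume a b :=
    (hg a b).mul_continuousOn hYc.continuousOn
  have hsplit : (∫ u in a..b, g u * (Y b - Y u))
      = Y b * (∫ u in a..b, g u) - ∫ u in a..b, g u * Y u := by
    have : (fun u => g u * (Y b - Y u)) = fun u => Y b * g u - g u * Y u := by
      ext u; ring
    rw [this, intervalIntegral.integral_sub ((hg a b).const_mul _) hgYint,
      intervalIntegral.integral_const_mul]
  rw [hsplit] at hswap
  have hsum : (∫ u in a..b, (Y u * g u + dY u * G u))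
      = (∫ u in a..b, g u * Y u) + ∫ u in a..b, dY u * G u := by
    rw [← intervalIntegral.integral_add (g := fun u => dY u * G u) hgYint
      ((hY'.mul hGc).intervalIntegrable _ _)]
    congr 1; ext u; ring
  rw [hsum]
  linarith [hswap]

lemma myparts (g Y : ℝ → ℝ) (hg : ∀ a b, IntervalIntegrable g volume a b)
    (hY : ContDiff ℝ 1 Y) (t : ℝ) :
    Y t * ∫ u in (0:ℝ)..t, g u
      = ∫ u in (0:ℝ)..t, (Y u * g u + deriv Y u * ∫ x in (0:ℝ)..u, g x) := by
  rcases le_or_gt 0 t with ht | ht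
  · exact myparts_core g Y hg hY ht
  · have hcore := myparts_core g Y hg hY ht.le
    have hYc : Continuous Y := hY.continuous
    have hY' : Continuous (deriv Y) := hY.continuous_deriv le_rfl
    have hGc : Continuous (fun u => ∫ x in (0:ℝ)..u, g x) :=
      intervalIntegral.continuous_primitive hg 0
    -- rewrite inner primitive based at t
    have hinner : ∀ u, (∫ x in t..u, g x)
        = (∫ x in t..(0:ℝ), g x) + ∫ x in (0:ℝ)..u, g x := by
      intro u
      rw [intervalIntegral.integral_add_adjacent_intervals (hg t 0) (hg 0 u)]
    have hcong : (∫ u in t..(0:ℝ), (Y u * g u + deriv Y u * ∫ x in t..u, g x))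
        = (∫ u in t..(0:ℝ), (Y u * g u + deriv Y u * ∫ x in (0:ℝ)..u, g x))
          + (∫ x in t..(0:ℝ), g x) * ∫ u in t..(0:ℝ), deriv Y u := by
      rw [← intervalIntegral.integral_const_mul,
        ← intervalIntegral.integral_add]
      · congr 1; ext u
        rw [hinner u]; ring
      · apply IntervalIntegrable.add
        · exact (hg t 0).continuousOn_mul hYc.continuousOn
        · exact (hY'.mul hGc).intervalIntegrable _ _
      · exact ((continuous_const.mul hY').intervalIntegrable _ _)
    have hFTC : (∫ u in t..(0:ℝ), deriv Y u) = Y 0 - Y t :=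
      intervalIntegral.integral_deriv_eq_sub
        (fun x _ => hY.differentiable one_ne_zero x) (hY'.intervalIntegrable _ _)
    rw [hcong, hFTC] at hcore
    have hsymm : (∫ u in (0:ℝ)..t, (Y u * g u + deriv Y u * ∫ x in (0:ℝ)..u, g x))
        = -(∫ u in t..(0:ℝ), (Y u * g u + deriv Y u * ∫ x in (0:ℝ)..u, g x)) := by
      rw [intervalIntegral.integral_symm]
    have hgsymm : (∫ u in (0:ℝ)..t, g u) = -(∫ u in t..(0:ℝ), g u) := by
      rw [intervalIntegral.integral_symm]
    rw [hsymm, hgsymm]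
    linarith [hcore]


lemma wronskian_const {K Y₁ Y₂ : ℝ → ℝ} (hK : ∀ a b, IntervalIntegrable K volume a b)
    (h1 : IsWeakSol K Y₁) (h2 : IsWeakSol K Y₂) (t : ℝ) :
    Y₁ t * deriv Y₂ t - deriv Y₁ t * Y₂ t
      = Y₁ 0 * deriv Y₂ 0 - deriv Y₁ 0 * Y₂ 0 := by
  obtain ⟨hY1, hE1⟩ := h1
  obtain ⟨hY2, hE2⟩ := h2
  have hY1c : Continuous Y₁ := hY1.continuous
  have hY2c : Continuous Y₂ := hY2.continuous
  set c₁ := deriv Y₁ 0 with hc₁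
  set c₂ := deriv Y₂ 0 with hc₂
  set g₁ : ℝ → ℝ := fun u => K u * Y₁ u with hg₁def
  set g₂ : ℝ → ℝ := fun u => K u * Y₂ u with hg₂def
  have hg₁ : ∀ a b, IntervalIntegrable g₁ volume a b :=
    fun a b => (hK a b).mul_continuousOn hY1c.continuousOn
  have hg₂ : ∀ a b, IntervalIntegrable g₂ volume a b :=
    fun a b => (hK a b).mul_continuousOn hY2c.continuousOn
  set G₁ : ℝ → ℝ := fun u => ∫ x in (0:ℝ)..u, g₁ x with hG₁def
  set G₂ : ℝ → ℝ := fun u => ∫ x in (0:ℝ)..u, g₂ x with hG₂def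
  have hG₁c : Continuous G₁ := intervalIntegral.continuous_primitive hg₁ 0
  have hG₂c : Continuous G₂ := intervalIntegral.continuous_primitive hg₂ 0
  have hE1' : ∀ u, deriv Y₁ u = c₁ - G₁ u := hE1
  have hE2' : ∀ u, deriv Y₂ u = c₂ - G₂ u := hE2
  -- I1
  have I1 : Y₁ t * G₂ t = (∫ u in (0:ℝ)..t, Y₁ u * g₂ u)
      + (c₁ * ∫ u in (0:ℝ)..t, G₂ u) - ∫ u in (0:ℝ)..t, G₁ u * G₂ u := by
    have h := myparts g₂ Y₁ hg₂ hY1 t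
    rw [show (∫ u in (0:ℝ)..t, (Y₁ u * g₂ u + deriv Y₁ u * G₂ u))
        = (∫ u in (0:ℝ)..t, (Y₁ u * g₂ u + (c₁ * G₂ u - G₁ u * G₂ u))) from
      intervalIntegral.integral_congr (fun u _ => by rw [hE1' u]; ring)] at h
    rw [intervalIntegral.integral_add (f := fun u => Y₁ u * g₂ u)
          (g := fun u => c₁ * G₂ u - G₁ u * G₂ u) ((hg₂ 0 t).continuousOn_mul hY1c.continuousOn)
        (((continuous_const.mul hG₂c).sub (hG₁c.mul hG₂c)).intervalIntegrable _ _),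
      intervalIntegral.integral_sub (f := fun u => c₁ * G₂ u) (g := fun u => G₁ u * G₂ u)
          ((continuous_const.mul hG₂c).intervalIntegrable _ _)
        ((hG₁c.mul hG₂c).intervalIntegrable _ _),
      intervalIntegral.integral_const_mul] at h
    linarith [h]
  have I2 : Y₂ t * G₁ t = (∫ u in (0:ℝ)..t, Y₂ u * g₁ u)
      + (c₂ * ∫ u in (0:ℝ)..t, G₁ u) - ∫ u in (0:ℝ)..t, G₂ u * G₁ u := by
    have h := myparts g₁ Y₂ hg₁ hY2 t
    rw [show (∫ u in (0:ℝ)..t, (Y₂ u * g₁ u + deriv Y₂ u * G₁ u))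
        = (∫ u in (0:ℝ)..t, (Y₂ u * g₁ u + (c₂ * G₁ u - G₂ u * G₁ u))) from
      intervalIntegral.integral_congr (fun u _ => by rw [hE2' u]; ring)] at h
    rw [intervalIntegral.integral_add (f := fun u => Y₂ u * g₁ u)
          (g := fun u => c₂ * G₁ u - G₂ u * G₁ u) ((hg₁ 0 t).continuousOn_mul hY2c.continuousOn)
        (((continuous_const.mul hG₁c).sub (hG₂c.mul hG₁c)).intervalIntegrable _ _),
      intervalIntegral.integral_sub (f := fun u => c₂ * G₁ u) (g := fun u => G₂ u * G₁ u)
          ((continuous_const.mul hG₁c).intervalIntegrable _ _)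
        ((hG₂c.mul hG₁c).intervalIntegrable _ _),
      intervalIntegral.integral_const_mul] at h
    linarith [h]
  have eq3 : (∫ u in (0:ℝ)..t, Y₁ u * g₂ u) = ∫ u in (0:ℝ)..t, Y₂ u * g₁ u :=
    intervalIntegral.integral_congr (fun u _ => by simp only [hg₁def, hg₂def]; ring)
  have eqG : (∫ u in (0:ℝ)..t, G₂ u * G₁ u) = ∫ u in (0:ℝ)..t, G₁ u * G₂ u :=
    intervalIntegral.integral_congr (fun u _ => by ring)
  have F1 : Y₁ t - Y₁ 0 = c₁ * t - ∫ u in (0:ℝ)..t, G₁ u := by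
    have hftc : (∫ u in (0:ℝ)..t, deriv Y₁ u) = Y₁ t - Y₁ 0 :=
      intervalIntegral.integral_deriv_eq_sub (fun x _ => hY1.differentiable one_ne_zero x)
        ((hY1.continuous_deriv le_rfl).intervalIntegrable _ _)
    rw [show (∫ u in (0:ℝ)..t, deriv Y₁ u) = ∫ u in (0:ℝ)..t, (c₁ - G₁ u) from
      intervalIntegral.integral_congr (fun u _ => hE1' u)] at hftc
    rw [intervalIntegral.integral_sub (intervalIntegrable_const)
      (hG₁c.intervalIntegrable _ _), intervalIntegral.integral_const] at hftc
    simp only [smul_eq_mul, sub_zero] at hftc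
    linarith [hftc]
  have F2 : Y₂ t - Y₂ 0 = c₂ * t - ∫ u in (0:ℝ)..t, G₂ u := by
    have hftc : (∫ u in (0:ℝ)..t, deriv Y₂ u) = Y₂ t - Y₂ 0 :=
      intervalIntegral.integral_deriv_eq_sub (fun x _ => hY2.differentiable one_ne_zero x)
        ((hY2.continuous_deriv le_rfl).intervalIntegrable _ _)
    rw [show (∫ u in (0:ℝ)..t, deriv Y₂ u) = ∫ u in (0:ℝ)..t, (c₂ - G₂ u) from
      intervalIntegral.integral_congr (fun u _ => hE2' u)] at hftc
    rw [intervalIntegral.integral_sub (intervalIntegrable_const)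
      (hG₂c.intervalIntegrable _ _), intervalIntegral.integral_const] at hftc
    simp only [smul_eq_mul, sub_zero] at hftc
    linarith [hftc]
  rw [hE1' t, hE2' t]
  linear_combination c₂ * F1 - c₁ * F2 - I1 + I2 - eq3 - eqG

lemma deriv_reflect {W : ℝ → ℝ} (hW : ContDiff ℝ 1 W) (t : ℝ) :
    deriv (fun u => W (-u)) t = -deriv W (-t) := by
  have h : HasDerivAt (fun u => W (-u)) (deriv W (-t) * (-1)) t :=
    ((hW.differentiable one_ne_zero (-t)).hasDerivAt).comp t (hasDerivAt_neg t)
  rw [h.deriv]; ring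

lemma reflect_sol {f W : ℝ → ℝ} (hf_even : ∀ t, f (-t) = f t)
    (hK : ∀ a b, IntervalIntegrable (fun t => -1 + f t) volume a b)
    (hW : IsWeakSol (fun t => -1 + f t) W) :
    IsWeakSol (fun t => -1 + f t) (fun t => W (-t)) := by
  have hWc : Continuous W := hW.1.continuous
  have hcd : ContDiff ℝ 1 (fun t => W (-t)) := hW.1.comp contDiff_neg
  refine ⟨hcd, fun t => ?_⟩
  have hint : ∀ t : ℝ, (∫ u in (0:ℝ)..t, (-1 + f u) * W (-u))
      = -∫ u in (0:ℝ)..(-t), (-1 + f u) * W u := by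
    intro t
    have h1 : (∫ u in (0:ℝ)..t, (-1 + f u) * W (-u))
        = ∫ u in (0:ℝ)..t, (fun v => (-1 + f (-v)) * W v) (-u) := by
      apply intervalIntegral.integral_congr
      intro u _
      simp only [neg_neg]
    rw [h1, intervalIntegral.integral_comp_neg (fun v => (-1 + f (-v)) * W v)]
    rw [show (∫ x in (-t)..(-0:ℝ), (-1 + f (-x)) * W x)
        = ∫ x in (-t)..(-0:ℝ), (-1 + f x) * W x from
      intervalIntegral.integral_congr (fun x _ => by rw [hf_even x])]
    rw [neg_zero, intervalIntegral.integral_symm]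
  rw [deriv_reflect hW.1 t, deriv_reflect hW.1 0, neg_zero, hint t, hW.2 (-t)]
  ring

lemma combo_sol {K Y₁ Y₂ : ℝ → ℝ} (hK : ∀ a b, IntervalIntegrable K volume a b)
    (h1 : IsWeakSol K Y₁) (h2 : IsWeakSol K Y₂) (κ : ℝ) :
    IsWeakSol K (fun u => Y₁ u - κ * Y₂ u) := by
  have hY1c : Continuous Y₁ := h1.1.continuous
  have hY2c : Continuous Y₂ := h2.1.continuous
  have hd : ∀ t, deriv (fun u => Y₁ u - κ * Y₂ u) t = deriv Y₁ t - κ * deriv Y₂ t := by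
    intro t
    have h : HasDerivAt (fun u => Y₁ u - κ * Y₂ u) (deriv Y₁ t - κ * deriv Y₂ t) t :=
      ((h1.1.differentiable one_ne_zero t).hasDerivAt).sub
        (((h2.1.differentiable one_ne_zero t).hasDerivAt).const_mul κ)
    exact h.deriv
  refine ⟨(h1.1).sub (contDiff_const.mul h2.1), fun t => ?_⟩
  rw [hd t, hd 0, h1.2 t, h2.2 t]
  have : (∫ u in (0:ℝ)..t, K u * (Y₁ u - κ * Y₂ u))
      = (∫ u in (0:ℝ)..t, K u * Y₁ u) - κ * ∫ u in (0:ℝ)..t, K u * Y₂ u := by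
    rw [show (fun u => K u * (Y₁ u - κ * Y₂ u))
        = fun u => K u * Y₁ u - κ * (K u * Y₂ u) from funext fun u => by ring]
    rw [intervalIntegral.integral_sub ((hK 0 t).mul_continuousOn hY1c.continuousOn)
      (((hK 0 t).mul_continuousOn hY2c.continuousOn).const_mul κ),
      intervalIntegral.integral_const_mul]
  rw [this]
  ring

theorem stmt0 (f W : ℝ → ℝ)
    (hf_even : ∀ t, f (-t) = f t)
    (hf_int : Integrable f)
    (hW : IsWeakSol (fun t => -1 + f t) W)
    (hWpos : ∀ t, 0 ≤ t → 0 < W t)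
    (hWlim : Tendsto W atTop (nhds 0)) :
    (∀ Y, IsWeakSol (fun t => -1 + f t) Y →
        (∃ a b : ℝ, a ≠ b ∧ Y a = 0 ∧ Y b = 0) → ∀ t, Y t = 0)
      ↔ deriv W 0 ≤ 0 := by
  have hK : ∀ a b, IntervalIntegrable (fun t => -1 + f t) volume a b :=
    fun a b => intervalIntegrable_const.add hf_int.intervalIntegrable
  have hWc : Continuous W := hW.1.continuous
  have hWd : ∀ x, HasDerivAt W (deriv W x) x :=
    fun x => (hW.1.differentiable one_ne_zero x).hasDerivAt
  have hV : IsWeakSol (fun t => -1 + f t) (fun t => W (-t)) :=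
    reflect_sol hf_even hK hW
  have hVd : ∀ x, HasDerivAt (fun y => W (-y)) (-deriv W (-x)) x := by
    intro x
    have h := (hWd (-x)).comp x (hasDerivAt_neg x)
    rwa [mul_neg_one] at h
  have hVpos : ∀ x, x ≤ 0 → 0 < W (-x) := fun x hx => hWpos (-x) (neg_nonneg.2 hx)
  have hW0 : 0 < W 0 := hWpos 0 le_rfl
  have hVc : Continuous (fun y : ℝ => W (-y)) := hWc.comp continuous_neg
  set cval : ℝ := -(2 * W 0 * deriv W 0) with hcval
  have cW : ∀ s, -(W s * deriv W (-s)) - deriv W s * W (-s) = cval := by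
    intro s
    have h := wronskian_const hK hW hV s
    rw [deriv_reflect hW.1 s, deriv_reflect hW.1 0] at h
    simp only [neg_zero] at h
    rw [hcval]; linarith [h]
  have hη : ∀ x, x ≤ 0 → HasDerivAt (fun y => W y / W (-y)) (-cval / (W (-x))^2) x := by
    intro x hx
    have hne : W (-x) ≠ 0 := ne_of_gt (hVpos x hx)
    have h := (hWd x).div (hVd x) hne
    have e : (deriv W x * W (-x) - W x * -deriv W (-x)) = -cval := by
      have := cW x; linarith
    rwa [e] at h
  have hφ : ∀ x, 0 ≤ x → HasDerivAt (fun y => W (-y) / W y) (cval / (W x)^2) x := by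
    intro x hx
    have hne : W x ≠ 0 := ne_of_gt (hWpos x hx)
    have h := (hVd x).div (hWd x) hne
    have e : (-deriv W (-x) * W x - W (-x) * deriv W x) = cval := by
      have := cW x; linarith
    rwa [e] at h
  have hV0 : W (-(0:ℝ)) = W 0 := by rw [neg_zero]
  have hη0 : W 0 / W (-(0:ℝ)) = 1 := by rw [hV0]; exact div_self (ne_of_gt hW0)
  have hφ0 : W (-(0:ℝ)) / W 0 = 1 := by rw [hV0]; exact div_self (ne_of_gt hW0)
  have hcontη : ∀ (a b : ℝ), a ≤ b → b ≤ 0 →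
      IntervalIntegrable (fun x => -cval / (W (-x))^2) volume a b := by
    intro a b hab hb0
    apply ContinuousOn.intervalIntegrable
    apply ContinuousOn.div continuousOn_const ((hVc.pow 2).continuousOn)
    intro x hx
    rw [Set.uIcc_of_le hab] at hx
    exact pow_ne_zero 2 (ne_of_gt (hVpos x (le_trans hx.2 hb0)))
  have hcontφ : ∀ (a b : ℝ), 0 ≤ a → a ≤ b →
      IntervalIntegrable (fun x => cval / (W x)^2) volume a b := by
    intro a b ha hab
    apply ContinuousOn.intervalIntegrable
    apply ContinuousOn.div continuousOn_const ((hWc.pow 2).continuousOn)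
    intro x hx
    rw [Set.uIcc_of_le hab] at hx
    exact pow_ne_zero 2 (ne_of_gt (hWpos x (le_trans ha hx.1)))
  have hFTCη : ∀ x : ℝ, x ≤ 0 →
      (∫ u in x..(0:ℝ), (-cval / (W (-u))^2))
        = W 0 / W (-(0:ℝ)) - W x / W (-x) := by
    intro x hx
    refine intervalIntegral.integral_eq_sub_of_hasDerivAt
      (f := fun y => W y / W (-y)) (fun u hu => ?_) (hcontη x 0 hx le_rfl)
    rw [Set.uIcc_of_le hx] at hu
    exact hη u hu.2
  constructor
  · -- disconjugacy → deriv W 0 ≤ 0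
    intro hi
    by_contra hnot
    push_neg at hnot
    have hcneg : cval < 0 := by rw [hcval]; nlinarith
    have hcneg' : 0 < -cval := by linarith
    -- Step 1: find t₁ < 0 with W t₁ < 0
    have hVlim : Tendsto (fun y : ℝ => W (-y)) atBot (nhds 0) :=
      hWlim.comp tendsto_neg_atBot_atTop
    obtain ⟨T0, hT0⟩ := eventually_atBot.1 (hVlim.eventually_lt_const one_pos)
    set T : ℝ := min T0 0 with hT
    have hT0' : T ≤ 0 := min_le_right _ _
    set t₁ : ℝ := T - 2 / (-cval) with ht₁
    have hpos2 : 0 < 2 / (-cval) := div_pos two_pos hcneg'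
    have ht₁T : t₁ < T := by rw [ht₁]; linarith
    have ht₁0 : t₁ < 0 := lt_of_lt_of_le ht₁T hT0'
    have hFTC1 := hFTCη t₁ ht₁0.le
    have hsplit : (∫ x in t₁..(0:ℝ), (-cval / (W (-x))^2))
        = (∫ x in t₁..T, (-cval / (W (-x))^2)) + ∫ x in T..(0:ℝ), (-cval / (W (-x))^2) := by
      rw [intervalIntegral.integral_add_adjacent_intervals
        (hcontη t₁ T ht₁T.le hT0') (hcontη T 0 hT0' le_rfl)]
    have hpart2 : 0 ≤ ∫ x in T..(0:ℝ), (-cval / (W (-x))^2) := by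
      apply intervalIntegral.integral_nonneg hT0'
      intro u hu
      have h1 : 0 < W (-u) := hVpos u hu.2
      apply div_nonneg (by linarith) (by positivity)
    have hpart1 : 2 ≤ ∫ x in t₁..T, (-cval / (W (-x))^2) := by
      have hmono := intervalIntegral.integral_mono_on (μ := volume)
        (f := fun _ => -cval) (g := fun x => -cval / (W (-x))^2) ht₁T.le
        intervalIntegrable_const (hcontη t₁ T ht₁T.le hT0')
        (fun x hx => ?_)
      · rw [intervalIntegral.integral_const, smul_eq_mul] at hmono
        have hd' : T - t₁ = 2 / (-cval) := by rw [ht₁]; ring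
        have he : (T - t₁) * (-cval) = 2 := by
          rw [hd', div_mul_cancel₀ _ (ne_of_gt hcneg')]
        calc (2:ℝ) = (T - t₁) * -cval := he.symm
          _ ≤ _ := hmono
      · 
        have hx0 : x ≤ 0 := le_trans hx.2 hT0'
        have h1 : 0 < W (-x) := hVpos x hx0
        have h2 : W (-x) < 1 := hT0 x (le_trans hx.2 (min_le_left _ _))
        rw [le_div_iff₀ (by positivity)]
        have h3 : W (-x) ^ 2 ≤ 1 := by nlinarith
        nlinarith [mul_le_mul_of_nonneg_left h3 hcneg'.le]
    have hηt₁ : W t₁ / W (-t₁) ≤ -1 := by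
      rw [hη0] at hFTC1
      linarith [hFTC1, hsplit, hpart1, hpart2]
    have hWt₁ : W t₁ < 0 := by
      have hVt₁ : 0 < W (-t₁) := hVpos t₁ ht₁0.le
      nlinarith [div_mul_cancel₀ (W t₁) (ne_of_gt hVt₁)]
    set κ : ℝ := W (-t₁) / W t₁ with hκ
    have hκneg : κ < 0 := div_neg_of_pos_of_neg (hVpos t₁ ht₁0.le) hWt₁
    -- Step 2: find r' ≥ 0 with W (-r') / W r' = κ
    obtain ⟨T2', hT2'⟩ := eventually_atTop.1 (hWlim.eventually_lt_const one_pos)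
    set T₂ : ℝ := max T2' 0 with hT₂
    have hT₂0 : 0 ≤ T₂ := le_max_right _ _
    set r : ℝ := T₂ + (2 - κ) / (-cval) with hr
    have hposr : 0 < (2 - κ) / (-cval) := div_pos (by linarith) hcneg'
    have hrT₂ : T₂ < r := by rw [hr]; linarith
    have hr0 : 0 ≤ r := le_trans hT₂0 hrT₂.le
    have hFTC2 : (∫ x in (0:ℝ)..T₂, (cval / (W x)^2))
        = W (-T₂) / W T₂ - W (-(0:ℝ)) / W 0 := by
      refine intervalIntegral.integral_eq_sub_of_hasDerivAt
        (f := fun y => W (-y) / W y) (fun u hu => ?_) (hcontφ 0 T₂ le_rfl hT₂0)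
      rw [Set.uIcc_of_le hT₂0] at hu
      exact hφ u hu.1
    have hFTC3 : (∫ x in T₂..r, (cval / (W x)^2))
        = W (-r) / W r - W (-T₂) / W T₂ := by
      refine intervalIntegral.integral_eq_sub_of_hasDerivAt
        (f := fun y => W (-y) / W y) (fun u hu => ?_) (hcontφ T₂ r hT₂0 hrT₂.le)
      rw [Set.uIcc_of_le hrT₂.le] at hu
      exact hφ u (le_trans hT₂0 hu.1)
    have hpart3 : (∫ x in (0:ℝ)..T₂, (cval / (W x)^2)) ≤ 0 := by
      have h0 := intervalIntegral.integral_mono_on (μ := volume)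
        (f := fun x => cval / (W x)^2) (g := fun _ => (0:ℝ)) hT₂0
        (hcontφ 0 T₂ le_rfl hT₂0) intervalIntegrable_const (fun x hx => ?_)
      · rw [intervalIntegral.integral_const, smul_eq_mul, mul_zero] at h0
        simpa using h0
      · show cval / (W x)^2 ≤ 0
        have h1 : 0 < W x := hWpos x hx.1
        apply div_nonpos_of_nonpos_of_nonneg (le_of_lt hcneg) (by positivity)
    have hpart4 : (∫ x in T₂..r, (cval / (W x)^2)) ≤ κ - 2 := by
      have h0 := intervalIntegral.integral_mono_on (μ := volume)
        (f := fun x => cval / (W x)^2) (g := fun _ => cval) hrT₂.le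
        (hcontφ T₂ r hT₂0 hrT₂.le) intervalIntegrable_const (fun x hx => ?_)
      · rw [intervalIntegral.integral_const, smul_eq_mul] at h0
        have hd' : r - T₂ = (2 - κ) / (-cval) := by rw [hr]; ring
        have he : (r - T₂) * cval = κ - 2 := by
          rw [hd']
          field_simp
          rw [mul_div_cancel_right₀ _ hcneg.ne]; ring
        exact le_trans h0 (le_of_eq he)
      · show cval / (W x)^2 ≤ cval
        have h1 : 0 < W x := hWpos x (le_trans hT₂0 hx.1)
        have h2 : W x < 1 := hT2' x (le_trans (le_max_left _ _) hx.1)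
        rw [div_le_iff₀ (by positivity)]
        have h3 : W x ^ 2 ≤ 1 := by nlinarith
        have := mul_le_mul_of_nonpos_left h3 hcneg.le
        linarith
    have hφr : W (-r) / W r ≤ κ - 1 := by
      rw [hφ0] at hFTC2
      linarith [hFTC2, hFTC3, hpart3, hpart4]
    have hcont : ContinuousOn (fun y => W (-y) / W y) (Icc 0 r) := by
      apply ContinuousOn.div hVc.continuousOn hWc.continuousOn
      intro x hx
      exact ne_of_gt (hWpos x hx.1)
    have hκmem : κ ∈ Icc ((fun y => W (-y) / W y) r) ((fun y => W (-y) / W y) 0) := by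
      constructor
      · exact le_trans hφr (by linarith)
      · show κ ≤ W (-(0:ℝ)) / W 0
        rw [hφ0]
        linarith
    obtain ⟨r', hr'mem, hφr'⟩ := intermediate_value_Icc' hr0 hcont hκmem
    have hψ : IsWeakSol (fun t => -1 + f t) (fun u => W (-u) - κ * W u) :=
      combo_sol hK hV hW κ
    have hψt₁ : W (-t₁) - κ * W t₁ = 0 := by
      rw [hκ, div_mul_cancel₀ _ (ne_of_lt hWt₁)]
      ring
    have hψr' : W (-r') - κ * W r' = 0 := by
      have hWr' : W r' ≠ 0 := ne_of_gt (hWpos r' hr'mem.1)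
      have h : W (-r') / W r' = κ := hφr'
      rw [← h, div_mul_cancel₀ _ hWr']
      ring
    have hzero := hi (fun u => W (-u) - κ * W u) hψ
      ⟨t₁, r', by linarith [hr'mem.1], hψt₁, hψr'⟩ 0
    simp only [neg_zero] at hzero
    nlinarith [hzero, hW0, hκneg]
  · -- deriv W 0 ≤ 0 → disconjugacy
    intro hd Y hY hex t
    obtain ⟨a, b, hab, ha, hb⟩ := hex
    have hcnn : 0 ≤ cval := by rw [hcval]; nlinarith
    have hWposall : ∀ x, 0 < W x := by
      intro x
      rcases le_or_gt 0 x with hx | hx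
      · exact hWpos x hx
      · have hFTC := hFTCη x hx.le
        have hintnp : (∫ u in x..(0:ℝ), (-cval / (W (-u))^2)) ≤ 0 := by
          have h0 := intervalIntegral.integral_mono_on (μ := volume)
            (f := fun u => -cval / (W (-u))^2) (g := fun _ => (0:ℝ)) hx.le
            (hcontη x 0 hx.le le_rfl) intervalIntegrable_const (fun u hu => ?_)
          · rw [intervalIntegral.integral_const, smul_eq_mul, mul_zero] at h0
            simpa using h0
          · show -cval / (W (-u))^2 ≤ 0
            have h1 : 0 < W (-u) := hVpos u hu.2
            apply div_nonpos_of_nonpos_of_nonneg (by linarith) (by positivity)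
        rw [hη0] at hFTC
        have hηx : 1 ≤ W x / W (-x) := by linarith [hFTC, hintnp]
        have hVx : 0 < W (-x) := hVpos x hx.le
        nlinarith [div_mul_cancel₀ (W x) (ne_of_gt hVx)]
    set d : ℝ := Y 0 * deriv W 0 - deriv Y 0 * W 0 with hdd
    have cYW : ∀ s, Y s * deriv W s - deriv Y s * W s = d :=
      fun s => wronskian_const hK hY hW s
    have hYd : ∀ x, HasDerivAt Y (deriv Y x) x :=
      fun x => (hY.1.differentiable one_ne_zero x).hasDerivAt
    have hh : ∀ x, HasDerivAt (fun y => Y y / W y) (-d / (W x)^2) x := by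
      intro x
      have h := (hYd x).div (hWd x) (ne_of_gt (hWposall x))
      have e : (deriv Y x * W x - Y x * deriv W x) = -d := by
        have := cYW x; linarith
      rwa [e] at h
    have hderiv : ∀ x, deriv (fun y => Y y / W y) x = -d / (W x)^2 :=
      fun x => (hh x).deriv
    have hha : Y a / W a = 0 := by rw [ha, zero_div]
    have hhb : Y b / W b = 0 := by rw [hb, zero_div]
    rcases lt_trichotomy d 0 with hd0 | hd0 | hd0
    · exfalso
      have hmono : StrictMono (fun y => Y y / W y) := by
        apply strictMono_of_deriv_pos
        intro x
        rw [hderiv x]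
        have h1 := hWposall x
        exact div_pos (by linarith) (by positivity)
      exact hab (hmono.injective (by rw [hha, hhb]))
    · have hconst := is_const_of_deriv_eq_zero (𝕜 := ℝ)
        (f := fun y => Y y / W y)
        (fun x => (hh x).differentiableAt) (fun x => by rw [hderiv x, hd0]; simp) t a
      have hzt : Y t / W t = 0 := by rw [hconst, hha]
      have hWt := hWposall t
      field_simp at hzt
      simpa using hzt
    · exfalso
      have hanti : StrictAnti (fun y => Y y / W y) := by
        apply strictAnti_of_deriv_neg
        intro x
        rw [hderiv x]
        have h1 := hWposall x
        have h2 : 0 < (W x)^2 := by positivity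
        exact div_neg_of_neg_of_pos (by linarith) h2
      exact hab (hanti.injective (by rw [hha, hhb]))
end

section
/- Let 0 < ℓ ≤ π/4 and define K : ℝ → ℝ by K(t) = 1 for |t| ≤ ℓ and K(t) = −1 for |t| > ℓ. Then every weak solution Y of Y'' + K·Y = 0 that vanishes at two distinct points of ℝ is identically zero. -/
open Real MeasureTheory Filter Set Topology

namespace Stmt1Aux

variable {ℓ : ℝ} {K Y : ℝ → ℝ}

lemma K_meas (hK : ∀ t : ℝ, K t = if |t| ≤ ℓ then 1 else -1) : Measurable K := by
  have h : K = fun t => if |t| ≤ ℓ then (1:ℝ) else -1 := funext hK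
  rw [h]
  exact Measurable.ite (measurableSet_le continuous_abs.measurable measurable_const)
    measurable_const measurable_const

lemma intInt (hK : ∀ t : ℝ, K t = if |t| ≤ ℓ then 1 else -1) (hY : Continuous Y)
    (a b : ℝ) : IntervalIntegrable (fun u => K u * Y u) volume a b := by
  refine (hY.intervalIntegrable a b).mono_fun
    (((K_meas hK).mul hY.measurable).aestronglyMeasurable.restrict) (ae_of_all _ ?_)
  intro u
  simp only [Real.norm_eq_abs, abs_mul, hK u]
  split <;> simp

lemma derivRight (hK : ∀ t : ℝ, K t = if |t| ≤ ℓ then 1 else -1) (hY : IsWeakSol K Y)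
    {t κ : ℝ} (h : ∀ᶠ u in 𝓝[>] t, K u = κ) :
    HasDerivWithinAt (deriv Y) (-(κ * Y t)) (Ici t) t := by
  have hcont := hY.1.continuous
  have htend : Tendsto (fun u => K u * Y u) (𝓝[>] t ⊓ ae volume) (𝓝 (κ * Y t)) := by
    have h1 : Tendsto (fun u => κ * Y u) (𝓝[>] t) (𝓝 (κ * Y t)) :=
      ((continuous_const.mul hcont).tendsto t).mono_left nhdsWithin_le_nhds
    refine (h1.mono_left inf_le_left).congr' ?_
    filter_upwards [h.filter_mono inf_le_left] with u hu
    rw [hu]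
  have hmeas : StronglyMeasurableAtFilter (fun u => K u * Y u) (𝓝[>] t) :=
    ⟨univ, univ_mem, (((K_meas hK).mul hcont.measurable).aestronglyMeasurable).restrict⟩
  have hI : HasDerivWithinAt (fun u => ∫ x in (0:ℝ)..u, K x * Y x) (κ * Y t) (Ici t) t :=
    intervalIntegral.integral_hasDerivWithinAt_of_tendsto_ae_right (intInt hK hcont 0 t)
      hmeas htend
  have h2 : HasDerivWithinAt (fun u => deriv Y 0 - ∫ x in (0:ℝ)..u, K x * Y x)
      (-(κ * Y t)) (Ici t) t := by
    exact hI.const_sub (deriv Y 0)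
  exact h2.congr (fun u _ => (hY.2 u)) (hY.2 t)

end Stmt1Aux

namespace Stmt1Aux

variable {ℓ : ℝ} {K Y : ℝ → ℝ}

lemma trig_evolve (hK : ∀ t : ℝ, K t = if |t| ≤ ℓ then 1 else -1) (hY : IsWeakSol K Y)
    {c d : ℝ} (hcd : c ≤ d) (hc : -ℓ ≤ c) (hd : d ≤ ℓ) :
    ∀ t ∈ Icc c d, Y t = Y c * cos (t - c) + deriv Y c * sin (t - c) ∧
      deriv Y t = deriv Y c * cos (t - c) - Y c * sin (t - c) := by
  have hYc := hY.1.continuous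
  have hY'c := hY.1.continuous_deriv le_rfl
  have hder : ∀ x : ℝ, HasDerivAt Y (deriv Y x) x :=
    fun x => ((hY.1.differentiable one_ne_zero) x).hasDerivAt
  have hright : ∀ t ∈ Ico c d, HasDerivWithinAt (deriv Y) (-Y t) (Ici t) t := by
    intro t ht
    have hev : ∀ᶠ u in 𝓝[>] t, K u = 1 := by
      have hm : Ioo t ℓ ∈ 𝓝[>] t := Ioo_mem_nhdsGT_of_mem ⟨le_rfl, lt_of_lt_of_le ht.2 hd⟩
      filter_upwards [hm] with u hu
      have h1 : -ℓ ≤ u := le_of_lt (lt_of_le_of_lt (le_trans hc ht.1) hu.1)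
      rw [hK u, if_pos (abs_le.2 ⟨h1, hu.2.le⟩)]
    simpa using derivRight hK hY hev
  have hccos : Continuous fun s : ℝ => cos (s - c) :=
    Real.continuous_cos.comp (continuous_id.sub continuous_const)
  have hcsin : Continuous fun s : ℝ => sin (s - c) :=
    Real.continuous_sin.comp (continuous_id.sub continuous_const)
  have hdcos : ∀ t : ℝ, HasDerivAt (fun s => cos (s - c)) (-sin (t - c)) t := by
    intro t
    simpa [Function.comp_def] using (Real.hasDerivAt_cos (t - c)).comp t ((hasDerivAt_id t).sub_const c)
  have hdsin : ∀ t : ℝ, HasDerivAt (fun s => sin (s - c)) (cos (t - c)) t := by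
    intro t
    simpa [Function.comp_def] using (Real.hasDerivAt_sin (t - c)).comp t ((hasDerivAt_id t).sub_const c)
  have hAconst : ∀ t ∈ Icc c d,
      deriv Y t * cos (t - c) + Y t * sin (t - c)
        = deriv Y c * cos (c - c) + Y c * sin (c - c) := by
    apply constant_of_has_deriv_right_zero
    · exact ((hY'c.mul hccos).add (hYc.mul hcsin)).continuousOn
    · intro t ht
      have h := ((hright t ht).mul (hdcos t).hasDerivWithinAt).add
        (((hder t).hasDerivWithinAt (s := Ici t)).mul (hdsin t).hasDerivWithinAt)
      convert h using 1
      · rfl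
      · ring
  have hBconst : ∀ t ∈ Icc c d,
      Y t * cos (t - c) - deriv Y t * sin (t - c)
        = Y c * cos (c - c) - deriv Y c * sin (c - c) := by
    apply constant_of_has_deriv_right_zero
    · exact ((hYc.mul hccos).sub (hY'c.mul hcsin)).continuousOn
    · intro t ht
      have h := (((hder t).hasDerivWithinAt (s := Ici t)).mul (hdcos t).hasDerivWithinAt).sub
        ((hright t ht).mul (hdsin t).hasDerivWithinAt)
      convert h using 1
      · rfl
      · ring
  intro t ht
  have h1 := hAconst t ht
  have h2 := hBconst t ht
  rw [sub_self, Real.cos_zero, Real.sin_zero, mul_one, mul_zero] at h1 h2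
  rw [add_zero] at h1
  rw [sub_zero] at h2
  have hpy := Real.sin_sq_add_cos_sq (t - c)
  constructor
  · linear_combination cos (t - c) * h2 + sin (t - c) * h1 - Y t * hpy
  · linear_combination cos (t - c) * h1 - sin (t - c) * h2 - deriv Y t * hpy

lemma hyp_evolve (hK : ∀ t : ℝ, K t = if |t| ≤ ℓ then 1 else -1) (hY : IsWeakSol K Y)
    {c d : ℝ} (hcd : c ≤ d) (hside : ∀ t ∈ Ico c d, ∀ᶠ u in 𝓝[>] t, K u = -1) :
    ∀ t ∈ Icc c d, Y t = Y c * cosh (t - c) + deriv Y c * sinh (t - c) ∧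
      deriv Y t = deriv Y c * cosh (t - c) + Y c * sinh (t - c) := by
  have hYc := hY.1.continuous
  have hY'c := hY.1.continuous_deriv le_rfl
  have hder : ∀ x : ℝ, HasDerivAt Y (deriv Y x) x :=
    fun x => ((hY.1.differentiable one_ne_zero) x).hasDerivAt
  have hright : ∀ t ∈ Ico c d, HasDerivWithinAt (deriv Y) (Y t) (Ici t) t := by
    intro t ht
    simpa using derivRight hK hY (hside t ht)
  have hccos : Continuous fun s : ℝ => cosh (s - c) :=
    Real.continuous_cosh.comp (continuous_id.sub continuous_const)
  have hcsin : Continuous fun s : ℝ => sinh (s - c) :=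
    Real.continuous_sinh.comp (continuous_id.sub continuous_const)
  have hdcos : ∀ t : ℝ, HasDerivAt (fun s => cosh (s - c)) (sinh (t - c)) t := by
    intro t
    simpa [Function.comp_def] using (Real.hasDerivAt_cosh (t - c)).comp t ((hasDerivAt_id t).sub_const c)
  have hdsin : ∀ t : ℝ, HasDerivAt (fun s => sinh (s - c)) (cosh (t - c)) t := by
    intro t
    simpa [Function.comp_def] using (Real.hasDerivAt_sinh (t - c)).comp t ((hasDerivAt_id t).sub_const c)
  have hAconst : ∀ t ∈ Icc c d,
      deriv Y t * cosh (t - c) - Y t * sinh (t - c)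
        = deriv Y c * cosh (c - c) - Y c * sinh (c - c) := by
    apply constant_of_has_deriv_right_zero
    · exact ((hY'c.mul hccos).sub (hYc.mul hcsin)).continuousOn
    · intro t ht
      have h := ((hright t ht).mul (hdcos t).hasDerivWithinAt).sub
        (((hder t).hasDerivWithinAt (s := Ici t)).mul (hdsin t).hasDerivWithinAt)
      convert h using 1
      · rfl
      · ring
  have hBconst : ∀ t ∈ Icc c d,
      Y t * cosh (t - c) - deriv Y t * sinh (t - c)
        = Y c * cosh (c - c) - deriv Y c * sinh (c - c) := by
    apply constant_of_has_deriv_right_zero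
    · exact ((hYc.mul hccos).sub (hY'c.mul hcsin)).continuousOn
    · intro t ht
      have h := (((hder t).hasDerivWithinAt (s := Ici t)).mul (hdcos t).hasDerivWithinAt).sub
        ((hright t ht).mul (hdsin t).hasDerivWithinAt)
      convert h using 1
      · rfl
      · ring
  intro t ht
  have h1 := hAconst t ht
  have h2 := hBconst t ht
  rw [sub_self, Real.cosh_zero, Real.sinh_zero, mul_one, mul_zero, sub_zero] at h1 h2
  have hpy := Real.cosh_sq_sub_sinh_sq (t - c)
  constructor
  · linear_combination cosh (t - c) * h2 + sinh (t - c) * h1 - Y t * hpy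
  · linear_combination cosh (t - c) * h1 + sinh (t - c) * h2 - deriv Y t * hpy

end Stmt1Aux

namespace Stmt1Aux

variable {ℓ : ℝ} {K Y : ℝ → ℝ}

/-- eventual `K = -1` to the right, in the right region. -/
lemma sideR (hK : ∀ t : ℝ, K t = if |t| ≤ ℓ then 1 else -1) (hℓ : 0 < ℓ)
    {c d : ℝ} (hc : ℓ ≤ c) : ∀ t ∈ Ico c d, ∀ᶠ u in 𝓝[>] t, K u = -1 := by
  intro t ht
  filter_upwards [self_mem_nhdsWithin] with u hu
  have : ℓ < u := lt_of_le_of_lt (le_trans hc ht.1) hu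
  rw [hK u, if_neg (by rw [not_le]; exact lt_of_lt_of_le this (le_abs_self u))]

/-- eventual `K = -1` to the right, in the left region. -/
lemma sideL (hK : ∀ t : ℝ, K t = if |t| ≤ ℓ then 1 else -1) (hℓ : 0 < ℓ)
    {c d : ℝ} (hd : d ≤ -ℓ) : ∀ t ∈ Ico c d, ∀ᶠ u in 𝓝[>] t, K u = -1 := by
  intro t ht
  filter_upwards [Ioo_mem_nhdsGT_of_mem ⟨le_refl t, ht.2⟩] with u hu
  have h1 : ℓ < -u := by linarith [hu.2, hd]
  rw [hK u, if_neg (by rw [not_le]; exact lt_of_lt_of_le h1 (neg_le_abs u))]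

/-- if `Y(c) > 0` and `Y(c) + Y'(c) ≥ 0` at a point `c ≥ ℓ`, then `Y > 0` forever after. -/
lemma escape (hK : ∀ t : ℝ, K t = if |t| ≤ ℓ then 1 else -1) (hY : IsWeakSol K Y)
    (hℓ : 0 < ℓ) {c : ℝ} (hc : ℓ ≤ c) (h0 : 0 < Y c) (h1 : 0 ≤ Y c + deriv Y c) :
    ∀ t, c ≤ t → 0 < Y t := by
  intro t ht
  obtain ⟨hYt, -⟩ := hyp_evolve hK hY ht (sideR hK hℓ hc) t ⟨ht, le_refl t⟩
  rw [hYt]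
  have hs : (0:ℝ) ≤ t - c := by linarith
  have h2 : 0 ≤ Real.sinh (t - c) := by rwa [Real.sinh_nonneg_iff]
  have h3 : Real.cosh (t - c) - Real.sinh (t - c) = Real.exp (-(t - c)) := by
    rw [Real.cosh_eq, Real.sinh_eq]; ring
  nlinarith [Real.exp_pos (-(t - c))]

end Stmt1Aux

namespace Stmt1Aux

variable {ℓ : ℝ} {K Y : ℝ → ℝ}

lemma mainR (hK : ∀ t : ℝ, K t = if |t| ≤ ℓ then 1 else -1) (hY : IsWeakSol K Y)
    (hℓ : 0 < ℓ) (hℓ' : ℓ ≤ π / 4) {a b : ℝ} (hab : a < b) (hA : -ℓ ≤ a)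
    (ha : Y a = 0) (hb : Y b = 0) (hpos : ∀ t ∈ Ioo a b, 0 < Y t) : False := by
  have hπ := Real.pi_pos
  rcases le_or_gt ℓ a with hra | hma
  · -- a is in the right region
    have hev := hyp_evolve hK hY hab.le (sideR hK hℓ hra)
    obtain ⟨hm1, -⟩ := hev ((a+b)/2) ⟨by linarith, by linarith⟩
    have hp := hpos ((a+b)/2) ⟨by linarith, by linarith⟩
    rw [hm1, ha, zero_mul, zero_add] at hp
    have hsinh : 0 < Real.sinh ((a+b)/2 - a) := Real.sinh_pos_iff.2 (by linarith)
    have hda : 0 < deriv Y a := by nlinarith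
    obtain ⟨hb1, -⟩ := hev b ⟨hab.le, le_refl b⟩
    rw [hb, ha, zero_mul, zero_add] at hb1
    have hsb : 0 < Real.sinh (b - a) := Real.sinh_pos_iff.2 (by linarith)
    nlinarith
  · -- -ℓ ≤ a < ℓ
    have hae : a < min b ℓ := lt_min hab hma
    have hev := trig_evolve hK hY hae.le hA (min_le_right b ℓ)
    have hm2 : (a + min b ℓ)/2 < min b ℓ := by linarith
    obtain ⟨hf, -⟩ := hev ((a + min b ℓ)/2) ⟨by linarith, by linarith⟩
    have hp := hpos ((a + min b ℓ)/2)
      ⟨by linarith, lt_of_lt_of_le hm2 (min_le_left b ℓ)⟩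
    rw [hf, ha, zero_mul, zero_add] at hp
    have hminl : min b ℓ ≤ ℓ := min_le_right b ℓ
    have hsin1 : 0 < Real.sin ((a + min b ℓ)/2 - a) :=
      Real.sin_pos_of_pos_of_lt_pi (by linarith) (by linarith)
    have hda : 0 < deriv Y a := by nlinarith
    rcases le_or_gt b ℓ with hbl | hlb
    · have heb : min b ℓ = b := min_eq_left hbl
      obtain ⟨hf2, -⟩ := hev b ⟨hab.le, le_of_eq heb.symm⟩
      rw [hb, ha, zero_mul, zero_add] at hf2
      have : 0 < Real.sin (b - a) :=
        Real.sin_pos_of_pos_of_lt_pi (by linarith) (by linarith)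
      nlinarith
    · have hel : min b ℓ = ℓ := min_eq_right hlb.le
      obtain ⟨hfl, hgl⟩ := hev ℓ ⟨hma.le, le_of_eq hel.symm⟩
      rw [ha, zero_mul, zero_add] at hfl
      rw [ha, zero_mul, sub_zero] at hgl
      have hsl : 0 < Real.sin (ℓ - a) :=
        Real.sin_pos_of_pos_of_lt_pi (by linarith) (by linarith)
      have hcl : 0 ≤ Real.cos (ℓ - a) :=
        Real.cos_nonneg_of_mem_Icc ⟨by linarith, by linarith⟩
      have h0 : 0 < Y ℓ := by rw [hfl]; exact mul_pos hda hsl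
      have h1 : 0 ≤ Y ℓ + deriv Y ℓ := by rw [hfl, hgl]; nlinarith
      exact absurd hb (ne_of_gt (escape hK hY hℓ le_rfl h0 h1 b hlb.le))

lemma mainLR (hK : ∀ t : ℝ, K t = if |t| ≤ ℓ then 1 else -1) (hY : IsWeakSol K Y)
    (hℓ : 0 < ℓ) (hℓ' : ℓ ≤ π / 4) {a b : ℝ} (hA : a < -ℓ) (hB : ℓ < b)
    (ha : Y a = 0) (hb : Y b = 0) (hpos : ∀ t ∈ Ioo a b, 0 < Y t) : False := by
  have hπ := Real.pi_pos
  have hev1 := hyp_evolve hK hY hA.le (sideL hK hℓ le_rfl)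
  obtain ⟨hf, -⟩ := hev1 ((a + -ℓ)/2) ⟨by linarith, by linarith⟩
  have hp := hpos ((a + -ℓ)/2) ⟨by linarith, by linarith⟩
  rw [hf, ha, zero_mul, zero_add] at hp
  have hsm : 0 < Real.sinh ((a + -ℓ)/2 - a) := Real.sinh_pos_iff.2 (by linarith)
  have hda : 0 < deriv Y a := by nlinarith
  obtain ⟨hfL, hgL⟩ := hev1 (-ℓ) ⟨hA.le, le_refl _⟩
  rw [ha, zero_mul, zero_add] at hfL
  rw [ha, zero_mul, add_zero] at hgL
  have hsp : 0 < Real.sinh (-ℓ - a) := Real.sinh_pos_iff.2 (by linarith)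
  have hexp : Real.cosh (-ℓ - a) - Real.sinh (-ℓ - a) = Real.exp (-(-ℓ - a)) := by
    rw [Real.cosh_eq, Real.sinh_eq]; ring
  have hp0 : 0 < Y (-ℓ) := by rw [hfL]; exact mul_pos hda hsp
  have hq0 : Y (-ℓ) < deriv Y (-ℓ) := by
    rw [hfL, hgL]; nlinarith [Real.exp_pos (-(-ℓ - a))]
  have hev2 := trig_evolve hK hY (by linarith : -ℓ ≤ ℓ) le_rfl le_rfl
  obtain ⟨hf2, hg2⟩ := hev2 ℓ ⟨by linarith, le_refl ℓ⟩
  have h2l : ℓ - -ℓ = 2*ℓ := by ring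
  rw [h2l] at hf2 hg2
  have hs2 : 0 < Real.sin (2*ℓ) :=
    Real.sin_pos_of_pos_of_lt_pi (by linarith) (by linarith)
  have hc2 : 0 ≤ Real.cos (2*ℓ) :=
    Real.cos_nonneg_of_mem_Icc ⟨by linarith, by linarith⟩
  have h0 : 0 < Y ℓ := by rw [hf2]; nlinarith
  have h1 : 0 ≤ Y ℓ + deriv Y ℓ := by rw [hf2, hg2]; nlinarith
  exact absurd hb (ne_of_gt (escape hK hY hℓ le_rfl h0 h1 b hB.le))

end Stmt1Aux

namespace Stmt1Aux

variable {ℓ : ℝ} {K Y : ℝ → ℝ}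

lemma neg_sol (hY : IsWeakSol K Y) : IsWeakSol K (fun t => -Y t) := by
  refine ⟨hY.1.neg, fun t => ?_⟩
  have hd : ∀ s : ℝ, deriv (fun t => -Y t) s = -deriv Y s := fun s => deriv.neg
  rw [hd t, hd 0, hY.2 t]
  simp only [mul_neg, intervalIntegral.integral_neg]
  ring

lemma refl_sol (hK : ∀ t : ℝ, K t = if |t| ≤ ℓ then 1 else -1) (hY : IsWeakSol K Y) :
    IsWeakSol K (fun t => Y (-t)) := by
  have hKeven : ∀ x : ℝ, K (-x) = K x := by intro x; rw [hK, hK, abs_neg]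
  refine ⟨hY.1.comp contDiff_neg, fun t => ?_⟩
  have hd : ∀ s : ℝ, deriv (fun t => Y (-t)) s = -deriv Y (-s) := fun s => deriv_comp_neg Y s
  rw [hd t, hd 0, neg_zero]
  have hint : (∫ u in (0:ℝ)..t, K u * Y (-u)) = ∫ x in -t..(0:ℝ), K x * Y x := by
    calc (∫ u in (0:ℝ)..t, K u * Y (-u)) = ∫ u in (0:ℝ)..t, (fun x => K x * Y x) (-u) := by
          apply intervalIntegral.integral_congr
          intro u _
          simp only [hKeven]
      _ = ∫ x in -t..-(0:ℝ), K x * Y x := intervalIntegral.integral_comp_neg (fun x => K x * Y x)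
      _ = ∫ x in -t..(0:ℝ), K x * Y x := by rw [neg_zero]
  rw [hint, intervalIntegral.integral_symm]
  have h2 := hY.2 (-t)
  linarith

lemma vanish_fwd (hK : ∀ t : ℝ, K t = if |t| ≤ ℓ then 1 else -1) (hY : IsWeakSol K Y)
    (hℓ : 0 < ℓ) {c : ℝ} (h0 : Y c = 0) (h1 : deriv Y c = 0) :
    ∀ t, c ≤ t → Y t = 0 ∧ deriv Y t = 0 := by
  have stepR : ∀ x : ℝ, ℓ ≤ x → Y x = 0 → deriv Y x = 0 →
      ∀ t, x ≤ t → Y t = 0 ∧ deriv Y t = 0 := by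
    intro x hx h0 h1 t ht
    obtain ⟨hf, hg⟩ := hyp_evolve hK hY ht (sideR hK hℓ hx) t ⟨ht, le_refl t⟩
    rw [hf, hg, h0, h1]
    constructor <;> ring
  have stepM : ∀ x : ℝ, -ℓ ≤ x → x ≤ ℓ → Y x = 0 → deriv Y x = 0 →
      ∀ t, x ≤ t → Y t = 0 ∧ deriv Y t = 0 := by
    intro x hx1 hx2 h0 h1 t ht
    rcases le_or_gt t ℓ with h | h
    · obtain ⟨hf, hg⟩ := trig_evolve hK hY ht hx1 h t ⟨ht, le_refl t⟩
      rw [hf, hg, h0, h1]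
      constructor <;> ring
    · obtain ⟨hf, hg⟩ := trig_evolve hK hY hx2 hx1 le_rfl ℓ ⟨hx2, le_refl ℓ⟩
      rw [h0, h1] at hf hg
      simp only [zero_mul, mul_zero, add_zero, zero_add, sub_zero, zero_sub, neg_zero] at hf hg
      exact stepR ℓ le_rfl hf hg t h.le
  intro t ht
  rcases le_or_gt ℓ c with h | h
  · exact stepR c h h0 h1 t ht
  rcases le_or_gt (-ℓ) c with h' | h'
  · exact stepM c h' h.le h0 h1 t ht
  rcases le_or_gt t (-ℓ) with h2 | h2
  · obtain ⟨hf, hg⟩ := hyp_evolve hK hY ht (sideL hK hℓ h2) t ⟨ht, le_refl t⟩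
    rw [hf, hg, h0, h1]
    constructor <;> ring
  · obtain ⟨hf, hg⟩ := hyp_evolve hK hY h'.le (sideL hK hℓ le_rfl) (-ℓ) ⟨h'.le, le_refl _⟩
    rw [h0, h1] at hf hg
    simp only [zero_mul, mul_zero, add_zero, zero_add] at hf hg
    exact stepM (-ℓ) le_rfl (by linarith) hf hg t h2.le

lemma vanish_all (hK : ∀ t : ℝ, K t = if |t| ≤ ℓ then 1 else -1) (hY : IsWeakSol K Y)
    (hℓ : 0 < ℓ) {c : ℝ} (h0 : Y c = 0) (h1 : deriv Y c = 0) : ∀ t, Y t = 0 := by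
  intro t
  rcases le_or_gt c t with h | h
  · exact (vanish_fwd hK hY hℓ h0 h1 t h).1
  · have hZ := refl_sol hK hY
    have hd : deriv (fun s => Y (-s)) (-c) = -deriv Y c := by
      rw [deriv_comp_neg Y, neg_neg]
    have := vanish_fwd hK hZ hℓ (c := -c) (by simpa using h0)
      (by rw [hd, h1, neg_zero]) (-t) (by linarith)
    simpa using this.1

end Stmt1Aux

namespace Stmt1Aux

variable {ℓ : ℝ} {K Y : ℝ → ℝ}

lemma no_pos_bump (hK : ∀ t : ℝ, K t = if |t| ≤ ℓ then 1 else -1) (hY : IsWeakSol K Y)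
    (hℓ : 0 < ℓ) (hℓ' : ℓ ≤ π / 4) {a b s : ℝ} (has : a < s) (hsb : s < b)
    (ha : Y a = 0) (hb : Y b = 0) (hs : 0 < Y s) : False := by
  have hcont := hY.1.continuous
  set E := Icc a s ∩ Y ⁻¹' {0} with hE
  have hEc : IsClosed E := isClosed_Icc.inter (isClosed_singleton.preimage hcont)
  have hEne : E.Nonempty := ⟨a, ⟨le_refl a, has.le⟩, ha⟩
  have hEb : BddAbove E := ⟨s, fun x hx => hx.1.2⟩
  set a' := sSup E with ha'
  have ha'E : a' ∈ E := hEc.csSup_mem hEne hEb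
  have ha'0 : Y a' = 0 := ha'E.2
  have ha's : a' < s := lt_of_le_of_ne ha'E.1.2 (fun h => by rw [h] at ha'0; linarith)
  set F := Icc s b ∩ Y ⁻¹' {0} with hF
  have hFc : IsClosed F := isClosed_Icc.inter (isClosed_singleton.preimage hcont)
  have hFne : F.Nonempty := ⟨b, ⟨hsb.le, le_refl b⟩, hb⟩
  have hFb : BddBelow F := ⟨s, fun x hx => hx.1.1⟩
  set b' := sInf F with hb'
  have hb'F : b' ∈ F := hFc.csInf_mem hFne hFb
  have hb'0 : Y b' = 0 := hb'F.2
  have hsb' : s < b' := lt_of_le_of_ne hb'F.1.1 (fun h => by rw [← h] at hb'0; linarith)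
  have hnz : ∀ t ∈ Ioo a' b', Y t ≠ 0 := by
    intro t ht h0
    rcases le_or_gt t s with h | h
    · have htE : t ∈ E := ⟨⟨le_trans ha'E.1.1 ht.1.le, h⟩, h0⟩
      exact absurd (le_csSup hEb htE) (not_le.2 ht.1)
    · have htF : t ∈ F := ⟨⟨h.le, le_trans ht.2.le hb'F.1.2⟩, h0⟩
      exact absurd (csInf_le hFb htF) (not_le.2 ht.2)
  have hpos : ∀ t ∈ Ioo a' b', 0 < Y t := by
    intro t ht
    rcases lt_trichotomy (Y t) 0 with h | h | h
    · exfalso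
      rcases lt_trichotomy t s with hts | hts | hts
      · obtain ⟨z, hz, hz0⟩ := intermediate_value_Ioo hts.le hcont.continuousOn
          (show (0:ℝ) ∈ Ioo (Y t) (Y s) from ⟨h, hs⟩)
        exact hnz z ⟨lt_trans ht.1 hz.1, lt_trans hz.2 hsb'⟩ hz0
      · rw [hts] at h; linarith
      · obtain ⟨z, hz, hz0⟩ := intermediate_value_Ioo' hts.le hcont.continuousOn
          (show (0:ℝ) ∈ Ioo (Y t) (Y s) from ⟨h, hs⟩)
        exact hnz z ⟨lt_trans ha's hz.1, lt_trans hz.2 ht.2⟩ hz0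
    · exact absurd h (hnz t ht)
    · exact h
  have hab' : a' < b' := lt_trans ha's hsb'
  rcases le_or_gt (-ℓ) a' with hA | hA
  · exact mainR hK hY hℓ hℓ' hab' hA ha'0 hb'0 hpos
  rcases le_or_gt b' ℓ with hB | hB
  · have hZ := refl_sol hK hY
    refine mainR hK hZ hℓ hℓ' (a := -b') (b := -a') (by linarith) (by linarith)
      (by simpa using hb'0) (by simpa using ha'0) ?_
    intro t ht
    exact hpos (-t) ⟨by linarith [ht.2], by linarith [ht.1]⟩
  · exact mainLR hK hY hℓ hℓ' hA hB ha'0 hb'0 hpos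

end Stmt1Aux

open Stmt1Aux in
theorem stmt1 (ℓ : ℝ) (hℓ : 0 < ℓ) (hℓ' : ℓ ≤ π / 4)
    (K : ℝ → ℝ) (hK : ∀ t : ℝ, K t = if |t| ≤ ℓ then 1 else -1)
    (Y : ℝ → ℝ) (hY : IsWeakSol K Y)
    (hvan : ∃ a b : ℝ, a ≠ b ∧ Y a = 0 ∧ Y b = 0) :
    ∀ t, Y t = 0 := by
  intro T
  by_contra hT
  obtain ⟨a, b, hab, ha, hb⟩ := hvan
  have ha0 : Y (min a b) = 0 := by
    rcases le_total a b with h | h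
    · rwa [min_eq_left h]
    · rwa [min_eq_right h]
  have hb0 : Y (max a b) = 0 := by
    rcases le_total a b with h | h
    · rwa [max_eq_right h]
    · rwa [max_eq_left h]
  have h01 : min a b < max a b := min_lt_max.2 hab
  by_cases hz : ∀ u ∈ Ioo (min a b) (max a b), Y u = 0
  · set m := (min a b + max a b)/2 with hm
    have hmm : m ∈ Ioo (min a b) (max a b) := ⟨by rw [hm]; linarith, by rw [hm]; linarith⟩
    have hnm : Ioo (min a b) (max a b) ∈ 𝓝 m := Ioo_mem_nhds hmm.1 hmm.2
    have hYm : Y m = 0 := hz m hmm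
    have heq : Y =ᶠ[𝓝 m] fun _ => (0:ℝ) := by
      filter_upwards [hnm] with u hu
      exact hz u hu
    have hdm : deriv Y m = 0 := by rw [heq.deriv_eq]; exact deriv_const m 0
    exact hT (vanish_all hK hY hℓ hYm hdm T)
  · push_neg at hz
    obtain ⟨s, hsm, hs0⟩ := hz
    rcases hs0.lt_or_gt with hneg | hpos
    · exact no_pos_bump hK (neg_sol hY) hℓ hℓ' hsm.1 hsm.2
        (by simp [ha0]) (by simp [hb0]) (by simpa using hneg)
    · exact no_pos_bump hK hY hℓ hℓ' hsm.1 hsm.2 ha0 hb0 hpos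
end

section
/- Let K : [0,∞) → ℝ be locally integrable and let V, W : [0,∞) → ℝ be weak solutions of Y'' + K·Y = 0 on [0,∞). Assume V(0) = 0, V'(0) = 1, V(t) > 0 for all t > 0, W(0) = 1, and there exists T ≥ 0 such that W(t) > 0 for all t ≥ T. Then W(t) > 0 for all t ≥ 0. -/
open Real MeasureTheory Filter Set


lemma tri_swap (h g' : ℝ → ℝ) (t : ℝ)
    (hh : IntegrableOn h (Ioc 0 t)) (hg' : IntegrableOn g' (Ioc 0 t)) :
    ∫ u in Ioc (0:ℝ) t, (g' u * ∫ v in Ioc (0:ℝ) u, h v)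
      = ∫ v in Ioc (0:ℝ) t, (h v * ∫ u in Ioc v t, g' u) := by
  set μ := volume.restrict (Ioc (0:ℝ) t) with hμ
  set F : ℝ → ℝ → ℝ := fun u v => if v ≤ u then g' u * h v else 0 with hF
  have hFint : Integrable (fun p : ℝ × ℝ => F p.1 p.2) (μ.prod μ) := by
    have hbase : Integrable (fun p : ℝ × ℝ => g' p.1 * h p.2) (μ.prod μ) :=
      Integrable.mul_prod hg' hh
    have : (fun p : ℝ × ℝ => F p.1 p.2)
        = {p : ℝ × ℝ | p.2 ≤ p.1}.indicator (fun p => g' p.1 * h p.2) := by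
      ext p
      simp [hF, Set.indicator_apply, Set.mem_setOf_eq]
    rw [this]
    exact hbase.indicator (measurableSet_le measurable_snd measurable_fst)
  have hswap : ∫ u, ∫ v, F u v ∂μ ∂μ = ∫ v, ∫ u, F u v ∂μ ∂μ :=
    integral_integral_swap hFint
  have h1 : ∀ u ∈ Ioc (0:ℝ) t, (∫ v, F u v ∂μ) = g' u * ∫ v in Ioc (0:ℝ) u, h v := by
    intro u hu
    have : (fun v => F u v) = (Iic u).indicator (fun v => g' u * h v) := by
      ext v; simp [hF, Set.indicator_apply]
    rw [this, hμ, integral_indicator measurableSet_Iic,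
      Measure.restrict_restrict measurableSet_Iic]
    have hset : Iic u ∩ Ioc 0 t = Ioc 0 u := by
      ext x
      simp only [mem_inter_iff, mem_Iic, mem_Ioc]
      constructor
      · rintro ⟨hx, hx0, _⟩; exact ⟨hx0, hx⟩
      · rintro ⟨hx0, hxu⟩; exact ⟨hxu, hx0, hxu.trans hu.2⟩
    rw [hset, integral_const_mul]
  have h2 : ∀ v ∈ Ioc (0:ℝ) t, (∫ u, F u v ∂μ) = h v * ∫ u in Ioc v t, g' u := by
    intro v hv
    have : (fun u => F u v) = (Ici v).indicator (fun u => g' u * h v) := by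
      ext u; simp [hF, Set.indicator_apply]
    rw [this, hμ, integral_indicator measurableSet_Ici,
      Measure.restrict_restrict measurableSet_Ici]
    have hset : Ici v ∩ Ioc 0 t = Icc v t := by
      ext x
      simp only [mem_inter_iff, mem_Ici, mem_Ioc, mem_Icc]
      constructor
      · rintro ⟨hx, _, hxt⟩; exact ⟨hx, hxt⟩
      · rintro ⟨hvx, hxt⟩; exact ⟨hvx, lt_of_lt_of_le hv.1 hvx, hxt⟩
    rw [hset, integral_Icc_eq_integral_Ioc, integral_mul_const, mul_comm]
  calc ∫ u in Ioc (0:ℝ) t, (g' u * ∫ v in Ioc (0:ℝ) u, h v)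
      = ∫ u, ∫ v, F u v ∂μ ∂μ := by
        refine (setIntegral_congr_fun measurableSet_Ioc ?_).symm
        intro u hu; exact h1 u hu
    _ = ∫ v, ∫ u, F u v ∂μ ∂μ := hswap
    _ = ∫ v in Ioc (0:ℝ) t, (h v * ∫ u in Ioc v t, g' u) := by
        refine setIntegral_congr_fun measurableSet_Ioc ?_
        intro v hv; exact h2 v hv


lemma ftc_aux (g g' : ℝ → ℝ) (v t : ℝ) (hv : 0 ≤ v) (hvt : v ≤ t)
    (hgc : ContinuousOn g (Icc 0 t))
    (hg'c : ContinuousOn g' (Icc 0 t))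
    (hgd : ∀ x ∈ Ioo (0:ℝ) t, HasDerivAt g (g' x) x) :
    ∫ u in v..t, g' u = g t - g v := by
  refine intervalIntegral.integral_eq_sub_of_hasDeriv_right_of_le hvt
    (hgc.mono ?_) (fun x hx => ((hgd x ⟨lt_of_le_of_lt hv hx.1, hx.2⟩).hasDerivWithinAt)) ?_
  · exact Icc_subset_Icc hv le_rfl
  · exact (hg'c.mono (Icc_subset_Icc hv le_rfl)).intervalIntegrable_of_Icc hvt

lemma ibp (h f g g' : ℝ → ℝ) (a t : ℝ) (ht : 0 ≤ t)
    (hh : IntegrableOn h (Ioc 0 t))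
    (hf : ∀ u, 0 ≤ u → u ≤ t → f u = a - ∫ v in (0:ℝ)..u, h v)
    (hgc : ContinuousOn g (Icc 0 t))
    (hg'c : ContinuousOn g' (Icc 0 t))
    (hgd : ∀ x ∈ Ioo (0:ℝ) t, HasDerivAt g (g' x) x) :
    ∫ u in (0:ℝ)..t, f u * g' u
      = f t * g t - f 0 * g 0 + ∫ u in (0:ℝ)..t, h u * g u := by
  have hhIcc : IntegrableOn h (Icc 0 t) := by
    rwa [integrableOn_Icc_iff_integrableOn_Ioc]
  have hΦc : ContinuousOn (fun u => ∫ v in (0:ℝ)..u, h v) (Icc 0 t) := by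
    have := intervalIntegral.continuousOn_primitive (f := h) (a := 0) (b := t) (μ := volume) hhIcc
    refine this.congr fun x hx => ?_
    rw [intervalIntegral.integral_of_le hx.1]
  have hg'int : IntegrableOn g' (Ioc 0 t) :=
    (hg'c.integrableOn_Icc).mono_set Ioc_subset_Icc_self
  -- rewrite integrand
  have e1 : ∫ u in (0:ℝ)..t, f u * g' u
      = ∫ u in (0:ℝ)..t, (a - ∫ v in (0:ℝ)..u, h v) * g' u := by
    refine intervalIntegral.integral_congr fun u hu => ?_
    rw [uIcc_of_le ht] at hu
    rw [hf u hu.1 hu.2]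
  -- split
  have hint1 : IntervalIntegrable (fun u => (∫ v in (0:ℝ)..u, h v) * g' u) volume 0 t := by
    exact (hΦc.mul hg'c).intervalIntegrable_of_Icc ht
  have hintg' : IntervalIntegrable g' volume 0 t := hg'c.intervalIntegrable_of_Icc ht
  have e2 : ∫ u in (0:ℝ)..t, (a - ∫ v in (0:ℝ)..u, h v) * g' u
      = a * (∫ u in (0:ℝ)..t, g' u) - ∫ u in (0:ℝ)..t, (∫ v in (0:ℝ)..u, h v) * g' u := by
    rw [← intervalIntegral.integral_const_mul, ← intervalIntegral.integral_sub
      (hintg'.const_mul a) hint1]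
    refine intervalIntegral.integral_congr fun u hu => ?_
    ring
  -- Fubini for the double term
  have e3 : ∫ u in (0:ℝ)..t, (∫ v in (0:ℝ)..u, h v) * g' u
      = (∫ v in (0:ℝ)..t, h v) * g t - ∫ v in (0:ℝ)..t, h v * g v := by
    rw [intervalIntegral.integral_of_le ht]
    have : ∀ u ∈ Ioc (0:ℝ) t, (∫ v in (0:ℝ)..u, h v) * g' u
        = g' u * ∫ v in Ioc (0:ℝ) u, h v := by
      intro u hu
      rw [intervalIntegral.integral_of_le hu.1.le, mul_comm]
    rw [setIntegral_congr_fun measurableSet_Ioc this, tri_swap h g' t hh hg'int]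
    have : ∀ v ∈ Ioc (0:ℝ) t, h v * ∫ u in Ioc v t, g' u = h v * g t - h v * g v := by
      intro v hv
      rw [← intervalIntegral.integral_of_le hv.2, ftc_aux g g' v t hv.1.le hv.2 hgc hg'c hgd,
        mul_sub]
    rw [setIntegral_congr_fun measurableSet_Ioc this]
    have hhg : IntegrableOn (fun v => h v * g v) (Ioc 0 t) := by
      have := IntegrableOn.mul_continuousOn hhIcc hgc isCompact_Icc
      exact this.mono_set Ioc_subset_Icc_self
    have hhgt : IntegrableOn (fun v => h v * g t) (Ioc 0 t) := hh.mul_const _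
    rw [integral_sub hhgt hhg, integral_mul_const,
      intervalIntegral.integral_of_le ht, intervalIntegral.integral_of_le ht]
  have hf0 : f 0 = a := by simpa using hf 0 le_rfl ht
  have hft : f t = a - ∫ v in (0:ℝ)..t, h v := hf t ht le_rfl
  have hftc : ∫ u in (0:ℝ)..t, g' u = g t - g 0 :=
    ftc_aux g g' 0 t le_rfl ht hgc hg'c hgd
  rw [e1, e2, e3, hftc, hf0, hft]
  ring

theorem stmt2 (K V V' W W' : ℝ → ℝ)
    (hK : LocallyIntegrableOn K (Ici 0))
    -- V is a weak solution of Y'' + K·Y = 0 on [0,∞), with derivative V'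
    (hV'c : ContinuousOn V' (Ici 0))
    (hVd : ∀ t ∈ Ici (0:ℝ), HasDerivWithinAt V (V' t) (Ici 0) t)
    (hVeq : ∀ t ∈ Ici (0:ℝ), V' t = V' 0 - ∫ u in (0:ℝ)..t, K u * V u)
    -- W is a weak solution of Y'' + K·Y = 0 on [0,∞), with derivative W'
    (hW'c : ContinuousOn W' (Ici 0))
    (hWd : ∀ t ∈ Ici (0:ℝ), HasDerivWithinAt W (W' t) (Ici 0) t)
    (hWeq : ∀ t ∈ Ici (0:ℝ), W' t = W' 0 - ∫ u in (0:ℝ)..t, K u * W u)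
    (hV0 : V 0 = 0) (hV'0 : V' 0 = 1) (hVpos : ∀ t : ℝ, 0 < t → 0 < V t)
    (hW0 : W 0 = 1)
    (hT : ∃ T : ℝ, 0 ≤ T ∧ ∀ t, T ≤ t → 0 < W t) :
    ∀ t : ℝ, 0 ≤ t → 0 < W t := by
  obtain ⟨T, hT0, hTpos⟩ := hT
  have hVc : ContinuousOn V (Ici 0) := fun x hx => (hVd x hx).continuousWithinAt
  have hWc : ContinuousOn W (Ici 0) := fun x hx => (hWd x hx).continuousWithinAt
  -- the Wronskian is identically 1
  have hJ : ∀ t : ℝ, 0 ≤ t → V' t * W t - V t * W' t = 1 := by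
    intro t ht
    have hIcc : Icc (0:ℝ) t ⊆ Ici 0 := Icc_subset_Ici_self
    have hKint : IntegrableOn K (Icc 0 t) :=
      hK.integrableOn_compact_subset hIcc isCompact_Icc
    have hKV : IntegrableOn (fun u => K u * V u) (Ioc 0 t) :=
      (hKint.mul_continuousOn (hVc.mono hIcc) isCompact_Icc).mono_set Ioc_subset_Icc_self
    have hKW : IntegrableOn (fun u => K u * W u) (Ioc 0 t) :=
      (hKint.mul_continuousOn (hWc.mono hIcc) isCompact_Icc).mono_set Ioc_subset_Icc_self
    have hVdd : ∀ x ∈ Ioo (0:ℝ) t, HasDerivAt V (V' x) x := fun x hx =>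
      (hVd x (le_of_lt hx.1)).hasDerivAt (Ici_mem_nhds hx.1)
    have hWdd : ∀ x ∈ Ioo (0:ℝ) t, HasDerivAt W (W' x) x := fun x hx =>
      (hWd x (le_of_lt hx.1)).hasDerivAt (Ici_mem_nhds hx.1)
    have A := ibp (fun u => K u * V u) V' W W' (V' 0) t ht hKV
      (fun u hu _ => hVeq u hu) (hWc.mono hIcc) (hW'c.mono hIcc) hWdd
    have B := ibp (fun u => K u * W u) W' V V' (W' 0) t ht hKW
      (fun u hu _ => hWeq u hu) (hVc.mono hIcc) (hV'c.mono hIcc) hVdd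
    have hsym : ∫ u in (0:ℝ)..t, V' u * W' u = ∫ u in (0:ℝ)..t, W' u * V' u :=
      intervalIntegral.integral_congr fun u _ => mul_comm _ _
    have hsym2 : ∫ u in (0:ℝ)..t, (K u * V u) * W u
        = ∫ u in (0:ℝ)..t, (K u * W u) * V u :=
      intervalIntegral.integral_congr fun u _ => by ring
    rw [hsym2] at A
    rw [← hsym, A] at B
    rw [hV0, hV'0, hW0] at B
    linarith
  -- contradiction argument
  by_contra hcon
  push_neg at hcon
  obtain ⟨t₀, ht₀, hWt₀⟩ := hcon
  set Z : Set ℝ := {s | 0 ≤ s ∧ W s = 0} with hZ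
  have hZclosed : IsClosed Z := by
    have : Z = Ici 0 ∩ W ⁻¹' {0} := by
      ext s; simp [hZ, Set.mem_setOf_eq]
    rw [this]
    exact hWc.preimage_isClosed_of_isClosed isClosed_Ici isClosed_singleton
  have hZne : Z.Nonempty := by
    rcases eq_or_lt_of_le hWt₀ with h0 | hneg
    · exact ⟨t₀, ht₀, h0⟩
    · have ht₀T : t₀ ≤ T := by
        by_contra hc; push_neg at hc
        exact absurd (hTpos t₀ hc.le) (not_lt.mpr hWt₀)
      have : (0:ℝ) ∈ Icc (W t₀) (W T) := ⟨hneg.le, (hTpos T le_rfl).le⟩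
      have := intermediate_value_Icc ht₀T (hWc.mono fun x hx => ht₀.trans hx.1) this
      obtain ⟨s, hs, hWs⟩ := this
      exact ⟨s, ht₀.trans hs.1, hWs⟩
  have hZbdd : BddAbove Z := by
    refine ⟨T, fun s hs => ?_⟩
    by_contra hc; push_neg at hc
    exact absurd (hTpos s hc.le) (by simp [hs.2])
  set b := sSup Z with hb
  have hbZ : b ∈ Z := hZclosed.csSup_mem hZne hZbdd
  have hb0 : 0 ≤ b := hbZ.1
  have hWb : W b = 0 := hbZ.2
  have hbpos : 0 < b := by
    rcases eq_or_lt_of_le hb0 with h | h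
    · exfalso; rw [← h] at hWb; rw [hW0] at hWb; norm_num at hWb
    · exact h
  -- W is positive to the right of b
  have hright : ∀ s, b < s → 0 < W s := by
    intro s hbs
    by_contra hc; push_neg at hc
    rcases eq_or_lt_of_le hc with h0 | hneg
    · exact absurd (le_csSup hZbdd ⟨(hb0.trans hbs.le), h0⟩) (not_le.mpr hbs)
    · have hsT : s ≤ T := by
        by_contra hc'; push_neg at hc'
        exact absurd (hTpos s hc'.le) (not_lt.mpr hc)
      have hs0 : (0:ℝ) ≤ s := hb0.trans hbs.le
      have : (0:ℝ) ∈ Icc (W s) (W T) := ⟨hneg.le, (hTpos T le_rfl).le⟩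
      obtain ⟨z, hz, hWz⟩ := intermediate_value_Icc hsT (hWc.mono fun x hx => hs0.trans hx.1) this
      have : z ≤ b := le_csSup hZbdd ⟨hs0.trans hz.1, hWz⟩
      exact absurd (hbs.trans_le hz.1) (not_lt.mpr this)
  -- right derivative of W at b is nonnegative
  have hW'b : 0 ≤ W' b := by
    have hd : HasDerivWithinAt W (W' b) (Ioi b) b :=
      (hWd b hb0).mono fun x hx => le_of_lt (hb0.trans_lt hx)
    have hslope := hasDerivWithinAt_iff_tendsto_slope.mp hd
    have hIoi : Ioi b \ {b} = Ioi b := by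
      ext x; simp only [mem_diff, mem_Ioi, mem_singleton_iff]
      exact ⟨fun h => h.1, fun h => ⟨h, ne_of_gt h⟩⟩
    rw [hIoi] at hslope
    refine ge_of_tendsto hslope ?_
    filter_upwards [self_mem_nhdsWithin] with x hx
    have hx' : b < x := hx
    rw [slope_def_field]
    have : 0 < W x := hright x hx'
    rw [hWb, sub_zero]
    exact le_of_lt (div_pos this (sub_pos.mpr hx'))
  have hJb := hJ b hb0
  rw [hWb] at hJb
  have hVb : 0 < V b := hVpos b hbpos
  nlinarith
end

section
/- Let 0 < r < π/2, define K : [0,∞) → ℝ by K(t) = 1 for 0 ≤ t ≤ r and K(t) = −1 for t > r, and define Y : [0,∞) → ℝ by Y(t) = e^{−r}·(cos(t − r) − sin(t − r)) for 0 ≤ t ≤ r and Y(t) = e^{−t} for t ≥ r. Then Y is a weak solution of Y'' + K·Y = 0 on [0,∞) (in particular Y is C¹ across t = r), Y(t) = e^{−t} for all t ≥ r, and Y'(0) = e^{−r}·(sin(r) − cos(r)). In particular Y'(0) < 0 if 0 < r < π/4 and Y'(0) > 0 if π/4 < r < π/2. -/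
open Real MeasureTheory Filter Set

lemma derivA (r t : ℝ) : HasDerivAt (fun x => Real.exp (-r) * (Real.cos (x - r) - Real.sin (x - r)))
    (Real.exp (-r) * (-Real.sin (t - r) - Real.cos (t - r))) t := by
  have h1 : HasDerivAt (fun x : ℝ => x - r) 1 t := (hasDerivAt_id t).sub_const r
  have hc : HasDerivAt (fun x : ℝ => Real.cos (x - r)) (-Real.sin (t - r) * 1) t :=
    by have := (Real.hasDerivAt_cos (t - r)).comp t h1; exact this
  have hs : HasDerivAt (fun x : ℝ => Real.sin (x - r)) (Real.cos (t - r) * 1) t :=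
    by have := (Real.hasDerivAt_sin (t - r)).comp t h1; exact this
  have := (hc.sub hs).const_mul (Real.exp (-r))
  exact this.congr_deriv (by ring)

lemma derivB (t : ℝ) : HasDerivAt (fun x : ℝ => Real.exp (-x)) (-Real.exp (-t)) t := by
  have h1 : HasDerivAt (fun x : ℝ => -x) (-1) t := (hasDerivAt_id t).neg
  have := (Real.hasDerivAt_exp (-t)).comp t h1
  exact this.congr_deriv (by ring)

lemma derivG (r t : ℝ) : HasDerivAt (fun x => Real.exp (-r) * (Real.sin (x - r) + Real.cos (x - r)))
    (Real.exp (-r) * (Real.cos (t - r) - Real.sin (t - r))) t := by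
  have h1 : HasDerivAt (fun x : ℝ => x - r) 1 t := (hasDerivAt_id t).sub_const r
  have hc : HasDerivAt (fun x : ℝ => Real.cos (x - r)) (-Real.sin (t - r) * 1) t :=
    by have := (Real.hasDerivAt_cos (t - r)).comp t h1; exact this
  have hs : HasDerivAt (fun x : ℝ => Real.sin (x - r)) (Real.cos (t - r) * 1) t :=
    by have := (Real.hasDerivAt_sin (t - r)).comp t h1; exact this
  have := (hs.add hc).const_mul (Real.exp (-r))
  exact this.congr_deriv (by ring)

theorem stmt3 (r : ℝ) (hr : 0 < r) (hr2 : r < π / 2)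
    (K Y : ℝ → ℝ)
    (hK : ∀ t : ℝ, 0 ≤ t → K t = if t ≤ r then 1 else -1)
    (hY : ∀ t : ℝ, 0 ≤ t →
      Y t = if t ≤ r then Real.exp (-r) * (Real.cos (t - r) - Real.sin (t - r))
            else Real.exp (-t)) :
    (∃ Y' : ℝ → ℝ, ContinuousOn Y' (Ici 0) ∧
      (∀ t ∈ Ici (0:ℝ), HasDerivWithinAt Y (Y' t) (Ici 0) t) ∧
      (∀ t ∈ Ici (0:ℝ), Y' t = Y' 0 - ∫ u in (0:ℝ)..t, K u * Y u) ∧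
      Y' 0 = Real.exp (-r) * (Real.sin r - Real.cos r) ∧
      (r < π / 4 → Y' 0 < 0) ∧ (π / 4 < r → 0 < Y' 0)) ∧
    (∀ t : ℝ, r ≤ t → Y t = Real.exp (-t)) := by
  have hr0 : (0:ℝ) ≤ r := hr.le
  set A : ℝ → ℝ := fun x => Real.exp (-r) * (Real.cos (x - r) - Real.sin (x - r)) with hAdef
  set F : ℝ → ℝ := fun x => if x ≤ r then A x else Real.exp (-x) with hFdef
  set Yd : ℝ → ℝ := fun x =>
    if x ≤ r then Real.exp (-r) * (-Real.sin (x - r) - Real.cos (x - r)) else -Real.exp (-x)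
    with hYddef
  have hYF : ∀ t : ℝ, 0 ≤ t → Y t = F t := hY
  -- F has derivative Yd everywhere
  have hFderiv : ∀ t : ℝ, HasDerivAt F (Yd t) t := by
    intro t
    rcases lt_trichotomy t r with h | h | h
    · have heq : F =ᶠ[nhds t] A := by
        filter_upwards [Iio_mem_nhds h] with x hx
        simp only [hFdef, if_pos (le_of_lt (mem_Iio.mp hx))]
      have := (derivA r t).congr_of_eventuallyEq heq
      simpa only [hYddef, if_pos h.le] using this
    · subst h
      have h1 : HasDerivWithinAt F (Real.exp (-t) * (-Real.sin (t - t) - Real.cos (t - t)))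
          (Iic t) t := by
        refine (derivA t t).hasDerivWithinAt.congr (fun x hx => ?_) ?_
        · simp only [hFdef, hAdef, if_pos (mem_Iic.mp hx)]
        · simp only [hFdef, hAdef, if_pos le_rfl]
      have h2 : HasDerivWithinAt F (-Real.exp (-t)) (Ici t) t := by
        refine (derivB t).hasDerivWithinAt.congr (fun x hx => ?_) ?_
        · rcases eq_or_lt_of_le (mem_Ici.mp hx) with h | h
          · simp [hFdef, hAdef, ← h]
          · simp only [hFdef, if_neg (not_le.mpr h)]
        · simp [hFdef, hAdef]
      have h1' : HasDerivWithinAt F (-Real.exp (-t)) (Iic t) t := by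
        simpa using h1
      have := h1'.union h2
      rw [Iic_union_Ici, hasDerivWithinAt_univ] at this
      simpa [hYddef] using this
    · have heq : F =ᶠ[nhds t] (fun x => Real.exp (-x)) := by
        filter_upwards [Ioi_mem_nhds h] with x hx
        simp only [hFdef, if_neg (not_le.mpr (mem_Ioi.mp hx))]
      have := (derivB t).congr_of_eventuallyEq heq
      simpa only [hYddef, if_neg (not_le.mpr h)] using this
  -- continuity of Yd
  have hYdcont : Continuous Yd := by
    apply Continuous.if_le
    · fun_prop
    · fun_prop
    · exact continuous_id
    · exact continuous_const
    · intro x hx; subst hx; simp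
  -- value at 0
  have hYd0 : Yd 0 = Real.exp (-r) * (Real.sin r - Real.cos r) := by
    simp only [hYddef, if_pos hr0, zero_sub, Real.sin_neg, Real.cos_neg, neg_neg]
  -- integrability pieces
  have hintA : IntervalIntegrable (fun u => K u * Y u) volume 0 r := by
    apply ContinuousOn.intervalIntegrable
    rw [uIcc_of_le hr0]
    apply ContinuousOn.congr (f := A)
    · fun_prop
    · intro u hu
      show K u * Y u = A u
      rw [hK u hu.1, hY u hu.1, if_pos hu.2, if_pos hu.2, one_mul]
  -- main integral identity
  refine ⟨⟨Yd, hYdcont.continuousOn, ?_, ?_, hYd0, ?_, ?_⟩, ?_⟩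
  · intro t ht
    exact ((hFderiv t).hasDerivWithinAt).congr (fun x hx => hYF x hx) (hYF t ht)
  · intro t ht
    have ht0 : (0:ℝ) ≤ t := ht
    rcases le_or_gt t r with h | h
    · -- integral over [0,t] equals integral of A
      have hcong : ∫ u in (0:ℝ)..t, K u * Y u = ∫ u in (0:ℝ)..t, A u := by
        apply intervalIntegral.integral_congr
        intro u hu
        rw [uIcc_of_le ht0] at hu
        have hur : u ≤ r := hu.2.trans h
        show K u * Y u = A u
        rw [hK u hu.1, hY u hu.1, if_pos hur, if_pos hur, one_mul]
      have hval : ∫ u in (0:ℝ)..t, A u =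
          (Real.exp (-r) * (Real.sin (t - r) + Real.cos (t - r))) -
          (Real.exp (-r) * (Real.sin (0 - r) + Real.cos (0 - r))) := by
        apply intervalIntegral.integral_eq_sub_of_hasDerivAt
        · intro u _; exact derivG r u
        · apply ContinuousOn.intervalIntegrable; fun_prop
      rw [hcong, hval, hYd0]
      simp only [hYddef, if_pos h, zero_sub, Real.sin_neg, Real.cos_neg]
      ring
    · -- t > r : split integral
      have hintB : IntervalIntegrable (fun u => K u * Y u) volume r t := by
        rw [intervalIntegrable_iff, uIoc_of_le h.le]
        apply MeasureTheory.IntegrableOn.congr_fun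
            (f := fun u : ℝ => -Real.exp (-u))
        · apply Continuous.integrableOn_Ioc; fun_prop
        · intro u hu
          have hur : r < u := hu.1
          have hu0 : (0:ℝ) ≤ u := (hr.trans hur).le
          show -Real.exp (-u) = K u * Y u
          rw [hK u hu0, hY u hu0, if_neg (not_le.mpr hur), if_neg (not_le.mpr hur)]
          ring
        · exact measurableSet_Ioc
      have hsplit : ∫ u in (0:ℝ)..t, K u * Y u =
          (∫ u in (0:ℝ)..r, K u * Y u) + ∫ u in r..t, K u * Y u :=
        (intervalIntegral.integral_add_adjacent_intervals hintA hintB).symm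
      have hval1 : ∫ u in (0:ℝ)..r, K u * Y u =
          (Real.exp (-r) * (Real.sin (r - r) + Real.cos (r - r))) -
          (Real.exp (-r) * (Real.sin (0 - r) + Real.cos (0 - r))) := by
        have hcong : ∫ u in (0:ℝ)..r, K u * Y u = ∫ u in (0:ℝ)..r, A u := by
          apply intervalIntegral.integral_congr
          intro u hu
          rw [uIcc_of_le hr0] at hu
          show K u * Y u = A u
          rw [hK u hu.1, hY u hu.1, if_pos hu.2, if_pos hu.2, one_mul]
        rw [hcong]
        apply intervalIntegral.integral_eq_sub_of_hasDerivAt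
          (f := fun x => Real.exp (-r) * (Real.sin (x - r) + Real.cos (x - r)))
        · intro u _; exact derivG r u
        · apply ContinuousOn.intervalIntegrable; fun_prop
      have hval2 : ∫ u in r..t, K u * Y u = Real.exp (-t) - Real.exp (-r) := by
        have hcong : ∫ u in r..t, K u * Y u = ∫ u in r..t, -Real.exp (-u) := by
          apply intervalIntegral.integral_congr_ae
          apply MeasureTheory.ae_of_all
          intro u hu
          rw [uIoc_of_le h.le] at hu
          have hur : r < u := hu.1
          have hu0 : (0:ℝ) ≤ u := (hr.trans hur).le
          show K u * Y u = -Real.exp (-u)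
          rw [hK u hu0, hY u hu0, if_neg (not_le.mpr hur), if_neg (not_le.mpr hur)]
          ring
        rw [hcong]
        apply intervalIntegral.integral_eq_sub_of_hasDerivAt
        · intro u _; exact derivB u
        · apply ContinuousOn.intervalIntegrable; fun_prop
      rw [hsplit, hval1, hval2, hYd0]
      simp only [hYddef, if_neg (not_le.mpr h), zero_sub, sub_self,
        Real.sin_neg, Real.cos_neg, Real.sin_zero, Real.cos_zero]
      ring
  · intro h4
    rw [hYd0]
    apply mul_neg_of_pos_of_neg (Real.exp_pos _)
    rw [sub_neg]
    calc Real.sin r < Real.sin (π / 2 - r) := by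
          apply Real.strictMonoOn_sin
          · constructor <;> nlinarith [Real.pi_pos]
          · constructor <;> nlinarith [Real.pi_pos]
          · linarith
      _ = Real.cos r := Real.sin_pi_div_two_sub r
  · intro h4
    rw [hYd0]
    apply mul_pos (Real.exp_pos _)
    rw [sub_pos]
    calc Real.cos r = Real.sin (π / 2 - r) := (Real.sin_pi_div_two_sub r).symm
      _ < Real.sin r := by
          apply Real.strictMonoOn_sin
          · constructor <;> nlinarith [Real.pi_pos]
          · constructor <;> nlinarith [Real.pi_pos]
          · linarith
  · intro t htr
    have ht0 : (0:ℝ) ≤ t := hr0.trans htr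
    rcases eq_or_lt_of_le htr with h | h
    · rw [hY t ht0, if_pos h.ge, ← h]
      simp
    · rw [hY t ht0, if_neg (not_le.mpr h)]
end

section
/- Let I ⊆ ℝ be an open interval, let f : I → ℝ be twice differentiable with f''(t) = f(t) and f(t) > 0 for all t ∈ I, let t₀ ∈ I, and let b : ℝ → ℝ be twice differentiable with b''(x) = −b(x) for all x. Then the function Y(t) := f(t)·b( sinh(t − t₀) / (f(t₀)·f(t)) ) is twice differentiable on I and satisfies Y''(t) + (−1 + f(t)^{−4})·Y(t) = 0 for all t ∈ I. -/
open Real Set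

theorem stmt4 (a c t₀ : ℝ) (f f' bb bb' : ℝ → ℝ)
    (ht₀ : t₀ ∈ Ioo a c)
    -- f is twice differentiable on I = (a,c) with f'' = f and f > 0
    (hfd : ∀ t ∈ Ioo a c, HasDerivAt f (f' t) t)
    (hfd2 : ∀ t ∈ Ioo a c, HasDerivAt f' (f t) t)
    (hfpos : ∀ t ∈ Ioo a c, 0 < f t)
    -- b is twice differentiable on ℝ with b'' = −b
    (hbd : ∀ x : ℝ, HasDerivAt bb (bb' x) x)
    (hbd2 : ∀ x : ℝ, HasDerivAt bb' (-bb x) x) :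
    -- Y(t) = f(t)·b( sinh(t−t₀)/(f(t₀)·f(t)) ) is twice differentiable on I and
    -- satisfies Y'' + (−1 + f(t)⁻⁴)·Y = 0 there
    ∃ Y' : ℝ → ℝ, ∀ t ∈ Ioo a c,
      HasDerivAt (fun u => f u * bb (Real.sinh (u - t₀) / (f t₀ * f u))) (Y' t) t ∧
      HasDerivAt Y'
        (-((-1 + ((f t)⁻¹) ^ 4) * (f t * bb (Real.sinh (t - t₀) / (f t₀ * f t))))) t := by
  set g : ℝ → ℝ := fun u => Real.sinh (u - t₀) / (f t₀ * f u) with hg_def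
  set W : ℝ → ℝ := fun u => Real.cosh (u - t₀) * f u - Real.sinh (u - t₀) * f' u with hW_def
  have hconv : Convex ℝ (Ioo a c) := convex_Ioo a c
  -- derivative of sinh(u - t₀)
  have hsinh : ∀ t : ℝ, HasDerivAt (fun u => Real.sinh (u - t₀)) (Real.cosh (t - t₀)) t := by
    intro t
    simpa [Function.comp_def] using (Real.hasDerivAt_sinh (t - t₀)).comp t ((hasDerivAt_id t).sub_const t₀)
  have hcosh : ∀ t : ℝ, HasDerivAt (fun u => Real.cosh (u - t₀)) (Real.sinh (t - t₀)) t := by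
    intro t
    simpa [Function.comp_def] using (Real.hasDerivAt_cosh (t - t₀)).comp t ((hasDerivAt_id t).sub_const t₀)
  -- W has derivative zero on Ioo a c
  have hWd : ∀ t ∈ Ioo a c, HasDerivAt W 0 t := by
    intro t ht
    have := ((hcosh t).mul (hfd t ht)).sub ((hsinh t).mul (hfd2 t ht))
    convert this using 1
    pick_goal -1
    ring
    all_goals rfl
  -- W is constant, equal to f t₀
  have hW : ∀ t ∈ Ioo a c, W t = f t₀ := by
    intro t ht
    have h0 : ‖W t - W t₀‖ ≤ 0 * ‖t - t₀‖ :=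
      Convex.norm_image_sub_le_of_norm_hasDerivWithin_le
        (fun x hx => (hWd x hx).hasDerivWithinAt) (fun x _ => by norm_num) hconv ht₀ ht
    have : W t = W t₀ := by
      have := h0
      simp only [zero_mul] at this
      have := norm_le_zero_iff.mp this
      linarith [sub_eq_zero.mp this]
    rw [this, hW_def]
    simp
  have hft₀ : (0:ℝ) < f t₀ := hfpos t₀ ht₀
  -- g has derivative (f t)⁻² on Ioo a c
  have hg : ∀ t ∈ Ioo a c, HasDerivAt g ((f t)⁻¹ ^ 2) t := by
    intro t ht
    have hft : (0:ℝ) < f t := hfpos t ht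
    have hden : f t₀ * f t ≠ 0 := by positivity
    have h := (hsinh t).div ((hfd t ht).const_mul (f t₀)) hden
    convert h using 1
    pick_goal -1
    have hWt := hW t ht
    simp only [hW_def] at hWt
    field_simp
    nlinarith [hWt, sq_nonneg (f t), sq_nonneg (f t₀)]
    all_goals rfl
  refine ⟨fun u => f' u * bb (g u) + bb' (g u) * (f u)⁻¹, fun t ht => ?_⟩
  have hft : (0:ℝ) < f t := hfpos t ht
  have hftne : f t ≠ 0 := ne_of_gt hft
  have hgb : HasDerivAt (fun u => bb (g u)) (bb' (g t) * ((f t)⁻¹ ^ 2)) t :=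
    (hbd (g t)).comp t (hg t ht)
  have hgb' : HasDerivAt (fun u => bb' (g u)) (-bb (g t) * ((f t)⁻¹ ^ 2)) t :=
    (hbd2 (g t)).comp t (hg t ht)
  constructor
  · have h := (hfd t ht).mul hgb
    convert h using 1
    pick_goal -1
    field_simp
    all_goals rfl
  · have h1 := (hfd2 t ht).mul hgb
    have h2 := hgb'.mul ((hfd t ht).inv hftne)
    have h := h1.add h2
    convert h using 1
    pick_goal -1
    simp only [Pi.inv_apply, g]
    field_simp
    ring
    all_goals rfl
end

section
/- Let s ≥ π/4. Then the functions Y(t) = cosh(t)·cos(√2·e^{−s+π/4}·tanh(t)) and Z(t) = (√2/2)·e^{s−π/4}·cosh(t)·sin(√2·e^{−s+π/4}·tanh(t)) are smooth on ℝ and both satisfy the equation X''(t) + (−1 + 2·e^{−2s+π/2}·sech⁴(t))·X(t) = 0 for all t ∈ ℝ, with Y(0) = 1, Y'(0) = 0, Z(0) = 0, Z'(0) = 1. Moreover Y(t) > 0 for all t ∈ ℝ. -/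
open Real

private lemma tanh_hasDerivAt (t : ℝ) :
    HasDerivAt Real.tanh (((Real.cosh t)⁻¹) ^ 2) t := by
  have hc := (Real.cosh_pos t).ne'
  have h := (Real.hasDerivAt_sinh t).div (Real.hasDerivAt_cosh t) hc
  have he : Real.tanh = fun x => Real.sinh x / Real.cosh x := by
    funext x; exact Real.tanh_eq_sinh_div_cosh x
  rw [he]
  refine h.congr_deriv ?_
  have := Real.cosh_sq_sub_sinh_sq t
  field_simp
  nlinarith [this]

private lemma abs_tanh_lt_one (t : ℝ) : |Real.tanh t| < 1 := by
  have hc := Real.cosh_pos t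
  have h1 := Real.cosh_sq_sub_sinh_sq t
  rw [Real.tanh_eq_sinh_div_cosh, abs_div, abs_of_pos hc, div_lt_one hc]
  nlinarith [abs_nonneg (Real.sinh t), sq_abs (Real.sinh t)]

private lemma cosh_inv_hasDerivAt (t : ℝ) :
    HasDerivAt (fun x => (Real.cosh x)⁻¹) (-(Real.sinh t) * ((Real.cosh t)⁻¹) ^ 2) t := by
  have hc := (Real.cosh_pos t).ne'
  have h := (Real.hasDerivAt_cosh t).inv hc
  refine h.congr_deriv ?_
  field_simp

theorem stmt5 (s : ℝ) (hs : π / 4 ≤ s)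
    (Y Z : ℝ → ℝ)
    (hY : Y = fun t => Real.cosh t *
      Real.cos (Real.sqrt 2 * Real.exp (-s + π / 4) * Real.tanh t))
    (hZ : Z = fun t => (Real.sqrt 2 / 2) * Real.exp (s - π / 4) * Real.cosh t *
      Real.sin (Real.sqrt 2 * Real.exp (-s + π / 4) * Real.tanh t)) :
    ContDiff ℝ (⊤ : ℕ∞) Y ∧ ContDiff ℝ (⊤ : ℕ∞) Z ∧
    (∀ t : ℝ,
      deriv (deriv Y) t + (-1 + 2 * Real.exp (-2 * s + π / 2) * ((Real.cosh t)⁻¹) ^ 4) * Y t = 0) ∧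
    (∀ t : ℝ,
      deriv (deriv Z) t + (-1 + 2 * Real.exp (-2 * s + π / 2) * ((Real.cosh t)⁻¹) ^ 4) * Z t = 0) ∧
    Y 0 = 1 ∧ deriv Y 0 = 0 ∧ Z 0 = 0 ∧ deriv Z 0 = 1 ∧
    ∀ t : ℝ, 0 < Y t := by
  set a : ℝ := Real.sqrt 2 * Real.exp (-s + π / 4) with ha_def
  set c : ℝ := Real.sqrt 2 / 2 * Real.exp (s - π / 4) with hc_def
  have h2 : (Real.sqrt 2) ^ 2 = 2 := Real.sq_sqrt (by norm_num)
  have ha2 : a ^ 2 = 2 * Real.exp (-2 * s + π / 2) := by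
    rw [ha_def, mul_pow, h2, sq, ← Real.exp_add]
    ring_nf
  have hca : c * a = 1 := by
    have h0 : c * a = Real.sqrt 2 * Real.sqrt 2 / 2 * Real.exp (s - π / 4 + (-s + π / 4)) := by
      rw [Real.exp_add, ha_def, hc_def]; ring
    rw [h0, show s - π / 4 + (-s + π / 4) = 0 by ring, Real.exp_zero]
    nlinarith [h2, Real.sq_sqrt (show (0:ℝ) ≤ 2 by norm_num), sq (Real.sqrt 2)]
  -- contDiff of tanh
  have htanh : ContDiff ℝ (⊤ : ℕ∞) Real.tanh := by
    have he : Real.tanh = fun x => Real.sinh x / Real.cosh x := by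
      funext x; exact Real.tanh_eq_sinh_div_cosh x
    rw [he]
    exact Real.contDiff_sinh.div Real.contDiff_cosh (fun x => (Real.cosh_pos x).ne')
  have hu : ContDiff ℝ (⊤ : ℕ∞) (fun t => a * Real.tanh t) := contDiff_const.mul htanh
  have hYc : ContDiff ℝ (⊤ : ℕ∞) Y := by
    rw [hY]; exact Real.contDiff_cosh.mul (Real.contDiff_cos.comp hu)
  have hZc : ContDiff ℝ (⊤ : ℕ∞) Z := by
    rw [hZ]
    exact (contDiff_const.mul Real.contDiff_cosh).mul (Real.contDiff_sin.comp hu)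
  -- first derivatives
  have hu' : ∀ t, HasDerivAt (fun t => a * Real.tanh t) (a * ((Real.cosh t)⁻¹) ^ 2) t :=
    fun t => (tanh_hasDerivAt t).const_mul a
  have hY1 : ∀ t, HasDerivAt Y
      (Real.sinh t * Real.cos (a * Real.tanh t)
        - a * (Real.cosh t)⁻¹ * Real.sin (a * Real.tanh t)) t := by
    intro t
    rw [hY]
    have h := (Real.hasDerivAt_cosh t).mul
      ((Real.hasDerivAt_cos (a * Real.tanh t)).comp t (hu' t))
    simp only [Function.comp_def] at h
    refine h.congr_deriv ?_
    have hc := (Real.cosh_pos t).ne'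
    field_simp
    ring
  have hZ1 : ∀ t, HasDerivAt Z
      (c * Real.sinh t * Real.sin (a * Real.tanh t)
        + c * a * (Real.cosh t)⁻¹ * Real.cos (a * Real.tanh t)) t := by
    intro t
    rw [hZ]
    have h := ((Real.hasDerivAt_cosh t).mul
      ((Real.hasDerivAt_sin (a * Real.tanh t)).comp t (hu' t))).const_mul c
    simp only [Function.comp_def] at h
    convert h using 1
    · rfl
    · rfl
    · funext x; simp only [Pi.mul_apply, Pi.add_apply, Pi.sub_apply]; ring
    · have hc := (Real.cosh_pos t).ne'
      field_simp
  -- second derivatives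
  have hY2 : ∀ t, HasDerivAt (fun t => Real.sinh t * Real.cos (a * Real.tanh t)
        - a * (Real.cosh t)⁻¹ * Real.sin (a * Real.tanh t))
      ((1 - a ^ 2 * ((Real.cosh t)⁻¹) ^ 4) * Y t) t := by
    intro t
    have h1 := (Real.hasDerivAt_sinh t).mul
      ((Real.hasDerivAt_cos (a * Real.tanh t)).comp t (hu' t))
    have h2' := ((cosh_inv_hasDerivAt t).mul
      ((Real.hasDerivAt_sin (a * Real.tanh t)).comp t (hu' t))).const_mul a
    have h := h1.sub h2'
    simp only [Function.comp_def] at h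
    convert h using 1
    · rfl
    · rfl
    · funext x; simp only [Pi.mul_apply, Pi.add_apply, Pi.sub_apply]; ring
    rw [hY]
    have hc := (Real.cosh_pos t).ne'
    field_simp
    ring
  have hZ2 : ∀ t, HasDerivAt (fun t => c * Real.sinh t * Real.sin (a * Real.tanh t)
        + c * a * (Real.cosh t)⁻¹ * Real.cos (a * Real.tanh t))
      ((1 - a ^ 2 * ((Real.cosh t)⁻¹) ^ 4) * Z t) t := by
    intro t
    have h1 := ((Real.hasDerivAt_sinh t).mul
      ((Real.hasDerivAt_sin (a * Real.tanh t)).comp t (hu' t))).const_mul c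
    have h2' := ((cosh_inv_hasDerivAt t).mul
      ((Real.hasDerivAt_cos (a * Real.tanh t)).comp t (hu' t))).const_mul (c * a)
    have h := h1.add h2'
    simp only [Function.comp_def] at h
    convert h using 1
    · rfl
    · rfl
    · funext x; simp only [Pi.mul_apply, Pi.add_apply, Pi.sub_apply]; ring
    · rw [hZ]
      have hc := (Real.cosh_pos t).ne'
      field_simp
      ring
  have hdY : deriv Y = fun t => Real.sinh t * Real.cos (a * Real.tanh t)
      - a * (Real.cosh t)⁻¹ * Real.sin (a * Real.tanh t) :=
    funext fun t => (hY1 t).deriv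
  have hdZ : deriv Z = fun t => c * Real.sinh t * Real.sin (a * Real.tanh t)
      + c * a * (Real.cosh t)⁻¹ * Real.cos (a * Real.tanh t) :=
    funext fun t => (hZ1 t).deriv
  -- positivity of Y
  have hpos : ∀ t, 0 < Y t := by
    intro t
    rw [hY]
    have hc := Real.cosh_pos t
    have ha_pos : 0 < a := mul_pos (Real.sqrt_pos.mpr (by norm_num)) (Real.exp_pos _)
    have ha_le : a ≤ Real.sqrt 2 := by
      rw [ha_def]
      nlinarith [Real.exp_le_one_iff.mpr (by linarith : -s + π / 4 ≤ 0),
        Real.sqrt_nonneg 2]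
    have hsqrt2 : Real.sqrt 2 < π / 2 := by
      nlinarith [Real.pi_gt_three, Real.sqrt_nonneg 2]
    have hlt : |a * Real.tanh t| < π / 2 := by
      rw [abs_mul, abs_of_pos ha_pos]
      calc a * |Real.tanh t| ≤ a * 1 := by
            have := (_root_.abs_tanh_lt_one t).le
            nlinarith
        _ < π / 2 := by linarith
    have := Real.cos_pos_of_mem_Ioo (x := a * Real.tanh t)
      ⟨by linarith [abs_lt.mp hlt |>.1], (abs_lt.mp hlt).2⟩
    exact mul_pos hc this
  refine ⟨hYc, hZc, ?_, ?_, ?_, ?_, ?_, ?_, hpos⟩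
  · intro t
    rw [hdY, (hY2 t).deriv, ← ha2]
    ring
  · intro t
    rw [hdZ, (hZ2 t).deriv, ← ha2]
    ring
  · rw [hY]; simp
  · rw [hdY]; simp
  · rw [hZ]; simp
  · rw [hdZ]; simp [hca]
end

section
/- Let 0 < s < π/4 and write ℓ = ℓ(s). Define U : ℝ → ℝ by U(t) = cos(t) for |t| ≤ ℓ and U(t) = (√2/2)·(1/sin(s))·F(|t|,s)·cos(Θ(|t|,s)) for |t| ≥ ℓ. Then U is C¹ on ℝ (in particular the two formulas and their first derivatives agree at |t| = ℓ), U(0) = 1, U'(0) = 0, and U''(t) + K(t)·U(t) = 0 for all t with |t| ≠ ℓ, where K(t) = 1 for |t| < ℓ and K(t) = −1 + 4·sin²(s)·F(|t|,s)^{−4} for |t| > ℓ. -/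
open Real

/-- `ℓ(s) = arccos( (√2/2)/cos s )`. -/
noncomputable def ell (s : ℝ) : ℝ := Real.arccos ((Real.sqrt 2 / 2) / Real.cos s)

/-- `F(t,s) = cosh(t − ℓ(s)) + √(cos 2s)·sinh(t − ℓ(s))`. -/
noncomputable def Ffun (t s : ℝ) : ℝ :=
  Real.cosh (t - ell s) + Real.sqrt (Real.cos (2 * s)) * Real.sinh (t - ell s)

/-- `Θ(t,s) = 2 sin s · sinh(t − ℓ(s)) / F(t,s) + arccos(tan s)`. -/
noncomputable def Theta (t s : ℝ) : ℝ :=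
  2 * Real.sin s * Real.sinh (t - ell s) / Ffun t s + Real.arccos (Real.tan s)

open Real Set Filter

noncomputable def Fd (t s : ℝ) : ℝ :=
  Real.sinh (t - ell s) + Real.sqrt (Real.cos (2 * s)) * Real.cosh (t - ell s)

noncomputable def Vv (t s : ℝ) : ℝ :=
  Real.sqrt 2 / 2 * (Real.sin s)⁻¹ * Ffun t s * Real.cos (Theta t s)

noncomputable def Vd (t s : ℝ) : ℝ :=
  Real.sqrt 2 / 2 * (Real.sin s)⁻¹ *
    (Fd t s * Real.cos (Theta t s) - 2 * Real.sin s * Real.sin (Theta t s) / Ffun t s)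

noncomputable def Dfun (t s : ℝ) : ℝ :=
  if t ≤ ell s then (if -ell s ≤ t then -Real.sin t else -(Vd (-t) s)) else Vd t s

section facts
variable {s : ℝ} (hs : 0 < s) (hs' : s < π / 4)
include hs hs'

lemma sinpos : 0 < Real.sin s := Real.sin_pos_of_pos_of_lt_pi hs (by nlinarith [Real.pi_pos])

lemma cospos : 0 < Real.cos s := Real.cos_pos_of_mem_Ioo ⟨by nlinarith [Real.pi_pos], by nlinarith [Real.pi_pos]⟩

lemma cos2pos : 0 < Real.cos (2 * s) := Real.cos_pos_of_mem_Ioo ⟨by nlinarith [Real.pi_pos], by linarith⟩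

lemma a_sq : Real.sqrt (Real.cos (2 * s)) ^ 2 = Real.cos (2 * s) :=
  Real.sq_sqrt (cos2pos hs hs').le

lemma a_lt_one : Real.sqrt (Real.cos (2 * s)) < 1 := by
  rw [show (1:ℝ) = Real.sqrt 1 by simp]
  apply Real.sqrt_lt_sqrt (cos2pos hs hs').le
  calc Real.cos (2 * s) < Real.cos 0 := by
        apply Real.cos_lt_cos_of_nonneg_of_le_pi le_rfl (by nlinarith [Real.pi_pos]) (by linarith)
    _ = 1 := Real.cos_zero

lemma cosgt : Real.sqrt 2 / 2 < Real.cos s := by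
  have h2 : Real.cos (2*s) = 2 * Real.cos s ^ 2 - 1 := Real.cos_two_mul s
  have hc := cospos hs hs'
  have hcc := cos2pos hs hs'
  have hsq : (Real.sqrt 2) ^ 2 = 2 := Real.sq_sqrt (by norm_num)
  nlinarith [Real.sqrt_nonneg 2]

lemma Fpos (t : ℝ) : 0 < Ffun t s := by
  set x := t - ell s
  have e1 : Real.cosh x + Real.sinh x = Real.exp x := Real.cosh_add_sinh x
  have e2 : Real.cosh x - Real.sinh x = Real.exp (-x) := Real.cosh_sub_sinh x
  have ha0 : (0:ℝ) ≤ Real.sqrt (Real.cos (2*s)) := Real.sqrt_nonneg _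
  have ha1 := a_lt_one hs hs'
  have h1 : 0 < (1 + Real.sqrt (Real.cos (2*s))) * (Real.cosh x + Real.sinh x) := by
    rw [e1]; exact mul_pos (by linarith) (Real.exp_pos x)
  have h2 : 0 < (1 - Real.sqrt (Real.cos (2*s))) * (Real.cosh x - Real.sinh x) := by
    rw [e2]; exact mul_pos (by linarith) (Real.exp_pos (-x))
  show 0 < Real.cosh x + Real.sqrt (Real.cos (2*s)) * Real.sinh x
  nlinarith

lemma cos_ell : Real.cos (ell s) = Real.sqrt 2 / 2 / Real.cos s := by
  apply Real.cos_arccos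
  · have h := cospos hs hs'
    have : (0:ℝ) ≤ Real.sqrt 2 / 2 / Real.cos s := by positivity
    linarith
  · rw [div_le_one (cospos hs hs')]; exact (cosgt hs hs').le

lemma ell_pos : 0 < ell s :=
  Real.arccos_pos.mpr (by rw [div_lt_one (cospos hs hs')]; exact cosgt hs hs')

lemma sin_ell : Real.sin (ell s) = Real.sqrt 2 / 2 * (Real.sqrt (Real.cos (2 * s)) / Real.cos s) := by
  rw [ell, Real.sin_arccos]
  have hcpos := cospos hs hs'
  rw [show 1 - (Real.sqrt 2 / 2 / Real.cos s) ^ 2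
      = (Real.sqrt 2 / 2 * (Real.sqrt (Real.cos (2 * s)) / Real.cos s)) ^ 2 from ?_,
    Real.sqrt_sq (by positivity)]
  have hc := (cospos hs hs').ne'
  have h2 : (Real.sqrt 2) ^ 2 = 2 := Real.sq_sqrt (by norm_num)
  have ha := a_sq hs hs'
  have hcos2 : Real.cos (2*s) = 2 * Real.cos s ^2 - 1 := Real.cos_two_mul s
  field_simp
  nlinarith [cospos hs hs']

lemma tan_lt_one : Real.tan s < 1 := by
  rw [← Real.tan_pi_div_four]
  exact Real.tan_lt_tan_of_nonneg_of_lt_pi_div_two hs.le (by linarith [Real.pi_pos]) hs'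

lemma tan_nonneg' : 0 ≤ Real.tan s := by
  rw [Real.tan_eq_sin_div_cos]
  exact div_nonneg (sinpos hs hs').le (cospos hs hs').le

lemma cos_arccos_tan : Real.cos (Real.arccos (Real.tan s)) = Real.tan s :=
  Real.cos_arccos (by linarith [tan_nonneg' hs hs']) (tan_lt_one hs hs').le

lemma sin_arccos_tan :
    Real.sin (Real.arccos (Real.tan s)) = Real.sqrt (Real.cos (2 * s)) / Real.cos s := by
  have hcpos := cospos hs hs'
  rw [Real.sin_arccos]
  rw [show 1 - Real.tan s ^ 2 = (Real.sqrt (Real.cos (2 * s)) / Real.cos s) ^ 2 from ?_,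
    Real.sqrt_sq (by positivity)]
  have hc := (cospos hs hs').ne'
  have ha := a_sq hs hs'
  have hcos2 : Real.cos (2*s) = 2 * Real.cos s ^2 - 1 := Real.cos_two_mul s
  have hpy := Real.sin_sq_add_cos_sq s
  rw [Real.tan_eq_sin_div_cos]
  field_simp
  nlinarith

omit hs hs' in lemma F_ell : Ffun (ell s) s = 1 := by simp [Ffun]

omit hs hs' in lemma Fd_ell : Fd (ell s) s = Real.sqrt (Real.cos (2 * s)) := by simp [Fd]

omit hs hs' in lemma Theta_ell : Theta (ell s) s = Real.arccos (Real.tan s) := by simp [Theta]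

lemma V_ell : Vv (ell s) s = Real.cos (ell s) := by
  rw [Vv, F_ell, Theta_ell, cos_arccos_tan hs hs', cos_ell hs hs',
    Real.tan_eq_sin_div_cos]
  have h1 := (sinpos hs hs').ne'
  have h2 := (cospos hs hs').ne'
  field_simp

lemma Vd_ell : Vd (ell s) s = -Real.sin (ell s) := by
  rw [Vd, F_ell, Fd_ell, Theta_ell, cos_arccos_tan hs hs', sin_arccos_tan hs hs',
    sin_ell hs hs', Real.tan_eq_sin_div_cos]
  have h1 := (sinpos hs hs').ne'
  have h2 := (cospos hs hs').ne'
  field_simp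
  ring

end facts

section derivs
variable {s : ℝ} (hs : 0 < s) (hs' : s < π / 4)

lemma hasDerivAt_sinh' (t : ℝ) :
    HasDerivAt (fun t : ℝ => Real.sinh (t - ell s)) (Real.cosh (t - ell s)) t := by
  have h1 : HasDerivAt (fun t : ℝ => t - ell s) 1 t := (hasDerivAt_id t).sub_const _
  have h2 := (Real.hasDerivAt_sinh (t - ell s)).comp t h1
  rw [mul_one] at h2
  exact h2

lemma hasDerivAt_cosh' (t : ℝ) :
    HasDerivAt (fun t : ℝ => Real.cosh (t - ell s)) (Real.sinh (t - ell s)) t := by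
  have h1 : HasDerivAt (fun t : ℝ => t - ell s) 1 t := (hasDerivAt_id t).sub_const _
  have h2 := (Real.hasDerivAt_cosh (t - ell s)).comp t h1
  rw [mul_one] at h2
  exact h2

lemma hasDerivAt_F (t : ℝ) : HasDerivAt (fun t => Ffun t s) (Fd t s) t := by
  unfold Ffun Fd
  exact (hasDerivAt_cosh' t).add ((hasDerivAt_sinh' t).const_mul _)

lemma hasDerivAt_Fd (t : ℝ) : HasDerivAt (fun t => Fd t s) (Ffun t s) t := by
  unfold Ffun Fd
  exact (hasDerivAt_sinh' t).add ((hasDerivAt_cosh' t).const_mul _)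

include hs hs'

lemma hasDerivAt_Theta (t : ℝ) :
    HasDerivAt (fun t => Theta t s) (2 * Real.sin s / Ffun t s ^ 2) t := by
  have hne := (Fpos hs hs' t).ne'
  have hnum : HasDerivAt (fun t : ℝ => 2 * Real.sin s * Real.sinh (t - ell s))
      (2 * Real.sin s * Real.cosh (t - ell s)) t := (hasDerivAt_sinh' t).const_mul _
  have h := (hnum.div (hasDerivAt_F (s := s) t) hne).add_const (Real.arccos (Real.tan s))
  have key : 2 * Real.sin s * Real.cosh (t - ell s) * Ffun t s
      - 2 * Real.sin s * Real.sinh (t - ell s) * Fd t s = 2 * Real.sin s := by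
    simp only [Ffun, Fd]
    linear_combination (2 * Real.sin s) * Real.cosh_sq_sub_sinh_sq (t - ell s)
  rw [key] at h
  unfold Theta
  exact h

lemma hasDerivAt_V (t : ℝ) : HasDerivAt (fun t => Vv t s) (Vd t s) t := by
  have hne := (Fpos hs hs' t).ne'
  have hcos : HasDerivAt (fun t => Real.cos (Theta t s))
      (-Real.sin (Theta t s) * (2 * Real.sin s / Ffun t s ^ 2)) t :=
    (Real.hasDerivAt_cos _).comp t (hasDerivAt_Theta hs hs' t)
  have h := ((hasDerivAt_F (s := s) t).const_mul (Real.sqrt 2 / 2 * (Real.sin s)⁻¹)).mul hcos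
  have hsne := (sinpos hs hs').ne'
  unfold Vv Vd
  refine h.congr_deriv ?_
  field_simp
  ring

lemma hasDerivAt_Vd (t : ℝ) :
    HasDerivAt (fun t => Vd t s)
      (Vv t s * (1 - 4 * Real.sin s ^ 2 / Ffun t s ^ 4)) t := by
  have hne := (Fpos hs hs' t).ne'
  have hΘ := hasDerivAt_Theta hs hs' t
  have hcos : HasDerivAt (fun t => Real.cos (Theta t s))
      (-Real.sin (Theta t s) * (2 * Real.sin s / Ffun t s ^ 2)) t :=
    (Real.hasDerivAt_cos _).comp t hΘ
  have hsin : HasDerivAt (fun t => Real.sin (Theta t s))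
      (Real.cos (Theta t s) * (2 * Real.sin s / Ffun t s ^ 2)) t :=
    (Real.hasDerivAt_sin _).comp t hΘ
  have h1 := (hasDerivAt_Fd (s := s) t).mul hcos
  have h2 := (hsin.const_mul (2 * Real.sin s)).div (hasDerivAt_F (s := s) t) hne
  have h := (h1.sub h2).const_mul (Real.sqrt 2 / 2 * (Real.sin s)⁻¹)
  have hsne := (sinpos hs hs').ne'
  unfold Vd Vv
  refine h.congr_deriv ?_
  field_simp
  ring

lemma Vd_cont : Continuous (fun t => Vd t s) := by
  rw [continuous_iff_continuousAt]
  exact fun t => (hasDerivAt_Vd hs hs' t).differentiableAt.continuousAt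

lemma Dfun_cont : Continuous (fun t => Dfun t s) := by
  unfold Dfun
  apply Continuous.if_le _ (Vd_cont hs hs') continuous_id continuous_const
  · intro x hx
    subst hx
    rw [if_pos (by linarith [ell_pos hs hs']), Vd_ell hs hs']
  · apply Continuous.if_le continuous_sin.neg
      (((Vd_cont hs hs').comp continuous_neg).neg) continuous_const continuous_id
    intro x hx
    have hx' : x = -ell s := by simpa using hx.symm
    subst hx'
    simp [Function.comp, Real.sin_neg, Vd_ell hs hs']

end derivs


theorem stmt6 (s : ℝ) (hs : 0 < s) (hs' : s < π / 4)
    (U K : ℝ → ℝ)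
    (hU : ∀ t : ℝ, U t = if |t| ≤ ell s then Real.cos t
      else (Real.sqrt 2 / 2) * (Real.sin s)⁻¹ * Ffun |t| s * Real.cos (Theta |t| s))
    (hK : ∀ t : ℝ, K t = if |t| ≤ ell s then 1
      else -1 + 4 * (Real.sin s) ^ 2 * ((Ffun |t| s)⁻¹) ^ 4) :
    ContDiff ℝ 1 U ∧ U 0 = 1 ∧ deriv U 0 = 0 ∧
    ∀ t : ℝ, |t| ≠ ell s → HasDerivAt (deriv U) (-(K t * U t)) t := by
  have hL := ell_pos hs hs'
  have hFpos := Fpos hs hs'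
  have hsne := (sinpos hs hs').ne'
  have hUcos : ∀ x, |x| ≤ ell s → U x = Real.cos x := fun x hx => by rw [hU x, if_pos hx]
  have hUV : ∀ x, ell s ≤ x → U x = Vv x s := by
    intro x hx
    rcases eq_or_lt_of_le hx with h | h
    · rw [← h, hUcos (ell s) (le_of_eq (abs_of_pos hL))]
      exact (V_ell hs hs').symm
    · rw [hU x, abs_of_pos (by linarith), if_neg (not_le.mpr h)]
      simp only [Vv]
  have hUVneg : ∀ x, x ≤ -ell s → U x = Vv (-x) s := by
    intro x hx
    rcases eq_or_lt_of_le hx with h | h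
    · subst h
      rw [hUcos _ (by rw [abs_neg]; exact le_of_eq (abs_of_pos hL)), neg_neg, Real.cos_neg]
      exact (V_ell hs hs').symm
    · have hxneg : x < 0 := by linarith
      rw [hU x, abs_of_neg hxneg, if_neg (not_le.mpr (by linarith))]
      simp only [Vv]
  have hD1cond : ∀ t, |t| ≤ ell s → Dfun t s = -Real.sin t := by
    intro t ht
    have h := abs_le.mp ht
    rw [Dfun, if_pos h.2, if_pos h.1]
  have hD2cond : ∀ t, ell s < t → Dfun t s = Vd t s := by
    intro t ht; rw [Dfun, if_neg (not_le.mpr ht)]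
  have hD3cond : ∀ t, t < -ell s → Dfun t s = -(Vd (-t) s) := by
    intro t ht; rw [Dfun, if_pos (by linarith), if_neg (not_le.mpr ht)]
  have hDall : ∀ t, HasDerivAt U (Dfun t s) t := by
    intro t
    rcases lt_trichotomy (|t|) (ell s) with h1 | h1 | h1
    · have hnb : ∀ᶠ x in nhds t, |x| < ell s :=
        (isOpen_lt continuous_abs continuous_const).mem_nhds h1
      have hev : U =ᶠ[nhds t] Real.cos := hnb.mono fun x hx => hUcos x hx.le
      rw [hD1cond t h1.le]
      exact (Real.hasDerivAt_cos t).congr_of_eventuallyEq hev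
    · rcases (abs_eq hL.le).mp h1 with h | h
      · subst h
        have hIic : HasDerivWithinAt U (-Real.sin (ell s)) (Set.Iic (ell s)) (ell s) := by
          apply (Real.hasDerivAt_cos (ell s)).hasDerivWithinAt.congr_of_eventuallyEq
          · have e1 : ∀ᶠ x in nhdsWithin (ell s) (Set.Iic (ell s)), -ell s < x :=
              eventually_nhdsWithin_of_eventually_nhds (eventually_gt_nhds (by linarith))
            have e2 : ∀ᶠ x in nhdsWithin (ell s) (Set.Iic (ell s)), x ∈ Set.Iic (ell s) :=
              eventually_mem_nhdsWithin
            filter_upwards [e1, e2] with x hx1 hx2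
            exact hUcos x (abs_le.mpr ⟨by linarith, hx2⟩)
          · exact hUcos _ (le_of_eq (abs_of_pos hL))
        have hIci : HasDerivWithinAt U (-Real.sin (ell s)) (Set.Ici (ell s)) (ell s) := by
          have hv := (hasDerivAt_V hs hs' (ell s)).hasDerivWithinAt (s := Set.Ici (ell s))
          rw [Vd_ell hs hs'] at hv
          exact hv.congr (fun x hx => hUV x hx) (hUV _ le_rfl)
        have hu := hIic.union hIci
        rw [Set.Iic_union_Ici] at hu
        rw [hD1cond _ (le_of_eq (abs_of_pos hL))]
        exact hasDerivWithinAt_univ.mp hu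
      · subst h
        have hIci : HasDerivWithinAt U (Real.sin (ell s)) (Set.Ici (-ell s)) (-ell s) := by
          have hc : HasDerivWithinAt Real.cos (Real.sin (ell s)) (Set.Ici (-ell s)) (-ell s) := by
            have h0 := (Real.hasDerivAt_cos (-ell s)).hasDerivWithinAt (s := Set.Ici (-ell s))
            simpa [Real.sin_neg] using h0
          apply hc.congr_of_eventuallyEq
          · have e1 : ∀ᶠ x in nhdsWithin (-ell s) (Set.Ici (-ell s)), x < ell s :=
              eventually_nhdsWithin_of_eventually_nhds (eventually_lt_nhds (by linarith))
            have e2 : ∀ᶠ x in nhdsWithin (-ell s) (Set.Ici (-ell s)), x ∈ Set.Ici (-ell s) :=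
              eventually_mem_nhdsWithin
            filter_upwards [e1, e2] with x hx1 hx2
            exact hUcos x (abs_le.mpr ⟨hx2, hx1.le⟩)
          · exact hUcos _ (by rw [abs_neg]; exact le_of_eq (abs_of_pos hL))
        have hIic : HasDerivWithinAt U (Real.sin (ell s)) (Set.Iic (-ell s)) (-ell s) := by
          have h0 : HasDerivAt (fun u => Vv u s) (Vd (ell s) s) (-(-ell s)) := by
            rw [neg_neg]; exact hasDerivAt_V hs hs' (ell s)
          have hcomp := h0.comp (-ell s) (hasDerivAt_neg (-ell s))
          rw [Vd_ell hs hs'] at hcomp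
          have hcomp2 : HasDerivAt (fun x => Vv (-x) s) (Real.sin (ell s)) (-ell s) := by
            rw [neg_mul_neg, mul_one] at hcomp
            exact hcomp
          exact hcomp2.hasDerivWithinAt.congr (fun x hx => hUVneg x hx) (hUVneg _ le_rfl)
        have hu := hIic.union hIci
        rw [Set.Iic_union_Ici] at hu
        rw [hD1cond _ (by rw [abs_neg]; exact le_of_eq (abs_of_pos hL)), Real.sin_neg, neg_neg]
        exact hasDerivWithinAt_univ.mp hu
    · rcases lt_abs.mp h1 with ht2 | ht2
      · have hnb : ∀ᶠ x in nhds t, ell s < x := eventually_gt_nhds ht2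
        have hev : U =ᶠ[nhds t] (fun x => Vv x s) := hnb.mono fun x hx => hUV x hx.le
        rw [hD2cond t ht2]
        exact (hasDerivAt_V hs hs' t).congr_of_eventuallyEq hev
      · have htneg : t < -ell s := by linarith
        have hnb : ∀ᶠ x in nhds t, x < -ell s := eventually_lt_nhds htneg
        have hev : U =ᶠ[nhds t] (fun x => Vv (-x) s) := hnb.mono fun x hx => hUVneg x hx.le
        have hcomp := (hasDerivAt_V hs hs' (-t)).comp t (hasDerivAt_neg t)
        have hcomp2 : HasDerivAt (fun x => Vv (-x) s) (-(Vd (-t) s)) t := by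
          have h3 := hcomp
          rw [mul_neg_one] at h3
          exact h3
        rw [hD3cond t htneg]
        exact hcomp2.congr_of_eventuallyEq hev
  have hdiff : Differentiable ℝ U := fun t => (hDall t).differentiableAt
  have hderiv : deriv U = fun t => Dfun t s := funext fun t => (hDall t).deriv
  refine ⟨contDiff_one_iff_deriv.mpr ⟨hdiff, by rw [hderiv]; exact Dfun_cont hs hs'⟩, ?_, ?_, ?_⟩
  · rw [hUcos 0 (by simpa using hL.le), Real.cos_zero]
  · rw [hderiv]
    show Dfun 0 s = 0
    rw [hD1cond 0 (by simpa using hL.le), Real.sin_zero, neg_zero]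
  · intro t ht
    rw [hderiv]
    rcases lt_trichotomy (|t|) (ell s) with h1 | h1 | h1
    · have hnb : ∀ᶠ x in nhds t, |x| < ell s :=
        (isOpen_lt continuous_abs continuous_const).mem_nhds h1
      have hev : (fun x => Dfun x s) =ᶠ[nhds t] (fun x => -Real.sin x) :=
        hnb.mono fun x hx => hD1cond x hx.le
      have hd := ((Real.hasDerivAt_sin t).neg).congr_of_eventuallyEq hev
      refine hd.congr_deriv ?_
      rw [hK t, if_pos h1.le, hU t, if_pos h1.le, one_mul]
    · exact absurd h1 ht
    · rcases lt_abs.mp h1 with ht2 | ht2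
      · have hnb : ∀ᶠ x in nhds t, ell s < x := eventually_gt_nhds ht2
        have hev : (fun x => Dfun x s) =ᶠ[nhds t] (fun x => Vd x s) :=
          hnb.mono fun x hx => hD2cond x hx
        have hd := (hasDerivAt_Vd hs hs' t).congr_of_eventuallyEq hev
        refine hd.congr_deriv ?_
        have htpos : 0 < t := by linarith
        rw [hK t, hU t, abs_of_pos htpos, if_neg (not_le.mpr ht2), if_neg (not_le.mpr ht2)]
        have hne := (hFpos t).ne'
        simp only [Vv]
        field_simp
        ring
      · have htneg : t < -ell s := by linarith
        have hnb : ∀ᶠ x in nhds t, x < -ell s := eventually_lt_nhds htneg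
        have hev : (fun x => Dfun x s) =ᶠ[nhds t] (fun x => -(Vd (-x) s)) :=
          hnb.mono fun x hx => hD3cond x hx
        have hcomp := ((hasDerivAt_Vd hs hs' (-t)).comp t (hasDerivAt_neg t)).neg
        have hcomp2 : HasDerivAt (fun x => -(Vd (-x) s))
            (Vv (-t) s * (1 - 4 * Real.sin s ^ 2 / Ffun (-t) s ^ 4)) t := by
          have h3 := hcomp
          rw [mul_neg_one, neg_neg] at h3
          exact h3
        have hd := hcomp2.congr_of_eventuallyEq hev
        refine hd.congr_deriv ?_
        have htneg0 : t < 0 := by linarith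
        rw [hK t, hU t, abs_of_neg htneg0, if_neg (not_le.mpr ht2), if_neg (not_le.mpr ht2)]
        have hne := (hFpos (-t)).ne'
        simp only [Vv]
        field_simp
        ring
end

section
/- For each s ∈ (0, π/4), the function t ↦ Θ(t,s) is strictly increasing on [ℓ(s), ∞), satisfies Θ(ℓ(s), s) = arccos(tan(s)), and lim_{t→∞} Θ(t,s) = Θ_∞(s). -/
open Real

/-- `Θ_∞(s) = arccos(tan s) + 2 sin s / (1 + √(cos 2s))`. -/
noncomputable def ThetaInf (s : ℝ) : ℝ :=
  Real.arccos (Real.tan s) + 2 * Real.sin s / (1 + Real.sqrt (Real.cos (2 * s)))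

theorem stmt8 (s : ℝ) (hs : 0 < s) (hs' : s < π / 4) :
    StrictMonoOn (fun t => Theta t s) (Set.Ici (ell s)) ∧
    Theta (ell s) s = Real.arccos (Real.tan s) ∧
    Filter.Tendsto (fun t => Theta t s) Filter.atTop (nhds (ThetaInf s)) := by
  have hpi := Real.pi_pos
  set c := Real.sqrt (Real.cos (2 * s)) with hc
  have hc0 : 0 ≤ c := Real.sqrt_nonneg _
  have hc1 : c ≤ 1 := Real.sqrt_le_one.2 (Real.cos_le_one _)
  have hsin : 0 < Real.sin s := Real.sin_pos_of_pos_of_lt_pi hs (by linarith)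
  have hF : ∀ u : ℝ, 0 < Real.cosh u + c * Real.sinh u := by
    intro u
    rcases le_or_gt 0 (Real.sinh u) with h | h
    · exact add_pos_of_pos_of_nonneg (Real.cosh_pos u) (mul_nonneg hc0 h)
    · have h1 : Real.sinh u ≤ c * Real.sinh u := by nlinarith
      have h2 : Real.cosh u + Real.sinh u = Real.exp u := Real.cosh_add_sinh u
      have := Real.exp_pos u
      linarith
  refine ⟨?_, ?_, ?_⟩
  · -- strict mono
    intro a _ b _ hab
    have key : Real.sinh (a - ell s) * (Real.cosh (b - ell s) + c * Real.sinh (b - ell s)) <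
        Real.sinh (b - ell s) * (Real.cosh (a - ell s) + c * Real.sinh (a - ell s)) := by
      have h1 : 0 < Real.sinh (b - a) := Real.sinh_pos_iff.2 (by linarith)
      have h2 : Real.sinh (b - a) =
          Real.sinh (b - ell s) * Real.cosh (a - ell s) -
            Real.cosh (b - ell s) * Real.sinh (a - ell s) := by
        rw [← Real.sinh_sub]; ring_nf
      nlinarith [h1, h2]
    have hx : Real.sinh (a - ell s) / (Real.cosh (a - ell s) + c * Real.sinh (a - ell s)) <
        Real.sinh (b - ell s) / (Real.cosh (b - ell s) + c * Real.sinh (b - ell s)) :=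
      (div_lt_div_iff₀ (hF _) (hF _)).2 key
    have hmul := mul_lt_mul_of_pos_left hx (by positivity : (0:ℝ) < 2 * Real.sin s)
    simp only [Theta, Ffun, mul_div_assoc, ← hc]
    linarith
  · simp [Theta, sub_self, Real.sinh_zero]
  · -- limit
    have heq : ∀ t : ℝ, Theta t s =
        2 * Real.sin s * ((1 - Real.exp (-(2 * (t - ell s)))) /
          ((1 + c) + (1 - c) * Real.exp (-(2 * (t - ell s))))) + Real.arccos (Real.tan s) := by
      intro t
      set u := t - ell s with hu
      have hden : 0 < (1 + c) + (1 - c) * Real.exp (-(2 * u)) := by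
        nlinarith [Real.exp_pos (-(2 * u)), Real.exp_pos (-(2 * u))]
      have h2 : Real.exp (-(2 * u)) = Real.exp (-u) * Real.exp (-u) := by
        rw [← Real.exp_add]; ring_nf
      have h3 : Real.exp u * Real.exp (-u) = 1 := by
        rw [← Real.exp_add]; simp
      have hfrac : Real.sinh u / (Real.cosh u + c * Real.sinh u) =
          (1 - Real.exp (-(2 * u))) / ((1 + c) + (1 - c) * Real.exp (-(2 * u))) := by
        rw [div_eq_div_iff (ne_of_gt (hF u)) (ne_of_gt hden), Real.sinh_eq, Real.cosh_eq, h2]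
        linear_combination Real.exp (-u) * h3
      simp only [Theta, Ffun, mul_div_assoc, ← hc, ← hu, hfrac]
    have hXbot : Filter.Tendsto (fun t : ℝ => -(2 * (t - ell s))) Filter.atTop Filter.atBot := by
      have h1 : Filter.Tendsto (fun t : ℝ => 2 * (t - ell s)) Filter.atTop Filter.atTop := by
        apply Filter.tendsto_atTop_atTop.2
        intro b
        exact ⟨b / 2 + ell s, fun a ha => by linarith⟩
      exact Filter.tendsto_neg_atBot_iff.2 h1
    have hX : Filter.Tendsto (fun t : ℝ => Real.exp (-(2 * (t - ell s)))) Filter.atTop (nhds 0) :=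
      Real.tendsto_exp_atBot.comp hXbot
    have hlim : Filter.Tendsto (fun t : ℝ =>
        2 * Real.sin s * ((1 - Real.exp (-(2 * (t - ell s)))) /
          ((1 + c) + (1 - c) * Real.exp (-(2 * (t - ell s))))) + Real.arccos (Real.tan s))
        Filter.atTop (nhds (2 * Real.sin s * ((1 - 0) / ((1 + c) + (1 - c) * 0)) +
          Real.arccos (Real.tan s))) := by
      refine Filter.Tendsto.add ?_ tendsto_const_nhds
      refine Filter.Tendsto.const_mul _ ?_
      refine Filter.Tendsto.div (tendsto_const_nhds.sub hX)
        (tendsto_const_nhds.add (tendsto_const_nhds.mul hX)) ?_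
      simp; linarith
    have hval : 2 * Real.sin s * ((1 - 0) / ((1 + c) + (1 - c) * 0)) +
        Real.arccos (Real.tan s) = ThetaInf s := by
      have : (0:ℝ) < 1 + c := by linarith
      rw [ThetaInf, ← hc]
      rw [sub_zero, mul_zero, add_zero]
      ring
    rw [← hval]
    exact hlim.congr (fun t => (heq t).symm)
end

section
/- The function Θ_∞ is differentiable on [0, π/4) with Θ_∞'(s) = −2·sin²(s) / ( cos(s)·(1 + √(cos(2s)))² ) for all 0 ≤ s < π/4; moreover Θ_∞(0) = π/2, Θ_∞ is strictly decreasing on (0, π/4), and lim_{s→(π/4)⁻} Θ_∞(s) = √2. Consequently 0 < Θ(t,s) < π/2 for all 0 < s < π/4 and all t ≥ ℓ(s). -/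
open Real

lemma aux_deriv (s : ℝ) (hs0 : 0 ≤ s) (hs : s < π/4) :
    HasDerivAt ThetaInf
      (-2 * (Real.sin s) ^ 2 / (Real.cos s * (1 + Real.sqrt (Real.cos (2 * s))) ^ 2)) s := by
  have hpi : 0 < π := Real.pi_pos
  have hc : 0 < cos s := cos_pos_of_mem_Ioo ⟨by linarith, by linarith⟩
  have hc2 : 0 < cos (2*s) := cos_pos_of_mem_Ioo ⟨by linarith, by linarith⟩
  set k := Real.sqrt (cos (2*s)) with hkdef
  have hk : 0 < k := Real.sqrt_pos.2 hc2
  have hk2 : k^2 = cos (2*s) := Real.sq_sqrt hc2.le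
  have htan0 : 0 ≤ tan s := tan_nonneg_of_nonneg_of_le_pi_div_two hs0 (by linarith)
  have htan1 : tan s < 1 := by
    have := tan_lt_tan_of_nonneg_of_lt_pi_div_two hs0 (by linarith : π/4 < π/2) hs
    rwa [tan_pi_div_four] at this
  have hcos2eq : cos (2*s) = cos s ^ 2 - sin s ^ 2 := by
    rw [cos_two_mul]; nlinarith [sin_sq_add_cos_sq s]
  have hsq : Real.sqrt (1 - tan s ^ 2) = k / cos s := by
    have h1 : (1 : ℝ) - tan s ^ 2 = cos (2*s) / cos s ^ 2 := by
      rw [tan_eq_sin_div_cos, hcos2eq]; field_simp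
    rw [h1, Real.sqrt_div hc2.le, Real.sqrt_sq hc.le]
  have hat : HasDerivAt (fun x => arccos (tan x))
      (-(1 / Real.sqrt (1 - tan s ^ 2)) * (1 / cos s ^ 2)) s :=
    (Real.hasDerivAt_arccos (by linarith : (-1:ℝ) < tan s).ne' htan1.ne).comp s
      (Real.hasDerivAt_tan hc.ne')
  have hkd : HasDerivAt (fun x => Real.sqrt (cos (2*x))) (1 / (2 * k) * (-sin (2*s) * 2)) s := by
    have hinner : HasDerivAt (fun x : ℝ => cos (2*x)) (-sin (2*s) * 2) s := by
      have := (Real.hasDerivAt_cos (2*s)).comp s ((hasDerivAt_id s).const_mul 2)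
      simpa [Function.comp_def] using this
    exact (Real.hasDerivAt_sqrt hc2.ne').comp s hinner
  have hden : HasDerivAt (fun x => 1 + Real.sqrt (cos (2*x))) (1 / (2 * k) * (-sin (2*s) * 2)) s :=
    hkd.const_add 1
  have hnum : HasDerivAt (fun x : ℝ => 2 * sin x) (2 * cos s) s := (Real.hasDerivAt_sin s).const_mul 2
  have hdenne : (1 : ℝ) + k ≠ 0 := by positivity
  have hdiv : HasDerivAt (fun x => 2 * sin x / (1 + Real.sqrt (cos (2*x))))
      ((2 * cos s * (1 + k) - 2 * sin s * (1 / (2 * k) * (-sin (2*s) * 2))) / (1 + k) ^ 2) s :=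
    hnum.div hden hdenne
  have htotal := hat.add hdiv
  have heq : (-(1 / Real.sqrt (1 - tan s ^ 2)) * (1 / cos s ^ 2)) +
      ((2 * cos s * (1 + k) - 2 * sin s * (1 / (2 * k) * (-sin (2*s) * 2))) / (1 + k) ^ 2)
      = -2 * (Real.sin s) ^ 2 / (Real.cos s * (1 + k) ^ 2) := by
    rw [hsq, sin_two_mul]
    have hpy : sin s ^ 2 + cos s ^ 2 = 1 := sin_sq_add_cos_sq s
    have hk2' : k ^ 2 = 1 - 2 * sin s ^ 2 := by rw [hk2, hcos2eq]; nlinarith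
    field_simp
    linear_combination (2*k + 2*k^2 + 4*sin s^2) * hpy + (1 - 2*sin s^2) * hk2'
  rw [heq] at htotal
  exact htotal

lemma thetaInf_zero : ThetaInf 0 = π / 2 := by
  simp [ThetaInf, Real.tan_zero, Real.arccos_zero]

lemma aux_anti : StrictAntiOn ThetaInf (Set.Ico 0 (π/4)) := by
  have hpi : 0 < π := Real.pi_pos
  apply strictAntiOn_of_deriv_neg (convex_Ico _ _)
  · exact fun x hx => ((aux_deriv x hx.1 hx.2).continuousAt).continuousWithinAt
  · intro x hx
    rw [interior_Ico] at hx
    obtain ⟨hx1, hx2⟩ := hx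
    rw [(aux_deriv x hx1.le hx2).deriv]
    have hsin : 0 < sin x := sin_pos_of_pos_of_lt_pi hx1 (by linarith)
    have hc : 0 < cos x := cos_pos_of_mem_Ioo ⟨by linarith, by linarith⟩
    have hk : (0:ℝ) ≤ Real.sqrt (cos (2*x)) := Real.sqrt_nonneg _
    apply div_neg_of_neg_of_pos
    · nlinarith
    · positivity

theorem stmt9 :
    (∀ s ∈ Set.Ico (0:ℝ) (π / 4),
      HasDerivWithinAt ThetaInf
        (-2 * (Real.sin s) ^ 2 / (Real.cos s * (1 + Real.sqrt (Real.cos (2 * s))) ^ 2))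
        (Set.Ico 0 (π / 4)) s) ∧
    ThetaInf 0 = π / 2 ∧
    StrictAntiOn ThetaInf (Set.Ioo 0 (π / 4)) ∧
    Filter.Tendsto ThetaInf (nhdsWithin (π / 4) (Set.Iio (π / 4))) (nhds (Real.sqrt 2)) ∧
    ∀ s ∈ Set.Ioo (0:ℝ) (π / 4), ∀ t : ℝ, ell s ≤ t →
      0 < Theta t s ∧ Theta t s < π / 2 := by
  have hpi : 0 < π := Real.pi_pos
  refine ⟨fun s hs => (aux_deriv s hs.1 hs.2).hasDerivWithinAt, thetaInf_zero, ?_, ?_, ?_⟩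
  · exact aux_anti.mono Set.Ioo_subset_Ico_self
  · -- continuity at π/4
    have hcont : ContinuousAt ThetaInf (π/4) := by
      have h1 : ContinuousAt (fun x => arccos (tan x)) (π/4) :=
        Real.continuous_arccos.continuousAt.comp
          (Real.continuousAt_tan.2 (by rw [Real.cos_pi_div_four]; positivity))
      have h2 : ContinuousAt (fun x : ℝ => 2 * sin x / (1 + Real.sqrt (cos (2*x)))) (π/4) := by
        apply ContinuousAt.div
        · exact (continuous_const.mul Real.continuous_sin).continuousAt
        · exact (continuous_const.add (Real.continuous_sqrt.comp
            (Real.continuous_cos.comp (continuous_const.mul continuous_id)))).continuousAt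
        · have : 2 * (π/4) = π/2 := by ring
          rw [this, Real.cos_pi_div_two, Real.sqrt_zero]
          norm_num
      exact h1.add h2
    have hval : ThetaInf (π/4) = Real.sqrt 2 := by
      have h2 : 2 * (π/4) = π/2 := by ring
      rw [ThetaInf, tan_pi_div_four, Real.arccos_one, h2, Real.cos_pi_div_two,
        Real.sqrt_zero, Real.sin_pi_div_four]
      ring
    have := hcont.continuousWithinAt (s := Set.Iio (π/4))
    rw [ContinuousWithinAt, hval] at this
    exact this
  · rintro s ⟨hs0, hs⟩ t ht
    have hsin : 0 < sin s := sin_pos_of_pos_of_lt_pi hs0 (by linarith)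
    have htan0 : 0 ≤ tan s := tan_nonneg_of_nonneg_of_le_pi_div_two hs0.le (by linarith)
    have htan1 : tan s < 1 := by
      have := tan_lt_tan_of_nonneg_of_lt_pi_div_two hs0.le (by linarith : π/4 < π/2) hs
      rwa [tan_pi_div_four] at this
    set τ := t - ell s with hτ
    have hτ0 : 0 ≤ τ := by simp [hτ]; linarith
    have hsinh : 0 ≤ Real.sinh τ := by rwa [Real.sinh_nonneg_iff]
    have hcosh : 1 ≤ Real.cosh τ := Real.one_le_cosh τ
    set k := Real.sqrt (cos (2*s)) with hkdef
    have hk : 0 ≤ k := Real.sqrt_nonneg _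
    have hF : 0 < Ffun t s := by
      have : Ffun t s = Real.cosh τ + k * Real.sinh τ := rfl
      rw [this]; nlinarith
    have harccos : 0 < arccos (tan s) := Real.arccos_pos.2 htan1
    constructor
    · have h1 : 0 ≤ 2 * sin s * Real.sinh τ / Ffun t s :=
        div_nonneg (by positivity) hF.le
      have : Theta t s = 2 * sin s * Real.sinh τ / Ffun t s + arccos (tan s) := rfl
      rw [this]; linarith
    · -- Theta t s < ThetaInf s < ThetaInf 0 = π/2
      have hlt1 : Theta t s < ThetaInf s := by
        have hfrac : Real.sinh τ / Ffun t s < 1 / (1 + k) := by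
          rw [div_lt_div_iff₀ hF (by positivity)]
          have hF' : Ffun t s = Real.cosh τ + k * Real.sinh τ := rfl
          rw [hF']
          have := Real.sinh_lt_cosh τ
          nlinarith
        have h2 : 2 * sin s * Real.sinh τ / Ffun t s < 2 * sin s / (1 + k) := by
          have := mul_lt_mul_of_pos_left hfrac (by positivity : (0:ℝ) < 2 * sin s)
          calc 2 * sin s * Real.sinh τ / Ffun t s
              = 2 * sin s * (Real.sinh τ / Ffun t s) := by ring
            _ < 2 * sin s * (1 / (1 + k)) := this
            _ = 2 * sin s / (1 + k) := by ring
        have hT : Theta t s = 2 * sin s * Real.sinh τ / Ffun t s + arccos (tan s) := rfl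
        have hTI : ThetaInf s = arccos (tan s) + 2 * sin s / (1 + k) := rfl
        rw [hT, hTI]; linarith
      have hlt2 : ThetaInf s < ThetaInf 0 := by
        exact aux_anti ⟨le_refl 0, by linarith⟩ ⟨hs0.le, hs⟩ hs0
      rw [thetaInf_zero] at hlt2
      linarith
end

section
/- Let 0 ≤ s < π/4 and t > ℓ(s), and write F = F(t,s) and F' = sinh(t − ℓ(s)) + √(cos(2s))·cosh(t − ℓ(s)) (the t-derivative of F(t,s)). Then −(F'/F)² + (1 − (F'/F)²)·(−1 + 2·F^{−2}) = −1 + 4·sin²(s)·F^{−4}. Equivalently, with ρ(t) = π/4 + log F(t,s), one has −(ρ'(t))² + (1 − (ρ'(t))²)·(−1 + 2·e^{−2(ρ(t)−π/4)}) = −1 + 4·sin²(s)·F(t,s)^{−4}. -/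
open Real

theorem stmt10 (s t : ℝ) (hs : 0 ≤ s) (hs' : s < π / 4) (ht : ell s < t) :
    (-((Real.sinh (t - ell s) + Real.sqrt (Real.cos (2 * s)) * Real.cosh (t - ell s))
          / Ffun t s) ^ 2
      + (1 - ((Real.sinh (t - ell s) + Real.sqrt (Real.cos (2 * s)) * Real.cosh (t - ell s))
          / Ffun t s) ^ 2) * (-1 + 2 * ((Ffun t s)⁻¹) ^ 2)
      = -1 + 4 * (Real.sin s) ^ 2 * ((Ffun t s)⁻¹) ^ 4) ∧
    (-(deriv (fun u => π / 4 + Real.log (Ffun u s)) t) ^ 2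
      + (1 - (deriv (fun u => π / 4 + Real.log (Ffun u s)) t) ^ 2)
        * (-1 + 2 * Real.exp (-2 * ((π / 4 + Real.log (Ffun t s)) - π / 4)))
      = -1 + 4 * (Real.sin s) ^ 2 * ((Ffun t s)⁻¹) ^ 4) := by
  have hx : 0 < t - ell s := by linarith
  have hcos : 0 ≤ Real.cos (2 * s) := by
    apply Real.cos_nonneg_of_mem_Icc
    constructor <;> [linarith [Real.pi_pos]; linarith]
  have ha : Real.sqrt (Real.cos (2 * s)) ^ 2 = Real.cos (2 * s) := Real.sq_sqrt hcos
  have ha0 : 0 ≤ Real.sqrt (Real.cos (2 * s)) := Real.sqrt_nonneg _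
  have hcos2 : Real.cos (2 * s) = 1 - 2 * Real.sin s ^ 2 := Real.cos_two_mul' s ▸ by
    nlinarith [Real.sin_sq_add_cos_sq s]
  have hF : 0 < Ffun t s := by
    have h1 := Real.cosh_pos (t - ell s)
    have h2 := Real.sinh_pos_iff.mpr hx
    unfold Ffun
    positivity
  have hch : Real.cosh (t - ell s) ^ 2 - Real.sinh (t - ell s) ^ 2 = 1 :=
    Real.cosh_sq_sub_sinh_sq _
  have key : Ffun t s ^ 2 -
      (Real.sinh (t - ell s) + Real.sqrt (Real.cos (2 * s)) * Real.cosh (t - ell s)) ^ 2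
      = 2 * Real.sin s ^ 2 := by
    unfold Ffun
    nlinarith [ha, hch, hcos2]
  have first :
      (-((Real.sinh (t - ell s) + Real.sqrt (Real.cos (2 * s)) * Real.cosh (t - ell s))
          / Ffun t s) ^ 2
      + (1 - ((Real.sinh (t - ell s) + Real.sqrt (Real.cos (2 * s)) * Real.cosh (t - ell s))
          / Ffun t s) ^ 2) * (-1 + 2 * ((Ffun t s)⁻¹) ^ 2)
      = -1 + 4 * (Real.sin s) ^ 2 * ((Ffun t s)⁻¹) ^ 4) := by
    have hFne : Ffun t s ≠ 0 := ne_of_gt hF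
    field_simp
    linear_combination 2 * key
  refine ⟨first, ?_⟩
  -- compute the derivative
  have h1 : HasDerivAt (fun u : ℝ => u - ell s) 1 t := (hasDerivAt_id t).sub_const _
  have hc : HasDerivAt (fun u : ℝ => Real.cosh (u - ell s)) (Real.sinh (t - ell s)) t := by
    simpa [Function.comp_def] using (Real.hasDerivAt_cosh (t - ell s)).comp t h1
  have hsh : HasDerivAt (fun u : ℝ => Real.sinh (u - ell s)) (Real.cosh (t - ell s)) t := by
    simpa [Function.comp_def] using (Real.hasDerivAt_sinh (t - ell s)).comp t h1
  have hFd : HasDerivAt (fun u : ℝ => Ffun u s)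
      (Real.sinh (t - ell s) + Real.sqrt (Real.cos (2 * s)) * Real.cosh (t - ell s)) t := by
    simpa [Ffun, Pi.add_def] using hc.add (hsh.const_mul (Real.sqrt (Real.cos (2 * s))))
  have hlog : HasDerivAt (fun u : ℝ => π / 4 + Real.log (Ffun u s))
      ((Real.sinh (t - ell s) + Real.sqrt (Real.cos (2 * s)) * Real.cosh (t - ell s))
        / Ffun t s) t := by
    simpa using (hFd.log (ne_of_gt hF)).const_add (π / 4)
  have hderiv : deriv (fun u : ℝ => π / 4 + Real.log (Ffun u s)) t
      = (Real.sinh (t - ell s) + Real.sqrt (Real.cos (2 * s)) * Real.cosh (t - ell s))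
        / Ffun t s := hlog.deriv
  have hexp : Real.exp (-2 * ((π / 4 + Real.log (Ffun t s)) - π / 4)) = ((Ffun t s)⁻¹) ^ 2 := by
    have h : -2 * ((π / 4 + Real.log (Ffun t s)) - π / 4) = Real.log (((Ffun t s)⁻¹) ^ 2) := by
      rw [Real.log_pow, Real.log_inv]; push_cast; ring
    rw [h, Real.exp_log (by positivity)]
  rw [hderiv, hexp]
  exact first
end

section
/- Let a > 0, s ∈ ℝ and v ∈ (−1, 1). The function ρ̄(t) = s + a^{−1}·log( ((1+v)·e^{at} + (1−v)·e^{−at})/2 ) is smooth on ℝ and satisfies ρ̄''(t) = a·(1 − (ρ̄'(t))²) for all t, with ρ̄(0) = s and ρ̄'(0) = v. Moreover |ρ̄'(t)| < 1 for all t ∈ ℝ, and ρ̄(t) → ∞ as t → ±∞. -/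
open Real Filter

theorem stmt12 (a s v : ℝ) (ha : 0 < a) (hv : -1 < v) (hv' : v < 1)
    (ρ : ℝ → ℝ)
    (hρ : ρ = fun t => s + a⁻¹ *
      Real.log (((1 + v) * Real.exp (a * t) + (1 - v) * Real.exp (-(a * t))) / 2)) :
    ContDiff ℝ (⊤ : ℕ∞) ρ ∧
    (∀ t : ℝ, deriv (deriv ρ) t = a * (1 - (deriv ρ t) ^ 2)) ∧
    ρ 0 = s ∧ deriv ρ 0 = v ∧
    (∀ t : ℝ, |deriv ρ t| < 1) ∧
    Tendsto ρ atTop atTop ∧ Tendsto ρ atBot atTop := by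
  subst hρ
  have hp : (0:ℝ) < 1 + v := by linarith
  have hq : (0:ℝ) < 1 - v := by linarith
  set D : ℝ → ℝ := fun t => ((1 + v) * Real.exp (a * t) + (1 - v) * Real.exp (-(a * t))) / 2
    with hD
  set N : ℝ → ℝ := fun t => ((1 + v) * Real.exp (a * t) - (1 - v) * Real.exp (-(a * t))) / 2
    with hN
  have hDpos : ∀ t, 0 < D t := by
    intro t
    have := Real.exp_pos (a * t)
    have := Real.exp_pos (-(a * t))
    simp only [hD]
    positivity
  have hat : ∀ t : ℝ, HasDerivAt (fun t : ℝ => a * t) a t := by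
    intro t
    simpa using (hasDerivAt_id t).const_mul a
  have hexp1 : ∀ t : ℝ, HasDerivAt (fun t : ℝ => Real.exp (a * t)) (a * Real.exp (a * t)) t := by
    intro t
    simpa [mul_comm] using (hat t).exp
  have hexp2 : ∀ t : ℝ, HasDerivAt (fun t : ℝ => Real.exp (-(a * t)))
      (-(a * Real.exp (-(a * t)))) t := by
    intro t
    simpa [mul_comm] using ((hat t).neg).exp
  have hDderiv : ∀ t, HasDerivAt D (a * N t) t := by
    intro t
    have := (((hexp1 t).const_mul (1 + v)).add ((hexp2 t).const_mul (1 - v))).div_const 2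
    refine this.congr_deriv ?_
    simp only [hN]
    ring
  have hNderiv : ∀ t, HasDerivAt N (a * D t) t := by
    intro t
    have := (((hexp1 t).const_mul (1 + v)).sub ((hexp2 t).const_mul (1 - v))).div_const 2
    refine this.congr_deriv ?_
    simp only [hD]
    ring
  have hρderiv : ∀ t, HasDerivAt
      (fun t => s + a⁻¹ * Real.log (D t)) (N t / D t) t := by
    intro t
    have := (((hDderiv t).log (hDpos t).ne')).const_mul a⁻¹ |>.const_add s
    refine this.congr_deriv ?_
    field_simp
  have hderiv : deriv (fun t => s + a⁻¹ * Real.log (D t)) = fun t => N t / D t :=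
    funext fun t => (hρderiv t).deriv
  have habs : ∀ t, |N t / D t| < 1 := by
    intro t
    rw [abs_div, abs_of_pos (hDpos t), div_lt_one (hDpos t)]
    rw [abs_lt]
    constructor
    · have h1 : 0 < (1 + v) * Real.exp (a * t) := by positivity
      simp only [hN, hD]; nlinarith
    · have h2 : 0 < (1 - v) * Real.exp (-(a * t)) := by positivity
      simp only [hN, hD]; nlinarith
  refine ⟨?_, ?_, ?_, ?_, ?_, ?_, ?_⟩
  · -- smoothness
    have hDc : ContDiff ℝ (⊤ : ℕ∞) D := by
      apply ContDiff.div_const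
      exact ((contDiff_const.mul ((contDiff_const.mul contDiff_id).exp)).add
        (contDiff_const.mul ((contDiff_const.mul contDiff_id).neg.exp)))
    exact contDiff_const.add (contDiff_const.mul (hDc.log fun t => (hDpos t).ne'))
  · intro t
    rw [hderiv]
    have : HasDerivAt (fun t => N t / D t) (a * (1 - (N t / D t) ^ 2)) t := by
      have := (hNderiv t).div (hDderiv t) (hDpos t).ne'
      refine this.congr_deriv ?_
      field_simp [(hDpos t).ne']
    rw [this.deriv]
  · simp [hD]
  · rw [hderiv]
    simp only [hN, hD, mul_zero, neg_zero, Real.exp_zero, mul_one]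
    norm_num
  · intro t
    rw [hderiv]
    exact habs t
  · -- atTop
    apply tendsto_atTop_add_const_left
    apply Tendsto.const_mul_atTop (by positivity : (0:ℝ) < a⁻¹)
    apply Real.tendsto_log_atTop.comp
    have h1 : Tendsto (fun t : ℝ => (1 + v) * Real.exp (a * t) / 2) atTop atTop := by
      apply Tendsto.atTop_div_const two_pos
      apply Tendsto.const_mul_atTop hp
      exact Real.tendsto_exp_atTop.comp (Tendsto.const_mul_atTop ha tendsto_id)
    apply tendsto_atTop_mono _ h1
    intro t
    have : 0 ≤ (1 - v) * Real.exp (-(a * t)) := by positivity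
    linarith
  · apply tendsto_atTop_add_const_left
    apply Tendsto.const_mul_atTop (by positivity : (0:ℝ) < a⁻¹)
    apply Real.tendsto_log_atTop.comp
    have h1 : Tendsto (fun t : ℝ => (1 - v) * Real.exp (-(a * t)) / 2) atBot atTop := by
      apply Tendsto.atTop_div_const two_pos
      apply Tendsto.const_mul_atTop hq
      refine Real.tendsto_exp_atTop.comp ?_
      have : Tendsto (fun t : ℝ => a * t) atBot atBot :=
        Tendsto.const_mul_atBot ha tendsto_id
      exact tendsto_neg_atBot_atTop.comp this
    apply tendsto_atTop_mono _ h1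
    intro t
    have : 0 ≤ (1 + v) * Real.exp (a * t) := by positivity
    linarith
end

section
/- Let a > 0, s ∈ ℝ, v ∈ (−1, 1), and let ρ : [0,∞) → ℝ be a C² function with ρ(0) = s, ρ'(0) = v, and ρ''(t) ≥ a·(1 − (ρ'(t))²) for all t ≥ 0. Then ρ(t) ≥ s + a^{−1}·log( ((1+v)·e^{at} + (1−v)·e^{−at})/2 ) for all t ≥ 0; in particular ρ(t) → ∞ as t → ∞. -/
open Real Set Filter

theorem stmt13 (a s v : ℝ) (ha : 0 < a) (hv : -1 < v) (hv' : v < 1)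
    (ρ ρ' ρ'' : ℝ → ℝ)
    -- ρ is C² on [0,∞) with first derivative ρ' and second derivative ρ''
    (hd1 : ∀ t ∈ Ici (0:ℝ), HasDerivWithinAt ρ (ρ' t) (Ici 0) t)
    (hd2 : ∀ t ∈ Ici (0:ℝ), HasDerivWithinAt ρ' (ρ'' t) (Ici 0) t)
    (hc : ContinuousOn ρ'' (Ici 0))
    (h0 : ρ 0 = s) (h0' : ρ' 0 = v)
    (hineq : ∀ t : ℝ, 0 ≤ t → a * (1 - (ρ' t) ^ 2) ≤ ρ'' t) :
    (∀ t : ℝ, 0 ≤ t →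
      s + a⁻¹ * Real.log (((1 + v) * Real.exp (a * t) + (1 - v) * Real.exp (-(a * t))) / 2)
        ≤ ρ t) ∧
    Tendsto ρ atTop atTop := by
  have hv1 : (0:ℝ) < 1 + v := by linarith
  have hv2 : (0:ℝ) < 1 - v := by linarith
  -- the comparison solution
  set c : ℝ → ℝ := fun t => ((1 + v) * Real.exp (a * t) + (1 - v) * Real.exp (-(a * t))) / 2
    with hc_def
  set d : ℝ → ℝ := fun t => ((1 + v) * Real.exp (a * t) - (1 - v) * Real.exp (-(a * t))) / 2
    with hd_def
  have hcpos : ∀ t, 0 < c t := fun t => by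
    have := Real.exp_pos (a * t); have := Real.exp_pos (-(a * t)); positivity
  have hcd : ∀ t, c t ^ 2 - d t ^ 2 = 1 - v ^ 2 := by
    intro t
    have h : Real.exp (a * t) * Real.exp (-(a * t)) = 1 := by
      rw [← Real.exp_add]; simp
    simp only [hc_def, hd_def]
    nlinarith [h]
  have hdc : ∀ t, HasDerivAt c (a * d t) t := by
    intro t
    have h1 : HasDerivAt (fun t => Real.exp (a * t)) (a * Real.exp (a * t)) t := by
      simpa [mul_comm, Function.comp_def] using (Real.hasDerivAt_exp (a * t)).comp t ((hasDerivAt_id t).const_mul a)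
    have h2 : HasDerivAt (fun t => Real.exp (-(a * t))) (-a * Real.exp (-(a * t))) t := by
      have := (Real.hasDerivAt_exp (-(a * t))).comp t (((hasDerivAt_id t).const_mul a).neg)
      simpa [mul_comm, Function.comp_def, Pi.neg_apply] using this
    have := ((h1.const_mul (1 + v)).sub (h2.const_mul (1 - v))).div_const 2
    refine (((h1.const_mul (1 + v)).add (h2.const_mul (1 - v))).div_const 2).congr_deriv ?_
    simp only [hd_def]; ring
  have hdd : ∀ t, HasDerivAt d (a * c t) t := by
    intro t
    have h1 : HasDerivAt (fun t => Real.exp (a * t)) (a * Real.exp (a * t)) t := by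
      simpa [mul_comm, Function.comp_def] using (Real.hasDerivAt_exp (a * t)).comp t ((hasDerivAt_id t).const_mul a)
    have h2 : HasDerivAt (fun t => Real.exp (-(a * t))) (-a * Real.exp (-(a * t))) t := by
      have := (Real.hasDerivAt_exp (-(a * t))).comp t (((hasDerivAt_id t).const_mul a).neg)
      simpa [mul_comm, Function.comp_def, Pi.neg_apply] using this
    refine (((h1.const_mul (1 + v)).sub (h2.const_mul (1 - v))).div_const 2).congr_deriv ?_
    simp only [hc_def]; ring
  set g : ℝ → ℝ := fun t => d t / c t with hg_def
  have hdg : ∀ t, HasDerivAt g (a * (1 - g t ^ 2)) t := by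
    intro t
    have h := (hdd t).div (hdc t) (hcpos t).ne'
    refine h.congr_deriv ?_
    have hct := (hcpos t).ne'
    simp only [hg_def]
    field_simp
  set σf : ℝ → ℝ := fun t => s + a⁻¹ * Real.log (c t) with hσ_def
  have hdσ : ∀ t, HasDerivAt σf (g t) t := by
    intro t
    have h := ((hdc t).log (hcpos t).ne').const_mul a⁻¹
    have h2 := h.const_add s
    refine h2.congr_deriv ?_
    simp only [hg_def]
    field_simp
  have hcont_g : Continuous g := by
    apply Continuous.div
    · exact continuous_iff_continuousAt.2 fun t => (hdd t).continuousAt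
    · exact continuous_iff_continuousAt.2 fun t => (hdc t).continuousAt
    · exact fun t => (hcpos t).ne'
  have hcontρ' : ContinuousOn ρ' (Ici 0) :=
    fun t ht => ((hd2 t ht).differentiableWithinAt).continuousWithinAt
  have hcontρ : ContinuousOn ρ (Ici 0) :=
    fun t ht => ((hd1 t ht).differentiableWithinAt).continuousWithinAt
  -- F t = (ρ' t - g t) * exp (a * (ρ t + σf t))
  set F : ℝ → ℝ := fun t => (ρ' t - g t) * Real.exp (a * (ρ t + σf t)) with hF_def
  have hintr : interior (Ici (0:ℝ)) = Ioi 0 := interior_Ici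
  have hcontσ : Continuous σf := continuous_iff_continuousAt.2 fun t => (hdσ t).continuousAt
  have hFmono : MonotoneOn F (Ici 0) := by
    apply monotoneOn_of_hasDerivWithinAt_nonneg (convex_Ici 0)
      (f' := fun t => (ρ'' t - a * (1 - g t ^ 2)) * Real.exp (a * (ρ t + σf t))
        + (ρ' t - g t) * (a * (ρ' t + g t)) * Real.exp (a * (ρ t + σf t)))
    · apply ContinuousOn.mul
      · exact hcontρ'.sub hcont_g.continuousOn
      · exact (continuousOn_const.mul (hcontρ.add hcontσ.continuousOn)).rexp
    · intro t ht
      rw [hintr] at ht ⊢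
      have ht' : t ∈ Ici (0:ℝ) := mem_Ici.2 (le_of_lt ht)
      have h1 : HasDerivWithinAt (fun t => ρ' t - g t) (ρ'' t - a * (1 - g t ^ 2)) (Ioi 0) t :=
        ((hd2 t ht').mono (Ioi_subset_Ici_self)).sub ((hdg t).hasDerivWithinAt)
      have h2 : HasDerivWithinAt (fun t => Real.exp (a * (ρ t + σf t)))
          ((a * (ρ' t + g t)) * Real.exp (a * (ρ t + σf t))) (Ioi 0) t := by
        have hin : HasDerivWithinAt (fun t => a * (ρ t + σf t)) (a * (ρ' t + g t)) (Ioi 0) t :=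
          (((hd1 t ht').mono (Ioi_subset_Ici_self)).add ((hdσ t).hasDerivWithinAt)).const_mul a
        simpa [mul_comm, Function.comp_def] using (Real.hasDerivAt_exp (a * (ρ t + σf t))).comp_hasDerivWithinAt t hin
      refine (h1.mul h2).congr_deriv ?_
      ring
    · intro t ht
      rw [hintr] at ht
      have ht' : (0:ℝ) ≤ t := le_of_lt ht
      have key := hineq t ht'
      have hexp := (Real.exp_pos (a * (ρ t + σf t))).le
      have : (ρ'' t - a * (1 - g t ^ 2)) + (ρ' t - g t) * (a * (ρ' t + g t))
          = ρ'' t - a * (1 - ρ' t ^ 2) := by ring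
      nlinarith [Real.exp_pos (a * (ρ t + σf t))]
  have hF0 : F 0 = 0 := by
    have hg0 : g 0 = v := by
      simp only [hg_def, hd_def, hc_def]
      norm_num
    simp [hF_def, hg0, h0']
  have hρ'ge : ∀ t, 0 ≤ t → g t ≤ ρ' t := by
    intro t ht
    have := hFmono (self_mem_Ici) (mem_Ici.2 ht) ht
    rw [hF0] at this
    have h2 : 0 ≤ (ρ' t - g t) * Real.exp (a * (ρ t + σf t)) := this
    have hexp := Real.exp_pos (a * (ρ t + σf t))
    nlinarith [h2, hexp]
  -- now ρ - σf is monotone on Ici 0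
  have hmono2 : MonotoneOn (fun t => ρ t - σf t) (Ici 0) := by
    apply monotoneOn_of_hasDerivWithinAt_nonneg (convex_Ici 0)
      (f' := fun t => ρ' t - g t)
    · exact hcontρ.sub hcontσ.continuousOn
    · intro t ht
      rw [hintr] at ht ⊢
      exact ((hd1 t (mem_Ici.2 (le_of_lt ht))).mono (Ioi_subset_Ici_self)).sub ((hdσ t).hasDerivWithinAt)
    · intro t ht
      rw [hintr] at ht
      have := hρ'ge t (le_of_lt ht)
      linarith
  have hσ0 : σf 0 = s := by
    simp only [hσ_def, hc_def]
    norm_num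
  have main : ∀ t : ℝ, 0 ≤ t → σf t ≤ ρ t := by
    intro t ht
    have := hmono2 (self_mem_Ici) (mem_Ici.2 ht) ht
    simp only [h0, hσ0, sub_self] at this
    linarith
  constructor
  · exact fun t ht => main t ht
  · -- linear lower bound for σf
    have hlow : ∀ t : ℝ, 0 ≤ t → s + a⁻¹ * (Real.log ((1 + v) / 2)) + t ≤ ρ t := by
      intro t ht
      have hb : (1 + v) * Real.exp (a * t) / 2 ≤ c t := by
        have := (Real.exp_pos (-(a * t))).le
        simp only [hc_def]
        nlinarith
      have hbpos : 0 < (1 + v) * Real.exp (a * t) / 2 := by positivity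
      have hlog : Real.log ((1 + v) * Real.exp (a * t) / 2) ≤ Real.log (c t) :=
        Real.log_le_log hbpos hb
      have heq : Real.log ((1 + v) * Real.exp (a * t) / 2)
          = Real.log ((1 + v) / 2) + a * t := by
        rw [show (1 + v) * Real.exp (a * t) / 2 = (1 + v) / 2 * Real.exp (a * t) by ring,
          Real.log_mul (by positivity) (Real.exp_ne_zero _), Real.log_exp]
      have : s + a⁻¹ * (Real.log ((1 + v) / 2) + a * t) ≤ σf t := by
        simp only [hσ_def]
        have := mul_le_mul_of_nonneg_left hlog (le_of_lt (inv_pos.2 ha))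
        rw [heq] at this
        linarith
      have haa : a⁻¹ * (a * t) = t := by field_simp
      calc s + a⁻¹ * Real.log ((1 + v) / 2) + t
          = s + a⁻¹ * (Real.log ((1 + v) / 2) + a * t) := by rw [mul_add, haa]; ring
        _ ≤ σf t := this
        _ ≤ ρ t := main t ht
    exact tendsto_atTop_mono' atTop
      (by filter_upwards [eventually_ge_atTop (0:ℝ)] with t ht using hlow t ht)
      (tendsto_atTop_add_const_left _ _ tendsto_id)
end

section
/- Let r ≥ 0 and ε ≥ 0 with r + ε < π/2, and let K : [0,∞) → ℝ be a measurable function with K(ρ) = 1 for 0 ≤ ρ ≤ r, −1 ≤ K(ρ) ≤ 1 for all ρ ≥ 0, and K(ρ) = −1 for ρ ≥ r + ε. Let A : [0,∞) → ℝ be a weak solution of A'' + K·A = 0 with A(0) = 0 and A'(0) = 1. Then A(ρ) > 0 and A'(ρ) > 0 for all ρ > 0. -/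
open Real Set MeasureTheory intervalIntegral

lemma sin_lip (s t : ℝ) : |Real.sin s - Real.sin t| ≤ |s - t| := by
  have h := integral_cos (a := t) (b := s)
  calc |Real.sin s - Real.sin t| = ‖∫ x in t..s, Real.cos x‖ := by rw [h]; rfl
    _ ≤ 1 * |s - t| := by
        apply intervalIntegral.norm_integral_le_of_norm_le_const
        intro x _; simpa using Real.abs_cos_le_one x
    _ = |s - t| := one_mul _

lemma R_hasDerivAt (f : ℝ → ℝ) (T C : ℝ)
    (hInt : IntegrableOn f (Icc 0 T))
    (hC : ∀ u ∈ Icc (0:ℝ) T, |f u| ≤ C)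
    {t : ℝ} (ht : t ∈ Ioo (0:ℝ) T) :
    HasDerivAt (fun s => Real.sin s * (∫ u in (0:ℝ)..s, f u) - ∫ u in (0:ℝ)..s, f u * Real.sin u)
      (Real.cos t * ∫ u in (0:ℝ)..t, f u) t := by
  set F : ℝ → ℝ := fun s => ∫ u in (0:ℝ)..s, f u with hF
  set G : ℝ → ℝ := fun s => ∫ u in (0:ℝ)..s, f u * Real.sin u with hG
  have hTpos : (0:ℝ) < T := ht.1.trans ht.2
  have hC0 : 0 ≤ C := le_trans (abs_nonneg _) (hC 0 ⟨le_refl 0, hTpos.le⟩)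
  have hii : ∀ a b : ℝ, a ∈ Icc (0:ℝ) T → b ∈ Icc (0:ℝ) T →
      IntervalIntegrable f volume a b := by
    intro a b ha hb
    exact (hInt.mono_set (uIcc_subset_Icc ha hb)).intervalIntegrable
  -- continuity of F at t
  have hFc : ContinuousAt F t := by
    have h1 : ContinuousOn F (uIcc 0 T) := by
      apply intervalIntegral.continuousOn_primitive_interval
      rwa [uIcc_of_le hTpos.le]
    have h2 : uIcc (0:ℝ) T ∈ nhds t := by
      rw [uIcc_of_le hTpos.le]
      exact Icc_mem_nhds ht.1 ht.2
    exact h1.continuousAt h2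
  have hmem : ∀ s ∈ Ioo (0:ℝ) T, s ∈ Icc (0:ℝ) T := fun s hs => ⟨hs.1.le, hs.2.le⟩
  -- decomposition near t
  have hev : ∀ᶠ s in nhds t,
      Real.sin s * F s - G s
      = ((Real.sin t * F t - G t) + (Real.sin s - Real.sin t) * F t)
        + (Real.sin s - Real.sin t) * (F s - F t)
        + ∫ v in t..s, f v * (Real.sin t - Real.sin v) := by
    filter_upwards [Ioo_mem_nhds ht.1 ht.2] with s hs
    have hfs : IntervalIntegrable f volume t s := hii t s (hmem t ht) (hmem s hs)
    have hfsin : IntervalIntegrable (fun v => f v * Real.sin v) volume t s :=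
      hfs.mul_continuousOn Real.continuous_sin.continuousOn
    have hFs : F s - F t = ∫ v in t..s, f v := by
      rw [hF]
      exact (integral_interval_sub_left (hii 0 s ⟨le_refl 0, hTpos.le⟩ (hmem s hs))
        (hii 0 t ⟨le_refl 0, hTpos.le⟩ (hmem t ht)))
    have hGs : G s - G t = ∫ v in t..s, f v * Real.sin v := by
      rw [hG]
      exact (integral_interval_sub_left
        ((hInt.mono_set (uIcc_subset_Icc ⟨le_refl 0, hTpos.le⟩ (hmem s hs))).intervalIntegrable.mul_continuousOn
          Real.continuous_sin.continuousOn)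
        ((hInt.mono_set (uIcc_subset_Icc ⟨le_refl 0, hTpos.le⟩ (hmem t ht))).intervalIntegrable.mul_continuousOn
          Real.continuous_sin.continuousOn))
    have hsplit : (∫ v in t..s, f v * (Real.sin t - Real.sin v))
        = Real.sin t * (F s - F t) - (G s - G t) := by
      have : (∫ v in t..s, f v * (Real.sin t - Real.sin v))
          = (∫ v in t..s, f v * Real.sin t) - ∫ v in t..s, f v * Real.sin v := by
        rw [← integral_sub (hfs.mul_const _) hfsin]
        congr 1; ext v; ring
      rw [this, intervalIntegral.integral_mul_const, hFs, hGs]; ring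
    rw [hsplit]; ring
  have h1 : HasDerivAt (fun s => (Real.sin t * F t - G t) + (Real.sin s - Real.sin t) * F t)
      (Real.cos t * F t) t := by
    have := (((Real.hasDerivAt_sin t).sub_const (Real.sin t)).mul_const (F t)).const_add
      (Real.sin t * F t - G t)
    simpa using this
  have h2 : HasDerivAt (fun s => (Real.sin s - Real.sin t) * (F s - F t)) 0 t := by
    rw [hasDerivAt_iff_isLittleO]
    simp only [sub_self, zero_mul, mul_zero, sub_zero, smul_zero]
    rw [Asymptotics.isLittleO_iff]
    intro c hc
    have hev2 : ∀ᶠ s in nhds t, |F s - F t| ≤ c := by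
      have h0 : ∀ᶠ y in nhds (F t), |y - F t| ≤ c := by
        filter_upwards [Metric.ball_mem_nhds (F t) hc] with y hy
        rw [Metric.mem_ball, Real.dist_eq] at hy
        exact hy.le
      exact hFc.eventually h0
    filter_upwards [hev2] with s hs
    calc ‖(Real.sin s - Real.sin t) * (F s - F t)‖
        = |Real.sin s - Real.sin t| * |F s - F t| := by
          simp [Real.norm_eq_abs, abs_mul]
      _ ≤ |s - t| * c := mul_le_mul (sin_lip s t) hs (abs_nonneg _) (abs_nonneg _)
      _ = c * ‖s - t‖ := by rw [Real.norm_eq_abs, mul_comm]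
  have h3 : HasDerivAt (fun s => ∫ v in t..s, f v * (Real.sin t - Real.sin v)) 0 t := by
    rw [hasDerivAt_iff_isLittleO]
    simp only [intervalIntegral.integral_same, sub_zero, smul_zero]
    rw [Asymptotics.isLittleO_iff]
    intro c hc
    have hcd : (0:ℝ) < c / (C + 1) := by positivity
    filter_upwards [Ioo_mem_nhds ht.1 ht.2, Metric.closedBall_mem_nhds t hcd] with s hs hdist
    rw [Metric.mem_closedBall, Real.dist_eq] at hdist
    have hbb : ∀ v ∈ Set.uIoc t s, ‖f v * (Real.sin t - Real.sin v)‖ ≤ C * |s - t| := by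
      intro v hv
      have hvu : v ∈ uIcc t s := Ioc_subset_Icc_self hv
      have hvI : v ∈ Icc (0:ℝ) T := uIcc_subset_Icc (hmem t ht) (hmem s hs) hvu
      have hvt : |v - t| ≤ |s - t| := by
        rw [uIcc, mem_Icc] at hvu
        rw [abs_le]
        have h5 : |s - t| = max t s - min t s := by
          rw [max_sub_min_eq_abs, abs_sub_comm]
        constructor <;> [skip; skip] <;>
          · have := min_le_left t s
            have := le_max_left t s
            linarith [hvu.1, hvu.2, h5.ge, h5.le]
      calc ‖f v * (Real.sin t - Real.sin v)‖ = |f v| * |Real.sin t - Real.sin v| := by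
            simp [Real.norm_eq_abs, abs_mul]
        _ ≤ C * |s - t| := by
            apply mul_le_mul (hC v hvI) _ (abs_nonneg _) hC0
            calc |Real.sin t - Real.sin v| ≤ |t - v| := sin_lip t v
              _ = |v - t| := abs_sub_comm t v
              _ ≤ |s - t| := hvt
    have hnorm := intervalIntegral.norm_integral_le_of_norm_le_const hbb
    have h6 : (C + 1) * |s - t| ≤ c := by
      calc (C + 1) * |s - t| ≤ (C + 1) * (c / (C + 1)) := by
              apply mul_le_mul_of_nonneg_left hdist (by linarith)
        _ = c := by field_simp
    rw [Real.norm_eq_abs (s - t)]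
    nlinarith [abs_nonneg (s - t)]
  have hsum := (h1.add h2).add h3
  simp only [add_zero] at hsum
  exact hsum.congr_of_eventuallyEq hev

lemma parts (f : ℝ → ℝ) {T : ℝ} (C : ℝ) (hT : 0 ≤ T)
    (hInt : IntegrableOn f (Icc 0 T))
    (hC : ∀ u ∈ Icc (0:ℝ) T, |f u| ≤ C) :
    Real.sin T * (∫ u in (0:ℝ)..T, f u) - ∫ u in (0:ℝ)..T, f u * Real.sin u
      = ∫ u in (0:ℝ)..T, Real.cos u * ∫ v in (0:ℝ)..u, f v := by
  set F : ℝ → ℝ := fun s => ∫ u in (0:ℝ)..s, f u with hF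
  have hIntu : IntegrableOn f (uIcc 0 T) := by rwa [uIcc_of_le hT]
  have hFcont : ContinuousOn F (Icc 0 T) := by
    have := intervalIntegral.continuousOn_primitive_interval (a := 0) (b := T) (f := f)
      (μ := volume) hIntu
    rwa [uIcc_of_le hT] at this
  have hGint : IntegrableOn (fun v => f v * Real.sin v) (uIcc 0 T) := by
    rw [uIcc_of_le hT]
    rw [← intervalIntegrable_iff_integrableOn_Icc_of_le hT]
    exact hIntu.intervalIntegrable.mul_continuousOn Real.continuous_sin.continuousOn
  have hGcont : ContinuousOn (fun s => ∫ u in (0:ℝ)..s, f u * Real.sin u) (Icc 0 T) := by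
    have := intervalIntegral.continuousOn_primitive_interval (a := 0) (b := T) (μ := volume) hGint
    rwa [uIcc_of_le hT] at this
  have hcont : ContinuousOn
      (fun s => Real.sin s * F s - ∫ u in (0:ℝ)..s, f u * Real.sin u) (Icc 0 T) :=
    (Real.continuous_sin.continuousOn.mul hFcont).sub hGcont
  have hderiv : ∀ x ∈ Ioo (0:ℝ) T, HasDerivWithinAt
      (fun s => Real.sin s * F s - ∫ u in (0:ℝ)..s, f u * Real.sin u)
      (Real.cos x * F x) (Ioi x) x :=
    fun x hx => (R_hasDerivAt f T C hInt hC hx).hasDerivWithinAt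
  have hint : IntervalIntegrable (fun u => Real.cos u * F u) volume 0 T := by
    apply ContinuousOn.intervalIntegrable
    rw [uIcc_of_le hT]
    exact Real.continuous_cos.continuousOn.mul hFcont
  have h := intervalIntegral.integral_eq_sub_of_hasDeriv_right_of_le hT hcont hderiv hint
  simp only [intervalIntegral.integral_same, hF] at h
  rw [h]; simp

theorem stmt15 (r ε : ℝ) (hr : 0 ≤ r) (hε : 0 ≤ ε) (hrε : r + ε < π / 2)
    (K A A' : ℝ → ℝ) (hKm : Measurable K)
    (hK1 : ∀ ρ : ℝ, 0 ≤ ρ → ρ ≤ r → K ρ = 1)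
    (hKb : ∀ ρ : ℝ, 0 ≤ ρ → -1 ≤ K ρ ∧ K ρ ≤ 1)
    (hK2 : ∀ ρ : ℝ, r + ε ≤ ρ → K ρ = -1)
    -- A is a weak solution of A'' + K·A = 0 on [0,∞), with derivative A'
    (hA'c : ContinuousOn A' (Ici 0))
    (hAd : ∀ ρ ∈ Ici (0:ℝ), HasDerivWithinAt A (A' ρ) (Ici 0) ρ)
    (hAeq : ∀ ρ ∈ Ici (0:ℝ), A' ρ = A' 0 - ∫ u in (0:ℝ)..ρ, K u * A u)
    (hA0 : A 0 = 0) (hA'0 : A' 0 = 1) :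
    ∀ ρ : ℝ, 0 < ρ → 0 < A ρ ∧ 0 < A' ρ := by
  have hAc : ContinuousOn A (Ici 0) := fun x hx => (hAd x hx).continuousWithinAt
  set f : ℝ → ℝ := fun u => K u * A u with hf
  have hfint : ∀ T : ℝ, 0 ≤ T →
      ∃ C : ℝ, (∀ u ∈ Icc (0:ℝ) T, |f u| ≤ C) ∧ IntegrableOn f (Icc 0 T) := by
    intro T hT
    obtain ⟨C, hC⟩ := IsCompact.exists_bound_of_continuousOn isCompact_Icc
      (hAc.mono (fun x (hx : x ∈ Icc (0:ℝ) T) => hx.1))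
    have hCb : ∀ u ∈ Icc (0:ℝ) T, |f u| ≤ C := by
      intro u hu
      have h1 := hKb u hu.1
      have h2 := hC u hu
      rw [Real.norm_eq_abs] at h2
      have h3 : |K u| ≤ 1 := abs_le.2 ⟨h1.1, h1.2⟩
      calc |f u| = |K u| * |A u| := abs_mul _ _
        _ ≤ 1 * C := mul_le_mul h3 h2 (abs_nonneg _) zero_le_one
        _ = C := one_mul C
    refine ⟨C, hCb, ?_⟩
    have hmeas : AEStronglyMeasurable f (volume.restrict (Icc (0:ℝ) T)) := by
      apply AEMeasurable.aestronglyMeasurable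
      exact (hKm.aemeasurable).mul
        ((hAc.mono (fun x (hx : x ∈ Icc (0:ℝ) T) => hx.1)).aemeasurable measurableSet_Icc)
    apply Integrable.mono' (show IntegrableOn (fun _ => C) (Icc (0:ℝ) T) volume from integrableOn_const measure_Icc_lt_top.ne) hmeas
    apply (ae_restrict_iff' measurableSet_Icc).2
    exact ae_of_all _ fun x hx => by simpa [Real.norm_eq_abs] using hCb x hx
  have hFA : ∀ s, 0 ≤ s → A' s = 1 - ∫ u in (0:ℝ)..s, f u := by
    intro s hs
    have := hAeq s hs
    rwa [hA'0] at this
  suffices hA'pos : ∀ t, 0 ≤ t → 0 < A' t by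
    intro ρ hρ
    refine ⟨?_, hA'pos ρ hρ.le⟩
    have hmono : StrictMonoOn A (Ici 0) := by
      apply strictMonoOn_of_deriv_pos (convex_Ici 0) hAc
      intro x hx
      rw [interior_Ici] at hx
      have hx0 : (0:ℝ) < x := hx
      have hd : HasDerivAt A (A' x) x := (hAd x hx0.le).hasDerivAt (Ici_mem_nhds hx0)
      rw [hd.deriv]
      exact hA'pos x hx0.le
    have := hmono self_mem_Ici (mem_Ici.2 hρ.le) hρ
    rwa [hA0] at this
  by_contra hcon
  push_neg at hcon
  obtain ⟨t₀, ht₀0, ht₀⟩ := hcon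
  set Z : Set ℝ := {t | 0 < t ∧ A' t ≤ 0} with hZ
  have hZne : Z.Nonempty := by
    refine ⟨t₀, ?_, ht₀⟩
    rcases eq_or_lt_of_le ht₀0 with h | h
    · exfalso; rw [← h, hA'0] at ht₀; linarith
    · exact h
  have hZbb : BddBelow Z := ⟨0, fun z hz => hz.1.le⟩
  set T := sInf Z with hTdef
  have hT0 : 0 ≤ T := le_csInf hZne fun z hz => hz.1.le
  have hpos : ∀ t, 0 ≤ t → t < T → 0 < A' t := by
    intro t h1 h2
    by_contra h
    push_neg at h
    rcases eq_or_lt_of_le h1 with h3 | h3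
    · rw [← h3, hA'0] at h; linarith
    · exact absurd (csInf_le hZbb ⟨h3, h⟩) (not_le.2 h2)
  have hA'T : A' T ≤ 0 := by
    have hTc : T ∈ closure Z := csInf_mem_closure hZne hZbb
    have hcw : ContinuousWithinAt A' Z T := (hA'c T hT0).mono (fun z hz => hz.1.le)
    have hne : (nhdsWithin T Z).NeBot := mem_closure_iff_nhdsWithin_neBot.1 hTc
    exact le_of_tendsto hcw (eventually_nhdsWithin_of_forall fun z hz => hz.2)
  have hTpos : 0 < T := by
    have h1 : {x | 0 < A' x} ∈ nhdsWithin (0:ℝ) (Ici 0) := by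
      have hct : ContinuousWithinAt A' (Ici 0) 0 := hA'c 0 self_mem_Ici
      have h2 : ∀ᶠ y in nhds (A' 0), 0 < y := by rw [hA'0]; exact eventually_gt_nhds zero_lt_one
      exact hct.eventually h2
    rw [Metric.mem_nhdsWithin_iff] at h1
    obtain ⟨δ, hδ, h2⟩ := h1
    apply lt_of_lt_of_le hδ
    apply le_csInf hZne
    intro z hz
    by_contra h3
    push_neg at h3
    have hzb : z ∈ Metric.ball (0:ℝ) δ ∩ Ici 0 := by
      constructor
      · rw [Metric.mem_ball, Real.dist_eq, sub_zero, abs_of_pos hz.1]; exact h3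
      · exact hz.1.le
    exact absurd (h2 hzb) (not_lt.2 hz.2)
  have hmonoT : StrictMonoOn A (Icc 0 T) := by
    apply strictMonoOn_of_deriv_pos (convex_Icc 0 T)
      (hAc.mono (fun x (hx : x ∈ Icc (0:ℝ) T) => hx.1))
    intro x hx
    rw [interior_Icc] at hx
    have hd : HasDerivAt A (A' x) x := (hAd x hx.1.le).hasDerivAt (Ici_mem_nhds hx.1)
    rw [hd.deriv]
    exact hpos x hx.1.le hx.2
  have hAnn : ∀ t ∈ Icc (0:ℝ) T, 0 ≤ A t := by
    intro t ht
    rcases eq_or_lt_of_le ht.1 with h | h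
    · rw [← h, hA0]
    · have := hmonoT (left_mem_Icc.2 hT0) ht h
      rw [hA0] at this
      exact this.le
  have hAT : 0 < A T := by
    have := hmonoT (left_mem_Icc.2 hT0) (right_mem_Icc.2 hT0) hTpos
    rwa [hA0] at this
  obtain ⟨C, hC, hIntf⟩ := hfint T hT0
  have hIntfu : IntegrableOn f (uIcc 0 T) := by rwa [uIcc_of_le hT0]
  by_cases hcase : T ≤ r + ε
  · -- use the comparison functional
    have hTlt : T < π / 2 := lt_of_le_of_lt hcase hrε
    have hparts := parts f C hT0 hIntf hC
    have hA'cosInt : IntervalIntegrable (fun u => A' u * Real.cos u) volume 0 T := by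
      apply ContinuousOn.intervalIntegrable
      rw [uIcc_of_le hT0]
      exact (hA'c.mono (fun x (hx : x ∈ Icc (0:ℝ) T) => hx.1)).mul
        Real.continuous_cos.continuousOn
    have hstep : (∫ u in (0:ℝ)..T, Real.cos u * ∫ v in (0:ℝ)..u, f v)
        = Real.sin T - ∫ u in (0:ℝ)..T, A' u * Real.cos u := by
      have e1 : (∫ u in (0:ℝ)..T, Real.cos u * ∫ v in (0:ℝ)..u, f v)
          = ∫ u in (0:ℝ)..T, (Real.cos u - A' u * Real.cos u) := by
        apply intervalIntegral.integral_congr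
        intro u hu
        rw [uIcc_of_le hT0] at hu
        have h4 := hFA u hu.1
        have h5 : (∫ v in (0:ℝ)..u, f v) = 1 - A' u := by linarith
        show Real.cos u * (∫ v in (0:ℝ)..u, f v) = Real.cos u - A' u * Real.cos u
        rw [h5]; ring
      rw [e1, intervalIntegral.integral_sub (intervalIntegrable_cos) hA'cosInt,
        integral_cos]
      simp
    have hAsinInt : IntervalIntegrable (fun u => A u * Real.sin u) volume 0 T := by
      apply ContinuousOn.intervalIntegrable
      rw [uIcc_of_le hT0]
      exact (hAc.mono (fun x (hx : x ∈ Icc (0:ℝ) T) => hx.1)).mul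
        Real.continuous_sin.continuousOn
    have hfsinInt : IntervalIntegrable (fun u => f u * Real.sin u) volume 0 T :=
      hIntfu.intervalIntegrable.mul_continuousOn Real.continuous_sin.continuousOn
    have hAcosFTC : A T * Real.cos T
        = ∫ u in (0:ℝ)..T, (A' u * Real.cos u - A u * Real.sin u) := by
      have hcont2 : ContinuousOn (fun u => A u * Real.cos u) (Icc 0 T) :=
        (hAc.mono (fun x (hx : x ∈ Icc (0:ℝ) T) => hx.1)).mul
          Real.continuous_cos.continuousOn
      have hder2 : ∀ x ∈ Ioo (0:ℝ) T, HasDerivWithinAt (fun u => A u * Real.cos u)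
          (A' x * Real.cos x - A x * Real.sin x) (Ioi x) x := by
        intro x hx
        have hdA : HasDerivAt A (A' x) x := (hAd x hx.1.le).hasDerivAt (Ici_mem_nhds hx.1)
        have h6 := hdA.mul (Real.hasDerivAt_cos x)
        have h7 : A' x * Real.cos x + A x * -Real.sin x
            = A' x * Real.cos x - A x * Real.sin x := by ring
        rw [h7] at h6
        exact h6.hasDerivWithinAt
      have hint2 : IntervalIntegrable
          (fun u => A' u * Real.cos u - A u * Real.sin u) volume 0 T :=
        hA'cosInt.sub hAsinInt
      have h := intervalIntegral.integral_eq_sub_of_hasDeriv_right_of_le hT0 hcont2 hder2 hint2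
      rw [h, hA0]
      ring
    have hkey : A' T * Real.sin T - A T * Real.cos T
        = ∫ u in (0:ℝ)..T, (A u * Real.sin u - f u * Real.sin u) := by
      have e2 := intervalIntegral.integral_sub hAsinInt hfsinInt
      have e3 := intervalIntegral.integral_sub hA'cosInt hAsinInt
      have hA'T2 : A' T = 1 - ∫ v in (0:ℝ)..T, f v := hFA T hT0
      have hcomb : Real.sin T * (∫ v in (0:ℝ)..T, f v)
          - (∫ u in (0:ℝ)..T, f u * Real.sin u)
          = Real.sin T - ∫ u in (0:ℝ)..T, A' u * Real.cos u := hparts.trans hstep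
      rw [hA'T2, hAcosFTC, e2, e3]
      have hmc : (1 - ∫ v in (0:ℝ)..T, f v) * Real.sin T
          = Real.sin T - Real.sin T * ∫ v in (0:ℝ)..T, f v := by ring
      rw [hmc]
      linarith
    have hnn : 0 ≤ ∫ u in (0:ℝ)..T, (A u * Real.sin u - f u * Real.sin u) := by
      apply intervalIntegral.integral_nonneg hT0
      intro u hu
      have hsinu : 0 ≤ Real.sin u :=
        Real.sin_nonneg_of_nonneg_of_le_pi hu.1 (by nlinarith [Real.pi_pos, hu.2, hTlt])
      have hKle := (hKb u hu.1).2
      have hAu := hAnn u hu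
      have h8 : A u * Real.sin u - f u * Real.sin u
          = (1 - K u) * (A u * Real.sin u) := by simp only [hf]; ring
      rw [h8]
      exact mul_nonneg (by linarith) (mul_nonneg hAu hsinu)
    rw [← hkey] at hnn
    have hsinT : 0 < Real.sin T :=
      Real.sin_pos_of_pos_of_lt_pi hTpos (by nlinarith [Real.pi_pos])
    have hcosT : 0 < Real.cos T := Real.cos_pos_of_mem_Ioo ⟨by linarith, hTlt⟩
    nlinarith [mul_pos hAT hcosT, mul_nonneg (neg_nonneg.2 hA'T) hsinT.le]
  · push_neg at hcase
    set s := r + ε with hsdef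
    have hs0 : 0 ≤ s := by positivity
    have hA's : 0 < A' s := hpos s hs0 hcase
    have hiiT : IntervalIntegrable f volume 0 T := hIntfu.intervalIntegrable
    have hiis : IntervalIntegrable f volume 0 s :=
      (hIntf.mono_set (uIcc_subset_Icc ⟨le_refl 0, hT0⟩ ⟨hs0, hcase.le⟩)).intervalIntegrable
    have hsub : (∫ u in (0:ℝ)..T, f u) - ∫ u in (0:ℝ)..s, f u = ∫ u in s..T, f u :=
      intervalIntegral.integral_interval_sub_left hiiT hiis
    have hcongr : (∫ u in s..T, f u) = ∫ u in s..T, -A u := by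
      apply intervalIntegral.integral_congr
      intro u hu
      rw [uIcc_of_le hcase.le] at hu
      simp only [hf]
      rw [hK2 u hu.1]
      ring
    have hAnonneg2 : 0 ≤ ∫ u in s..T, A u := by
      apply intervalIntegral.integral_nonneg hcase.le
      intro u hu
      exact hAnn u ⟨le_trans hs0 hu.1, hu.2⟩
    have h1 := hFA T hT0
    have h2 := hFA s hs0
    rw [intervalIntegral.integral_neg] at hcongr
    linarith
end
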